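/- arXiv:1903.07483 — 10 statements merged into one kernel-verified Lean document; each statement's English description precedes it below -/
import Mathlib

section
/- First existence theorem for invariant graphs (graph-condition branch). Let H ∼ (F,G) be a bundle correspondence over u : M → M whose fibers X_m, Y_m are complete metric spaces, let ε, ε₁, η : M → [0,∞) with ε(m) ≤ ε₁(m) for all m, and let i = (i_X,i_Y) be an ε-pseudo-stable section of H with data η. Assume H satisfies the (A)(α;α′,λ_u)(B)(β;β′,λ_s) condition with functions α, α′, λ_u, β, β′, λ_s : M → [0,∞) such that: (angle condition) sup_{m∈M} α′(m)·β′(u(m)) < 1, α′(m) ≤ α(u(m)) and β′(u(m)) ≤ β(m) for all m, and sup_{m∈M} max{α(m), β(m)} < ∞; (spectral condition) sup_{m∈M} λ_s(m)·λ_u(m) < 1 and sup_{m∈M} λ_u(m)·ε₁(m) < 1. Then there exist a family of maps f_m : X_m → Y_m (m ∈ M), a family of maps x_m : X_m → X_{u(m)} (m ∈ M), and constants K, K₀ ≥ 0 such that for all m ∈ M: (1) Lip f_m ≤ β′(m) and d(f_m(i_X(m)), i_Y(m)) ≤ K·η(m); (2) Lip x_m ≤ λ_s(m), d(x_m(i_X(m)),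 i_X(u(m))) ≤ K₀·η(u(m)), and for every x ∈ X_m, F_m(x, f_{u(m)}(x_m(x))) = x_m(x) and G_m(x, f_{u(m)}(x_m(x))) = f_m(x). Moreover the family (f_m) is unique: any other family (f′_m) admitting constants K′, K₀′ ≥ 0 and maps (x′_m) with properties (1) and (2) satisfies f′_m = f_m for all m ∈ M. -/
/-!
The invariant graph is the pointwise limit of `Γⁿ iY`, where the graph transform `Γ` sends a
family `g` to `x ↦ G m x (g z)` with `z = F m x (g z)`; this fixed point exists because, by the
angle condition, `z ↦ F m x (g z)` is a contraction, and (B) makes `Γ g` again `β'`-Lipschitz.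

Two sequences of graphs carried into each other by `H`, whose orbits start in the `α`-cone, stay
in the cones, so by (A) their vertical distance over `m` is at most the product of `λ_u` along
`n` steps times their distance at time `n`. Comparing `Γⁿ⁺¹ iY` with `Γⁿ iY` this gives the
Cauchy estimates, comparing two invariant graphs it gives uniqueness. In both cases the distance
at time `n` is controlled by the drift of the orbit of `iX` away from the section, which, weighted
with the product of `λ_u`, decays like `θⁿ` by the spectral conditions. For `Γⁿ iY` the drift and
the defect `d(Γⁿ iY (iX), iY)` bound each other recursively; a discrete Grönwall estimate closes
the recursion.
-/

open Filter Topology Finset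

namespace InvariantGraph

theorem le_div_one_sub_of_le_mul_add {t a b c s : ℝ} (ht : 0 ≤ t) (hab : a * b ≤ c) (hc : c < 1)
    (h : t ≤ a * b * t + s) : t ≤ s / (1 - c) := by
  rw [le_div_iff₀ (by linarith)]
  nlinarith

theorem sum_mul_prod_one_add (a : ℕ → ℝ) (j : ℕ) :
    ∑ k ∈ range j, a k * ∏ i ∈ range k, (1 + a i) = ∏ i ∈ range j, (1 + a i) - 1 := by
  induction j with
  | zero => simp
  | succ j ih => rw [sum_range_succ, ih, prod_range_succ]; ring

theorem prod_one_add_mul_pow_le_exp {θ ρ : ℝ} (hθ0 : 0 ≤ θ) (hθ1 : θ < 1) (hρ : 0 ≤ ρ)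
    (j : ℕ) : ∏ k ∈ range j, (1 + ρ * k * θ ^ k) ≤ Real.exp (ρ * ∑' k : ℕ, (k : ℝ) * θ ^ k) := by
  have hsumm : Summable fun k : ℕ => (k : ℝ) * θ ^ k := by
    simpa using summable_pow_mul_geometric_of_norm_lt_one 1
      (by rwa [Real.norm_eq_abs, abs_of_nonneg hθ0] : ‖θ‖ < 1)
  refine (Real.prod_one_add_le_exp_sum _ fun k => by positivity).trans (Real.exp_le_exp.2 ?_)
  simp_rw [mul_assoc, ← mul_sum]
  exact mul_le_mul_of_nonneg_left (hsumm.sum_le_tsum _ fun k _ => by positivity) hρ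

theorem exists_gronwall_sequence {θ p q r : ℝ} (hθ0 : 0 ≤ θ) (hθ1 : θ < 1) (hp : 0 ≤ p)
    (hq : 0 ≤ q) (hr : 0 ≤ r) :
    ∃ A : ℕ → ℝ, A 0 = 0 ∧ Monotone A ∧
      (∀ j, p + q * ∑ k ∈ range j, θ ^ k * (r * A k + 1) ≤ A (j + 1) - A j) ∧
      ∃ B, ∀ j, ∑ k ∈ range j, θ ^ k * A k ≤ B := by
  have hθ : 0 < 1 - θ := by linarith
  set ρ := p + q * r + q / (1 - θ)
  have hρ : 0 ≤ ρ := by positivity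
  set P : ℕ → ℝ := fun j => ∏ k ∈ range j, (1 + ρ * k * θ ^ k)
  have hP1 (j : ℕ) : 1 ≤ P j :=
    one_le_prod fun k _ => by simp only [le_add_iff_nonneg_right]; positivity
  have hPmono : Monotone P := monotone_nat_of_le_succ fun j => by
    simp only [P, prod_range_succ]; nlinarith [hP1 j, show 0 ≤ ρ * j * θ ^ j by positivity]
  have hsum (j : ℕ) : ∑ k ∈ range j, θ ^ k * (ρ * k * P k) = P j - 1 := by
    rw [← sum_mul_prod_one_add]; exact sum_congr rfl fun k _ => by ring
  have hρP (j : ℕ) : ρ * ↑(j + 1) * P j ≤ ρ * ↑(j + 1) * P (j + 1) :=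
    mul_le_mul_of_nonneg_left (hPmono j.le_succ) (by positivity)
  -- With `A j = ρ j P j` the weighted sums telescope: `∑_{k<j} θ^k A k = P j - 1`.
  refine ⟨fun j => ρ * j * P j, by simp, monotone_nat_of_le_succ fun j => ?_, fun j => ?_, ?_⟩
  · have := hP1 j
    push_cast at hρP ⊢
    nlinarith [hρP j]
  · have hgeom : q * ∑ k ∈ range j, θ ^ k ≤ q / (1 - θ) := by
      rw [div_eq_mul_one_div]
      exact mul_le_mul_of_nonneg_left
        (by simpa using geom_sum_Ico_le_of_lt_one (m := 0) (n := j) hθ0 hθ1) hq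
    have hexpand : ∑ k ∈ range j, θ ^ k * (r * (ρ * k * P k) + 1) =
        r * (P j - 1) + ∑ k ∈ range j, θ ^ k := by
      rw [← hsum, mul_sum, ← sum_add_distrib]
      exact sum_congr rfl fun k _ => by ring
    have : 0 ≤ (p + q / (1 - θ)) * (P j - 1) := mul_nonneg (by positivity) (by linarith [hP1 j])
    push_cast at hρP ⊢
    rw [hexpand]
    nlinarith [hρP j]
  · exact ⟨Real.exp (ρ * ∑' k : ℕ, (k : ℝ) * θ ^ k) - 1, fun j => by
      rw [hsum]; linarith [prod_one_add_mul_pow_le_exp hθ0 hθ1 hρ j]⟩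

section Orbits

variable {M : Type*} {u : M → M}

def prodAlong (u : M → M) (l : M → ℝ) (n : ℕ) (m : M) : ℝ := ∏ j ∈ range n, l (u^[j] m)

variable {l l' η : M → ℝ} {θ : ℝ}

@[simp] theorem prodAlong_zero (m : M) : prodAlong u l 0 m = 1 := prod_range_zero _

theorem prodAlong_succ (n : ℕ) (m : M) :
    prodAlong u l (n + 1) m = l m * prodAlong u l n (u m) := by
  rw [prodAlong, prod_range_succ', mul_comm]
  rfl

theorem prodAlong_nonneg (hl : ∀ m, 0 ≤ l m) (n : ℕ) (m : M) : 0 ≤ prodAlong u l n m :=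
  prod_nonneg fun _ _ => hl _

theorem prodAlong_mul_prodAlong_le (hl : ∀ m, 0 ≤ l m) (hl' : ∀ m, 0 ≤ l' m)
    (h : ∀ m, l m * l' m ≤ θ) (n : ℕ) (m : M) :
    prodAlong u l n m * prodAlong u l' n m ≤ θ ^ n := by
  rw [prodAlong, prodAlong, ← prod_mul_distrib]
  simpa using prod_le_prod (s := range n) (fun j _ => mul_nonneg (hl _) (hl' _))
    fun j _ => h (u^[j] m)

theorem prodAlong_mul_le (hl : ∀ m, 0 ≤ l m) (hθ : 0 ≤ θ) (h : ∀ m, l m * η (u m) ≤ θ * η m)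
    (n : ℕ) (m : M) : prodAlong u l n m * η (u^[n] m) ≤ θ ^ n * η m := by
  induction n generalizing m with
  | zero => simp
  | succ n ih =>
    calc prodAlong u l (n + 1) m * η (u^[n + 1] m)
        = l m * (prodAlong u l n (u m) * η (u^[n] (u m))) := by
          rw [prodAlong_succ, mul_assoc]; rfl
      _ ≤ l m * (θ ^ n * η (u m)) := mul_le_mul_of_nonneg_left (ih (u m)) (hl m)
      _ = θ ^ n * (l m * η (u m)) := by ring
      _ ≤ θ ^ (n + 1) * η m := by
        rw [pow_succ, mul_assoc]; exact mul_le_mul_of_nonneg_left (h m) (pow_nonneg hθ n)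

variable {X : M → Type*}

/-- The first step, from `m` to `u m`, uses `ψ (n - 1)` and the last one uses `ψ 0`. -/
def orbit (ψ : ℕ → ∀ m, X m → X (u m)) : (n : ℕ) → (m : M) → X m → X (u^[n] m)
  | 0, _, x => x
  | n + 1, m, x => orbit ψ n (u m) (ψ n m x)

theorem dist_orbit_le [∀ m, PseudoMetricSpace (X m)] {ψ : ℕ → ∀ m, X m → X (u m)}
    (hl : ∀ m, 0 ≤ l m) (hψ : ∀ k m a b, dist (ψ k m a) (ψ k m b) ≤ l m * dist a b)
    (n : ℕ) (m : M) (x x' : X m) :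
    dist (orbit ψ n m x) (orbit ψ n m x') ≤ prodAlong u l n m * dist x x' := by
  induction n generalizing m x x' with
  | zero => exact (one_mul _).ge
  | succ n ih =>
    calc dist (orbit ψ n (u m) (ψ n m x)) (orbit ψ n (u m) (ψ n m x'))
        ≤ prodAlong u l n (u m) * (l m * dist x x') :=
          (ih _ _ _).trans (mul_le_mul_of_nonneg_left (hψ n m x x') (prodAlong_nonneg hl _ _))
      _ = prodAlong u l (n + 1) m * dist x x' := by rw [prodAlong_succ]; ring

end Orbits

def IsLipFamily {M : Type*} {X Y : M → Type*} [∀ m, PseudoMetricSpace (X m)]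
    [∀ m, PseudoMetricSpace (Y m)] (l : M → ℝ) (g : ∀ m, X m → Y m) : Prop :=
  ∀ m a b, dist (g m a) (g m b) ≤ l m * dist a b

/-- `coneA` and `coneB` are the (A)(α;α′,λ_u)(B)(β;β′,λ_s) condition; `c`, `C` and `θ` are the
constants of the angle, boundedness and spectral conditions, with `θ` serving both spectral
conditions: `spectral_section` combines `η (u m) ≤ ε m * η m`, `ε ≤ ε₁` and `λ_u ε₁ ≤ θ`. -/
structure Setting {M : Type*} (u : M → M) (X Y : M → Type*) [∀ m, MetricSpace (X m)]
    [∀ m, MetricSpace (Y m)] where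
  F : ∀ m, X m → Y (u m) → X (u m)
  G : ∀ m, X m → Y (u m) → Y m
  (α α' lamu β β' lams η : M → ℝ)
  iX : ∀ m, X m
  iY : ∀ m, Y m
  (c C θ : ℝ)
  coneA : ∀ m (x₁ x₁' : X m) (y₂ y₂' : Y (u m)),
    dist x₁ x₁' ≤ α m * dist (G m x₁ y₂) (G m x₁' y₂') →
      dist (F m x₁ y₂) (F m x₁' y₂') ≤ α' m * dist y₂ y₂' ∧
        dist (G m x₁ y₂) (G m x₁' y₂') ≤ lamu m * dist y₂ y₂'
  coneB : ∀ m (x₁ x₁' : X m) (y₂ y₂' : Y (u m)),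
    dist y₂ y₂' ≤ β m * dist (F m x₁ y₂) (F m x₁' y₂') →
      dist (G m x₁ y₂) (G m x₁' y₂') ≤ β' m * dist x₁ x₁' ∧
        dist (F m x₁ y₂) (F m x₁' y₂') ≤ lams m * dist x₁ x₁'
  α_nonneg : ∀ m, 0 ≤ α m
  α'_nonneg : ∀ m, 0 ≤ α' m
  lamu_nonneg : ∀ m, 0 ≤ lamu m
  β_nonneg : ∀ m, 0 ≤ β m
  β'_nonneg : ∀ m, 0 ≤ β' m
  lams_nonneg : ∀ m, 0 ≤ lams m
  η_nonneg : ∀ m, 0 ≤ η m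
  α'_le_α : ∀ m, α' m ≤ α (u m)
  β'_le_β : ∀ m, β' (u m) ≤ β m
  angle : ∀ m, α' m * β' (u m) ≤ c
  c_nonneg : 0 ≤ c
  c_lt_one : c < 1
  α_le : ∀ m, α m ≤ C
  β_le : ∀ m, β m ≤ C
  C_nonneg : 0 ≤ C
  spectral : ∀ m, lams m * lamu m ≤ θ
  spectral_section : ∀ m, lamu m * η (u m) ≤ θ * η m
  θ_nonneg : 0 ≤ θ
  θ_lt_one : θ < 1
  section_F : ∀ m, dist (iX (u m)) (F m (iX m) (iY (u m))) ≤ η (u m)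
  section_G : ∀ m, dist (iY m) (G m (iX m) (iY (u m))) ≤ η m

namespace Setting

variable {M : Type*} {u : M → M} {X Y : M → Type*} [∀ m, MetricSpace (X m)]
  [∀ m, MetricSpace (Y m)] (S : Setting u X Y)

theorem dist_F_right (m : M) (x : X m) (y y' : Y (u m)) :
    dist (S.F m x y) (S.F m x y') ≤ S.α' m * dist y y' :=
  (S.coneA m x x y y' (by simpa using mul_nonneg (S.α_nonneg m) dist_nonneg)).1

theorem dist_G_left (m : M) (x x' : X m) (y : Y (u m)) :
    dist (S.G m x y) (S.G m x' y) ≤ S.β' m * dist x x' :=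
  (S.coneB m x x' y y (by simpa using mul_nonneg (S.β_nonneg m) dist_nonneg)).1

theorem α'_le_C (m : M) : S.α' m ≤ S.C := (S.α'_le_α m).trans (S.α_le _)

theorem β'_le_C (m : M) : S.β' (u m) ≤ S.C := (S.β'_le_β m).trans (S.β_le m)

theorem prodAlong_lamu_mul_prodAlong_lams_le (n : ℕ) (m : M) :
    prodAlong u S.lamu n m * prodAlong u S.lams n m ≤ S.θ ^ n :=
  prodAlong_mul_prodAlong_le S.lamu_nonneg S.lams_nonneg
    (fun m => (mul_comm _ _).le.trans (S.spectral m)) n m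

theorem prodAlong_lamu_mul_η_le (n : ℕ) (m : M) :
    prodAlong u S.lamu n m * S.η (u^[n] m) ≤ S.θ ^ n * S.η m :=
  prodAlong_mul_le S.lamu_nonneg S.θ_nonneg S.spectral_section n m

/-- `H` carries the point `(x, φ (k + 1) m x)` of the graph of `φ (k + 1)` over `m` to the point
over `ψ k m x` of the graph of `φ k` over `u m`. -/
def IsGraphSeq (φ : ℕ → ∀ m, X m → Y m) (ψ : ℕ → ∀ m, X m → X (u m)) : Prop :=
  ∀ k m x, S.F m x (φ k (u m) (ψ k m x)) = ψ k m x ∧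
    S.G m x (φ k (u m) (ψ k m x)) = φ (k + 1) m x

def orbitDefect (ψ : ℕ → ∀ m, X m → X (u m)) (n : ℕ) (m : M) : ℝ :=
  dist (orbit ψ n m (S.iX m)) (S.iX (u^[n] m))

theorem orbitDefect_zero (ψ : ℕ → ∀ m, X m → X (u m)) (m : M) : S.orbitDefect ψ 0 m = 0 :=
  dist_self (S.iX m)

theorem cone_forward {φ φ' : ℕ → ∀ m, X m → Y m} {ψ ψ' : ℕ → ∀ m, X m → X (u m)}
    (hφ : S.IsGraphSeq φ ψ) (hφ' : S.IsGraphSeq φ' ψ') (n : ℕ) (m : M) (x x' : X m)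
    (hx : dist x x' ≤ S.α m * dist (φ (n + 1) m x) (φ' (n + 1) m x')) :
    dist (orbit ψ (n + 1) m x) (orbit ψ' (n + 1) m x') ≤ S.α' (u^[n] m) *
        dist (φ 0 _ (orbit ψ (n + 1) m x)) (φ' 0 _ (orbit ψ' (n + 1) m x')) ∧
      dist (φ (n + 1) m x) (φ' (n + 1) m x') ≤ prodAlong u S.lamu (n + 1) m *
        dist (φ 0 _ (orbit ψ (n + 1) m x)) (φ' 0 _ (orbit ψ' (n + 1) m x')) := by
  induction n generalizing m x x' with
  | zero =>
    rw [← (hφ 0 m x).2, ← (hφ' 0 m x').2] at hx ⊢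
    have h := S.coneA m x x' _ _ hx
    rw [(hφ 0 m x).1, (hφ' 0 m x').1] at h
    refine ⟨h.1, ?_⟩
    rw [prodAlong_succ, prodAlong_zero, mul_one]
    exact h.2
  | succ n ih =>
    rw [← (hφ (n + 1) m x).2, ← (hφ' (n + 1) m x').2] at hx ⊢
    have h := S.coneA m x x' _ _ hx
    rw [(hφ (n + 1) m x).1, (hφ' (n + 1) m x').1] at h
    obtain ⟨ihx, ihy⟩ := ih (u m) _ _
      (h.1.trans (mul_le_mul_of_nonneg_right (S.α'_le_α m) dist_nonneg))
    refine ⟨ihx, ?_⟩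
    rw [prodAlong_succ, mul_assoc]
    exact h.2.trans (mul_le_mul_of_nonneg_left ihy (S.lamu_nonneg m))

section LipschitzOrbits

variable {ψ : ℕ → ∀ m, X m → X (u m)}
  (hψ : ∀ k m a b, dist (ψ k m a) (ψ k m b) ≤ S.lams m * dist a b)
include hψ

theorem prodAlong_mul_dist_orbit_le (n : ℕ) (m : M) (x : X m) :
    prodAlong u S.lamu n m * dist (orbit ψ n m x) (S.iX (u^[n] m)) ≤
      S.θ ^ n * dist x (S.iX m) + prodAlong u S.lamu n m * S.orbitDefect ψ n m := by
  calc prodAlong u S.lamu n m * dist (orbit ψ n m x) (S.iX (u^[n] m))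
      ≤ prodAlong u S.lamu n m *
          (prodAlong u S.lams n m * dist x (S.iX m) + S.orbitDefect ψ n m) :=
        mul_le_mul_of_nonneg_left ((dist_triangle _ _ _).trans
          (add_le_add (dist_orbit_le S.lams_nonneg hψ _ _ _ _) le_rfl))
          (prodAlong_nonneg S.lamu_nonneg _ _)
    _ ≤ S.θ ^ n * dist x (S.iX m) + prodAlong u S.lamu n m * S.orbitDefect ψ n m := by
      rw [mul_add, ← mul_assoc]
      gcongr
      exact S.prodAlong_lamu_mul_prodAlong_lams_le n m

theorem prodAlong_mul_orbitDefect_le {A : ℕ → ℝ} (hA : Monotone A) (N : ℕ)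
    (hanchor : ∀ j < N, ∀ m,
      dist (ψ j m (S.iX m)) (S.iX (u m)) ≤ (A (j + 1) - A j) * S.η (u m)) (m : M) :
    prodAlong u S.lamu N m * S.orbitDefect ψ N m ≤ S.θ ^ N * (A N - A 0) * S.η m := by
  induction N generalizing m with
  | zero => simp [orbitDefect_zero]
  | succ N ih =>
    set P := prodAlong u S.lamu N (u m)
    set d := dist (ψ N m (S.iX m)) (S.iX (u m))
    have hstep : S.orbitDefect ψ (N + 1) m ≤
        prodAlong u S.lams N (u m) * d + S.orbitDefect ψ N (u m) :=
      (dist_triangle _ (orbit ψ N (u m) (S.iX (u m))) _).trans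
        (add_le_add (dist_orbit_le S.lams_nonneg hψ N (u m) _ _) le_rfl)
    have ihN := ih (fun j hj => hanchor j (hj.trans N.lt_succ_self)) (u m)
    have hdrift : P * prodAlong u S.lams N (u m) * d ≤ S.θ ^ N * ((A (N + 1) - A N) * S.η (u m)) :=
      mul_le_mul (S.prodAlong_lamu_mul_prodAlong_lams_le N (u m)) (hanchor N N.lt_succ_self m)
        dist_nonneg (pow_nonneg S.θ_nonneg N)
    calc prodAlong u S.lamu (N + 1) m * S.orbitDefect ψ (N + 1) m
        ≤ S.lamu m * (P * prodAlong u S.lams N (u m) * d + P * S.orbitDefect ψ N (u m)) := by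
          rw [prodAlong_succ, mul_assoc, mul_assoc, ← mul_add]
          exact mul_le_mul_of_nonneg_left
            (mul_le_mul_of_nonneg_left hstep (prodAlong_nonneg S.lamu_nonneg N (u m)))
            (S.lamu_nonneg m)
      _ ≤ S.lamu m * (S.θ ^ N * ((A (N + 1) - A N) * S.η (u m)) +
            S.θ ^ N * (A N - A 0) * S.η (u m)) :=
          mul_le_mul_of_nonneg_left (add_le_add hdrift ihN) (S.lamu_nonneg m)
      _ = S.θ ^ N * (A (N + 1) - A 0) * (S.lamu m * S.η (u m)) := by ring
      _ ≤ S.θ ^ (N + 1) * (A (N + 1) - A 0) * S.η m := by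
          rw [pow_succ, mul_right_comm _ S.θ, mul_assoc _ S.θ]
          exact mul_le_mul_of_nonneg_left (S.spectral_section m)
            (mul_nonneg (pow_nonneg S.θ_nonneg N) (sub_nonneg.2 (hA (Nat.zero_le _))))

end LipschitzOrbits

theorem contractingWith {g : ∀ m, X m → Y m} (hg : IsLipFamily S.β' g) (m : M) (x : X m) :
    ContractingWith ⟨S.c, S.c_nonneg⟩ fun z => S.F m x (g (u m) z) := by
  refine ⟨S.c_lt_one, LipschitzWith.of_dist_le_mul fun z z' => ?_⟩
  calc dist (S.F m x (g (u m) z)) (S.F m x (g (u m) z'))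
      ≤ S.α' m * (S.β' (u m) * dist z z') :=
        (S.dist_F_right m x _ _).trans (mul_le_mul_of_nonneg_left (hg _ z z') (S.α'_nonneg m))
    _ ≤ S.c * dist z z' := by
      rw [← mul_assoc]; exact mul_le_mul_of_nonneg_right (S.angle m) dist_nonneg

/-- Some fixed point of `z ↦ F m x (g (u m) z)`, a junk value if there is none; by
`graphMap_spec` there is one whenever `g` is `β'`-Lipschitz. -/
noncomputable def graphMap (g : ∀ m, X m → Y m) (m : M) (x : X m) : X (u m) :=
  @Classical.epsilon _ ⟨S.iX (u m)⟩ fun z => S.F m x (g (u m) z) = z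

noncomputable def graphTransform (g : ∀ m, X m → Y m) : ∀ m, X m → Y m :=
  fun m x => S.G m x (g (u m) (S.graphMap g m x))

noncomputable def approx (n : ℕ) : ∀ m, X m → Y m := S.graphTransform^[n] fun m _ => S.iY m

noncomputable def approxMap (k : ℕ) : ∀ m, X m → X (u m) := S.graphMap (S.approx k)

noncomputable def graph (m : M) (x : X m) : Y m :=
  @limUnder _ _ _ ⟨S.iY m⟩ atTop fun n => S.approx n m x

def IsInvariantGraph (f : ∀ m, X m → Y m) (xs : ∀ m, X m → X (u m)) (K K₀ : ℝ) : Prop :=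
  ∀ m, (∀ a b : X m, dist (f m a) (f m b) ≤ S.β' m * dist a b) ∧
    dist (f m (S.iX m)) (S.iY m) ≤ K * S.η m ∧
    (∀ a b : X m, dist (xs m a) (xs m b) ≤ S.lams m * dist a b) ∧
    dist (xs m (S.iX m)) (S.iX (u m)) ≤ K₀ * S.η (u m) ∧
    ∀ x : X m, S.F m x (f (u m) (xs m x)) = xs m x ∧ S.G m x (f (u m) (xs m x)) = f m x

theorem approx_succ (n : ℕ) : S.approx (n + 1) = S.graphTransform (S.approx n) :=
  Function.iterate_succ_apply' _ _ _

theorem coneB_of_isFixedPt {g : ∀ m, X m → Y m} (hg : IsLipFamily S.β' g) {m : M} {x x' : X m}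
    {z z' : X (u m)} (hz : S.F m x (g (u m) z) = z) (hz' : S.F m x' (g (u m) z') = z') :
    dist (S.G m x (g (u m) z)) (S.G m x' (g (u m) z')) ≤ S.β' m * dist x x' ∧
      dist z z' ≤ S.lams m * dist x x' := by
  have h := S.coneB m x x' (g (u m) z) (g (u m) z') (by
    rw [hz, hz']
    exact (hg _ z z').trans (mul_le_mul_of_nonneg_right (S.β'_le_β m) dist_nonneg))
  rwa [hz, hz'] at h

section Complete

variable [∀ m, CompleteSpace (X m)] {g g' : ∀ m, X m → Y m}

theorem graphMap_spec (hg : IsLipFamily S.β' g) (m : M) (x : X m) :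
    S.F m x (g (u m) (S.graphMap g m x)) = S.graphMap g m x := by
  have : Nonempty (X (u m)) := ⟨S.iX (u m)⟩
  exact Classical.epsilon_spec ⟨_, (S.contractingWith hg m x).fixedPoint_isFixedPt⟩

theorem isLipFamily_graphTransform (hg : IsLipFamily S.β' g) :
    IsLipFamily S.β' (S.graphTransform g) := fun m x x' =>
  (S.coneB_of_isFixedPt hg (S.graphMap_spec hg m x) (S.graphMap_spec hg m x')).1

theorem dist_graphMap_le (hg : IsLipFamily S.β' g) (m : M) (x x' : X m) :
    dist (S.graphMap g m x) (S.graphMap g m x') ≤ S.lams m * dist x x' :=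
  (S.coneB_of_isFixedPt hg (S.graphMap_spec hg m x) (S.graphMap_spec hg m x')).2

theorem dist_graphMap_iX_le (hg : IsLipFamily S.β' g) (m : M) :
    dist (S.graphMap g m (S.iX m)) (S.iX (u m)) ≤
      (S.C * dist (g (u m) (S.iX (u m))) (S.iY (u m)) + S.η (u m)) / (1 - S.c) := by
  set z := S.graphMap g m (S.iX m)
  set s := dist (g (u m) (S.iX (u m))) (S.iY (u m))
  apply le_div_one_sub_of_le_mul_add dist_nonneg (S.angle m) S.c_lt_one
  have hgz : dist (g (u m) z) (S.iY (u m)) ≤ S.β' (u m) * dist z (S.iX (u m)) + s :=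
    (dist_triangle _ _ _).trans (add_le_add (hg _ _ _) le_rfl)
  calc dist z (S.iX (u m))
      ≤ dist (S.F m (S.iX m) (g (u m) z)) (S.F m (S.iX m) (S.iY (u m))) +
          dist (S.F m (S.iX m) (S.iY (u m))) (S.iX (u m)) := by
        rw [S.graphMap_spec hg]; exact dist_triangle _ _ _
    _ ≤ S.α' m * (S.β' (u m) * dist z (S.iX (u m)) + s) + S.η (u m) := by
        gcongr
        · exact (S.dist_F_right m _ _ _).trans (mul_le_mul_of_nonneg_left hgz (S.α'_nonneg m))
        · rw [dist_comm]; exact S.section_F m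
    _ ≤ S.α' m * S.β' (u m) * dist z (S.iX (u m)) + (S.C * s + S.η (u m)) := by
        nlinarith [S.α'_le_C m, dist_nonneg (x := g (u m) (S.iX (u m))) (y := S.iY (u m))]

theorem dist_graphTransform_le (hg : IsLipFamily S.β' g) (hg' : IsLipFamily S.β' g') (m : M)
    (x : X m) : dist (S.graphTransform g m x) (S.graphTransform g' m x) ≤ S.lamu m *
      (dist (g (u m) (S.graphMap g' m x)) (g' (u m) (S.graphMap g' m x)) / (1 - S.c)) := by
  set z := S.graphMap g m x
  set z' := S.graphMap g' m x
  have h := S.coneA m x x (g (u m) z) (g' (u m) z')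
    (by simpa using mul_nonneg (S.α_nonneg m) dist_nonneg)
  rw [S.graphMap_spec hg, S.graphMap_spec hg'] at h
  refine h.2.trans (mul_le_mul_of_nonneg_left ?_ (S.lamu_nonneg m))
  refine le_div_one_sub_of_le_mul_add dist_nonneg (by rw [mul_comm]; exact S.angle m)
    S.c_lt_one ?_
  calc dist (g (u m) z) (g' (u m) z')
      ≤ S.β' (u m) * dist z z' + dist (g (u m) z') (g' (u m) z') :=
        (dist_triangle _ _ _).trans (add_le_add (hg _ _ _) le_rfl)
    _ ≤ S.β' (u m) * S.α' m * dist (g (u m) z) (g' (u m) z') +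
          dist (g (u m) z') (g' (u m) z') := by
        rw [mul_assoc]; gcongr; exacts [S.β'_nonneg _, h.1]

theorem isLipFamily_approx (n : ℕ) : IsLipFamily S.β' (S.approx n) := by
  induction n with
  | zero => exact fun m a b =>
      (dist_self (S.iY m)).trans_le (mul_nonneg (S.β'_nonneg m) dist_nonneg)
  | succ n ih => rw [S.approx_succ]; exact S.isLipFamily_graphTransform ih

theorem isGraphSeq_approx : S.IsGraphSeq S.approx S.approxMap := fun k m x =>
  ⟨S.graphMap_spec (S.isLipFamily_approx k) m x, by rw [S.approx_succ]; rfl⟩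

theorem dist_approxMap_le (k : ℕ) (m : M) (x x' : X m) :
    dist (S.approxMap k m x) (S.approxMap k m x') ≤ S.lams m * dist x x' :=
  S.dist_graphMap_le (S.isLipFamily_approx k) m x x'

theorem dist_approx_succ_succ_le (n : ℕ) (m : M) (x : X m) :
    dist (S.approx (n + 2) m x) (S.approx (n + 1) m x) ≤ prodAlong u S.lamu (n + 1) m *
      ((S.C * dist (orbit S.approxMap (n + 1) m x) (S.iX (u^[n + 1] m)) +
        S.η (u^[n + 1] m)) / (1 - S.c)) := by
  have hshift : S.IsGraphSeq (fun k => S.approx (k + 1)) (fun k => S.approxMap (k + 1)) :=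
    fun k => S.isGraphSeq_approx (k + 1)
  obtain ⟨hz, hD⟩ := S.cone_forward hshift S.isGraphSeq_approx n m x x
    (by simpa using mul_nonneg (S.α_nonneg m) dist_nonneg)
  set z := orbit (fun k => S.approxMap (k + 1)) (n + 1) m x
  set z' := orbit S.approxMap (n + 1) m x
  refine hD.trans (mul_le_mul_of_nonneg_left ?_ (prodAlong_nonneg S.lamu_nonneg _ _))
  have hangle : S.β' (u^[n + 1] m) * S.α' (u^[n] m) ≤ S.c := by
    rw [mul_comm, Function.iterate_succ_apply']; exact S.angle _
  have hβ' : S.β' (u^[n + 1] m) ≤ S.C := by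
    rw [Function.iterate_succ_apply']; exact S.β'_le_C _
  apply le_div_one_sub_of_le_mul_add dist_nonneg hangle S.c_lt_one
  calc dist (S.approx 1 _ z) (S.approx 0 _ z')
      = dist (S.G _ z (S.iY (u (u^[n + 1] m)))) (S.iY _) := rfl
    _ ≤ S.β' _ * dist z (S.iX _) + S.η _ :=
        (dist_triangle _ (S.G _ (S.iX _) (S.iY _)) _).trans
          (add_le_add (S.dist_G_left _ _ _ _) (by rw [dist_comm]; exact S.section_G _))
    _ ≤ S.β' _ * (dist z z' + dist z' (S.iX _)) + S.η _ := by
        gcongr; exacts [S.β'_nonneg _, dist_triangle _ _ _]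
    _ ≤ _ := by
        have := mul_le_mul_of_nonneg_left hz (S.β'_nonneg (u^[n + 1] m))
        have := mul_le_mul_of_nonneg_right hβ' (dist_nonneg (x := z') (y := S.iX _))
        nlinarith

theorem dist_approx_succ_iX_le (k : ℕ) (m : M) :
    dist (S.approx (k + 1) m (S.iX m)) (S.approx k m (S.iX m)) ≤
      (S.C * (prodAlong u S.lamu k m * S.orbitDefect S.approxMap k m) + S.θ ^ k * S.η m) /
        (1 - S.c) := by
  have hc : 0 < 1 - S.c := by linarith [S.c_lt_one]
  cases k with
  | zero =>
    calc dist (S.approx 1 m (S.iX m)) (S.approx 0 m (S.iX m)) ≤ S.η m := by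
          rw [dist_comm]; exact S.section_G m
      _ ≤ S.η m / (1 - S.c) := le_div_self (S.η_nonneg m) hc (by linarith [S.c_nonneg])
      _ = _ := by rw [orbitDefect_zero, mul_zero, mul_zero, zero_add, pow_zero, one_mul]
  | succ n =>
    refine (S.dist_approx_succ_succ_le n m (S.iX m)).trans ?_
    rw [mul_div_assoc']
    refine div_le_div_of_nonneg_right ?_ hc.le
    have := S.prodAlong_lamu_mul_η_le (n + 1) m
    rw [orbitDefect]
    linarith

theorem dist_approx_iX_le {A : ℕ → ℝ} {N : ℕ} {m : M}
    (hA : ∀ k < N,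
      prodAlong u S.lamu k m * S.orbitDefect S.approxMap k m ≤ S.θ ^ k * A k * S.η m) :
    dist (S.approx N m (S.iX m)) (S.iY m) ≤
      (∑ k ∈ range N, S.θ ^ k * (S.C * A k + 1)) * S.η m / (1 - S.c) := by
  rw [dist_comm, sum_mul, sum_div]
  refine (dist_le_range_sum_dist (fun n => S.approx n m (S.iX m)) N).trans
    (sum_le_sum fun k hk => ?_)
  rw [dist_comm]
  refine (S.dist_approx_succ_iX_le k m).trans
    (div_le_div_of_nonneg_right ?_ (by linarith [S.c_lt_one]))
  have := mul_le_mul_of_nonneg_left (hA k (mem_range.1 hk)) S.C_nonneg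
  linarith

theorem exists_defect_bound : ∃ A : ℕ → ℝ, (∀ j, 0 ≤ A j) ∧
    (∃ B, ∀ j, ∑ k ∈ range j, S.θ ^ k * A k ≤ B) ∧
    ∀ N m, prodAlong u S.lamu N m * S.orbitDefect S.approxMap N m ≤ S.θ ^ N * A N * S.η m := by
  have hc : 0 < 1 - S.c := by linarith [S.c_lt_one]
  obtain ⟨A, hA0, hAmono, hA, hB⟩ := exists_gronwall_sequence S.θ_nonneg S.θ_lt_one
    (inv_nonneg.2 hc.le) (div_nonneg S.C_nonneg (sq_nonneg (1 - S.c))) S.C_nonneg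
  refine ⟨A, fun j => hA0 ▸ hAmono (Nat.zero_le j), hB, fun N => ?_⟩
  induction N using Nat.strong_induction_on with
  | _ N ih =>
    -- The drift of `approxMap j` at `iX` is bounded through `d(approx j iY (iX), iY)`,
    -- which only involves the defects below `j`.
    have hanchor : ∀ j < N, ∀ m', dist (S.approxMap j m' (S.iX m')) (S.iX (u m')) ≤
        (A (j + 1) - A j) * S.η (u m') := by
      intro j hj m'
      have hs := S.dist_approx_iX_le (N := j) (m := u m') fun k hk => ih k (hk.trans hj) (u m')
      calc dist (S.approxMap j m' (S.iX m')) (S.iX (u m'))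
          ≤ (S.C * dist (S.approx j (u m') (S.iX (u m'))) (S.iY (u m')) + S.η (u m')) /
              (1 - S.c) := S.dist_graphMap_iX_le (S.isLipFamily_approx j) m'
        _ ≤ (S.C * ((∑ k ∈ range j, S.θ ^ k * (S.C * A k + 1)) * S.η (u m') / (1 - S.c)) +
              S.η (u m')) / (1 - S.c) := by gcongr; exact S.C_nonneg
        _ = ((1 - S.c)⁻¹ + S.C / (1 - S.c) ^ 2 *
              ∑ k ∈ range j, S.θ ^ k * (S.C * A k + 1)) * S.η (u m') := by field_simp; ring
        _ ≤ (A (j + 1) - A j) * S.η (u m') := mul_le_mul_of_nonneg_right (hA j) (S.η_nonneg _)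
    simpa [hA0] using S.prodAlong_mul_orbitDefect_le S.dist_approxMap_le hAmono N hanchor

theorem cauchySeq_approx (m : M) (x : X m) : CauchySeq fun n => S.approx n m x := by
  obtain ⟨A, hA0, ⟨B, hB⟩, hdefect⟩ := S.exists_defect_bound
  have hθ : Summable fun n : ℕ => S.θ ^ (n + 1) :=
    (summable_nat_add_iff 1).2 (summable_geometric_of_lt_one S.θ_nonneg S.θ_lt_one)
  have hθA : Summable fun n : ℕ => S.θ ^ (n + 1) * A (n + 1) :=
    (summable_nat_add_iff 1).2 (summable_of_sum_range_le
      (fun k => mul_nonneg (pow_nonneg S.θ_nonneg k) (hA0 k)) hB)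
  refine (cauchySeq_shift 1).1 (cauchySeq_of_dist_le_of_summable
    (fun n => (S.C * (S.θ ^ (n + 1) * dist x (S.iX m)) +
      S.C * (S.θ ^ (n + 1) * A (n + 1)) * S.η m + S.θ ^ (n + 1) * S.η m) / (1 - S.c))
    (fun n => ?_) ((((hθ.mul_right _).mul_left _).add ((hθA.mul_left _).mul_right _)).add
      (hθ.mul_right _) |>.div_const _))
  rw [dist_comm]
  refine (S.dist_approx_succ_succ_le n m x).trans ?_
  rw [mul_div_assoc']
  refine div_le_div_of_nonneg_right ?_ (by linarith [S.c_lt_one])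
  have horbit := S.prodAlong_mul_dist_orbit_le S.dist_approxMap_le (n + 1) m x
  have := mul_le_mul_of_nonneg_left (horbit.trans (add_le_add le_rfl (hdefect (n + 1) m)))
    S.C_nonneg
  nlinarith [S.prodAlong_lamu_mul_η_le (n + 1) m]

variable [∀ m, CompleteSpace (Y m)]

theorem tendsto_approx (m : M) (x : X m) :
    Tendsto (fun n => S.approx n m x) atTop (𝓝 (S.graph m x)) :=
  tendsto_nhds_limUnder (cauchySeq_tendsto_of_complete (S.cauchySeq_approx m x))

theorem isLipFamily_graph : IsLipFamily S.β' S.graph := fun m a b =>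
  le_of_tendsto' ((S.tendsto_approx m a).dist (S.tendsto_approx m b)) fun n =>
    S.isLipFamily_approx n m a b

theorem exists_dist_graph_iX_le :
    ∃ K, 0 ≤ K ∧ ∀ m, dist (S.graph m (S.iX m)) (S.iY m) ≤ K * S.η m := by
  obtain ⟨A, -, ⟨B, hB⟩, hdefect⟩ := S.exists_defect_bound
  have hc : 0 < 1 - S.c := by linarith [S.c_lt_one]
  have hθ : 0 < 1 - S.θ := by linarith [S.θ_lt_one]
  refine ⟨(S.C * B + (1 - S.θ)⁻¹) / (1 - S.c), div_nonneg (add_nonneg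
    (mul_nonneg S.C_nonneg ((sum_range_zero _).symm.le.trans (hB 0))) (inv_nonneg.2 hθ.le)) hc.le,
    fun m => le_of_tendsto ((S.tendsto_approx m (S.iX m)).dist tendsto_const_nhds)
      (Eventually.of_forall fun N => ?_)⟩
  refine (S.dist_approx_iX_le fun k _ => hdefect k m).trans ?_
  rw [div_mul_eq_mul_div]
  refine div_le_div_of_nonneg_right (mul_le_mul_of_nonneg_right ?_ (S.η_nonneg m)) hc.le
  have hgeom : ∑ k ∈ range N, S.θ ^ k ≤ (1 - S.θ)⁻¹ := by
    simpa using geom_sum_Ico_le_of_lt_one (m := 0) (n := N) S.θ_nonneg S.θ_lt_one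
  have hsplit : ∑ k ∈ range N, S.θ ^ k * (S.C * A k + 1) =
      S.C * ∑ k ∈ range N, S.θ ^ k * A k + ∑ k ∈ range N, S.θ ^ k := by
    rw [mul_sum, ← sum_add_distrib]; exact sum_congr rfl fun k _ => by ring
  rw [hsplit]
  nlinarith [mul_le_mul_of_nonneg_left (hB N) S.C_nonneg]

theorem graphTransform_graph : S.graphTransform S.graph = S.graph := by
  funext m x
  set z := S.graphMap S.graph m x
  have hlim : Tendsto (fun n => S.approx (n + 1) m x) atTop
      (𝓝 (S.graphTransform S.graph m x)) := by
    have h0 : Tendsto (fun n => S.lamu m *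
        (dist (S.approx n (u m) z) (S.graph (u m) z) / (1 - S.c))) atTop (𝓝 0) := by
      simpa using (((S.tendsto_approx (u m) z).dist
        (tendsto_const_nhds (x := S.graph (u m) z))).div_const (1 - S.c)).const_mul (S.lamu m)
    refine tendsto_iff_dist_tendsto_zero.2 (squeeze_zero (fun _ => dist_nonneg) (fun n => ?_) h0)
    rw [S.approx_succ]
    exact S.dist_graphTransform_le (S.isLipFamily_approx n) S.isLipFamily_graph m x
  exact tendsto_nhds_unique hlim ((S.tendsto_approx m x).comp (tendsto_add_atTop_nat 1))

theorem exists_isInvariantGraph :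
    ∃ K K₀, 0 ≤ K ∧ 0 ≤ K₀ ∧ S.IsInvariantGraph S.graph (S.graphMap S.graph) K K₀ := by
  obtain ⟨K, hK, hs⟩ := S.exists_dist_graph_iX_le
  have hc : 0 < 1 - S.c := by linarith [S.c_lt_one]
  refine ⟨K, (S.C * K + 1) / (1 - S.c), hK,
    div_nonneg (add_nonneg (mul_nonneg S.C_nonneg hK) zero_le_one) hc.le, fun m =>
    ⟨S.isLipFamily_graph m, hs m, S.dist_graphMap_le S.isLipFamily_graph m, ?_, fun x =>
      ⟨S.graphMap_spec S.isLipFamily_graph m x, congrFun (congrFun S.graphTransform_graph m) x⟩⟩⟩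
  calc dist (S.graphMap S.graph m (S.iX m)) (S.iX (u m))
      ≤ (S.C * dist (S.graph (u m) (S.iX (u m))) (S.iY (u m)) + S.η (u m)) / (1 - S.c) :=
        S.dist_graphMap_iX_le S.isLipFamily_graph m
    _ ≤ (S.C * (K * S.η (u m)) + S.η (u m)) / (1 - S.c) := by
        gcongr; exacts [S.C_nonneg, hs _]
    _ = (S.C * K + 1) / (1 - S.c) * S.η (u m) := by ring

end Complete

variable {S} {f f' : ∀ m, X m → Y m} {xs xs' : ∀ m, X m → X (u m)} {K K' K₀ K₀' : ℝ}

theorem IsInvariantGraph.isGraphSeq (h : S.IsInvariantGraph f xs K K₀) :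
    S.IsGraphSeq (fun _ => f) (fun _ => xs) := fun _ m x => (h m).2.2.2.2 x

theorem IsInvariantGraph.prodAlong_mul_dist_orbit_le (h : S.IsInvariantGraph f xs K K₀)
    (hK₀ : 0 ≤ K₀) (n : ℕ) (m : M) (x : X m) :
    prodAlong u S.lamu n m * dist (orbit (fun _ => xs) n m x) (S.iX (u^[n] m)) ≤
      S.θ ^ n * (dist x (S.iX m) + K₀ * n * S.η m) := by
  have hxs : ∀ (k : ℕ) m (a b : X m), dist (xs m a) (xs m b) ≤ S.lams m * dist a b :=
    fun _ m => (h m).2.2.1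
  have hdefect := S.prodAlong_mul_orbitDefect_le hxs (A := fun j => K₀ * j)
    (fun _ _ hab => mul_le_mul_of_nonneg_left (Nat.cast_le.2 hab) hK₀) n
    (fun j _ m => by simpa [mul_add] using (h m).2.2.2.1) m
  simp only [Nat.cast_zero, mul_zero, sub_zero] at hdefect
  linarith [S.prodAlong_mul_dist_orbit_le hxs n m x]

theorem IsInvariantGraph.dist_le (h : S.IsInvariantGraph f xs K K₀)
    (h' : S.IsInvariantGraph f' xs' K' K₀') (m : M) (p p' : X m) :
    dist (f m p) (f' m p') ≤
      S.β' m * (dist p (S.iX m) + dist p' (S.iX m)) + (K + K') * S.η m := by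
  have h₁ := (h m).1 p (S.iX m)
  have h₂ := (h' m).1 (S.iX m) p'
  have h₃ := dist_triangle4 (f m p) (f m (S.iX m)) (f' m (S.iX m)) (f' m p')
  have h₄ := dist_triangle (f m (S.iX m)) (S.iY m) (f' m (S.iX m))
  rw [dist_comm (S.iY m)] at h₄
  rw [dist_comm (S.iX m)] at h₂
  linarith [(h m).2.1, (h' m).2.1]

theorem IsInvariantGraph.dist_apply_le (h : S.IsInvariantGraph f xs K K₀)
    (h' : S.IsInvariantGraph f' xs' K' K₀') (hK : 0 ≤ K) (hK' : 0 ≤ K') (hK₀ : 0 ≤ K₀)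
    (hK₀' : 0 ≤ K₀') (m : M) (x : X m) (n : ℕ) :
    dist (f m x) (f' m x) ≤ S.θ ^ (n + 1) * (S.C * (2 * dist x (S.iX m)) + (K + K') * S.η m) +
      (n + 1 : ℕ) * S.θ ^ (n + 1) * (S.C * (K₀ + K₀') * S.η m) := by
  set P := prodAlong u S.lamu (n + 1) m
  set p := orbit (fun _ => xs) (n + 1) m x
  set p' := orbit (fun _ => xs') (n + 1) m x
  have hβ' : S.β' (u^[n + 1] m) ≤ S.C := by
    rw [Function.iterate_succ_apply']; exact S.β'_le_C _
  have hfar := h.dist_le h' (u^[n + 1] m) p p'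
  have := mul_le_mul_of_nonneg_right hβ' (add_nonneg (dist_nonneg (x := p) (y := S.iX _))
    (dist_nonneg (x := p') (y := S.iX _)))
  have hP := prodAlong_nonneg (u := u) S.lamu_nonneg (n + 1) m
  calc dist (f m x) (f' m x)
      ≤ P * dist (f _ p) (f' _ p') := (S.cone_forward h.isGraphSeq h'.isGraphSeq n m x x
        (by simpa using mul_nonneg (S.α_nonneg m) dist_nonneg)).2
    _ ≤ S.C * (P * dist p (S.iX _) + P * dist p' (S.iX _)) +
          (K + K') * (P * S.η (u^[n + 1] m)) := by
        nlinarith [mul_le_mul_of_nonneg_left hfar hP]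
    _ ≤ _ := by
        have := h.prodAlong_mul_dist_orbit_le hK₀ (n + 1) m x
        have := h'.prodAlong_mul_dist_orbit_le hK₀' (n + 1) m x
        have := mul_le_mul_of_nonneg_left (S.prodAlong_lamu_mul_η_le (n + 1) m)
          (add_nonneg hK hK')
        nlinarith [S.C_nonneg]

theorem IsInvariantGraph.unique (h : S.IsInvariantGraph f xs K K₀)
    (h' : S.IsInvariantGraph f' xs' K' K₀') (hK : 0 ≤ K) (hK' : 0 ≤ K') (hK₀ : 0 ≤ K₀)
    (hK₀' : 0 ≤ K₀') : f = f' := by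
  funext m x
  refine dist_le_zero.1 (ge_of_tendsto' (x := atTop) ?_ (h.dist_apply_le h' hK hK' hK₀ hK₀' m x))
  refine (tendsto_add_atTop_iff_nat (f := fun n : ℕ =>
    S.θ ^ n * (S.C * (2 * dist x (S.iX m)) + (K + K') * S.η m) +
      n * S.θ ^ n * (S.C * (K₀ + K₀') * S.η m)) 1).2 ?_
  simpa using ((tendsto_pow_atTop_nhds_zero_of_lt_one S.θ_nonneg S.θ_lt_one).mul_const _).add
    ((tendsto_self_mul_const_pow_of_lt_one S.θ_nonneg S.θ_lt_one).mul_const _)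

end Setting

end InvariantGraph

theorem first_existence_theorem_graph_condition_general
    {M : Type*} (u : M → M) (X Y : M → Type*)
    [∀ m, MetricSpace (X m)] [∀ m, CompleteSpace (X m)]
    [∀ m, MetricSpace (Y m)] [∀ m, CompleteSpace (Y m)]
    (F : ∀ m, X m → Y (u m) → X (u m)) (G : ∀ m, X m → Y (u m) → Y m)
    (α α' lamu β β' lams ε ε₁ η : M → ℝ)
    (hα : ∀ m, 0 ≤ α m) (hα'0 : ∀ m, 0 ≤ α' m) (hlamu : ∀ m, 0 ≤ lamu m)
    (hβ : ∀ m, 0 ≤ β m) (hβ'0 : ∀ m, 0 ≤ β' m) (hlams : ∀ m, 0 ≤ lams m)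
    (hεε₁ : ∀ m, ε m ≤ ε₁ m)
    (hη0 : ∀ m, 0 ≤ η m)
    (iX : ∀ m, X m) (iY : ∀ m, Y m)
    -- `i = (iX, iY)` is an ε-pseudo-stable section of `H` with data `η`
    (hiF : ∀ m, dist (iX (u m)) (F m (iX m) (iY (u m))) ≤ η (u m))
    (hiG : ∀ m, dist (iY m) (G m (iX m) (iY (u m))) ≤ η m)
    (hiη : ∀ m, η (u m) ≤ ε m * η m)
    -- (A)(α; α′, λ_u) condition
    (hA : ∀ m (x₁ x₁' : X m) (y₂ y₂' : Y (u m)),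
      dist x₁ x₁' ≤ α m * dist (G m x₁ y₂) (G m x₁' y₂') →
        dist (F m x₁ y₂) (F m x₁' y₂') ≤ α' m * dist y₂ y₂' ∧
          dist (G m x₁ y₂) (G m x₁' y₂') ≤ lamu m * dist y₂ y₂')
    -- (B)(β; β′, λ_s) condition
    (hB : ∀ m (x₁ x₁' : X m) (y₂ y₂' : Y (u m)),
      dist y₂ y₂' ≤ β m * dist (F m x₁ y₂) (F m x₁' y₂') →
        dist (G m x₁ y₂) (G m x₁' y₂') ≤ β' m * dist x₁ x₁' ∧
          dist (F m x₁ y₂) (F m x₁' y₂') ≤ lams m * dist x₁ x₁')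
    -- angle condition
    (hangle : ∃ c : ℝ, c < 1 ∧ ∀ m, α' m * β' (u m) ≤ c)
    (hαα' : ∀ m, α' m ≤ α (u m))
    (hββ' : ∀ m, β' (u m) ≤ β m)
    (hbdd : ∃ C : ℝ, ∀ m, max (α m) (β m) ≤ C)
    -- spectral condition
    (hspec₁ : ∃ c : ℝ, c < 1 ∧ ∀ m, lams m * lamu m ≤ c)
    (hspec₂ : ∃ c : ℝ, c < 1 ∧ ∀ m, lamu m * ε₁ m ≤ c) :
    ∃ (f : ∀ m, X m → Y m) (xs : ∀ m, X m → X (u m)) (K K₀ : ℝ),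
      0 ≤ K ∧ 0 ≤ K₀ ∧
      (∀ m,
        (∀ a b : X m, dist (f m a) (f m b) ≤ β' m * dist a b) ∧
        dist (f m (iX m)) (iY m) ≤ K * η m ∧
        (∀ a b : X m, dist (xs m a) (xs m b) ≤ lams m * dist a b) ∧
        dist (xs m (iX m)) (iX (u m)) ≤ K₀ * η (u m) ∧
        ∀ x : X m,
          F m x (f (u m) (xs m x)) = xs m x ∧ G m x (f (u m) (xs m x)) = f m x) ∧
      ∀ (f' : ∀ m, X m → Y m) (xs' : ∀ m, X m → X (u m)) (K' K₀' : ℝ),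
        0 ≤ K' → 0 ≤ K₀' →
        (∀ m,
          (∀ a b : X m, dist (f' m a) (f' m b) ≤ β' m * dist a b) ∧
          dist (f' m (iX m)) (iY m) ≤ K' * η m ∧
          (∀ a b : X m, dist (xs' m a) (xs' m b) ≤ lams m * dist a b) ∧
          dist (xs' m (iX m)) (iX (u m)) ≤ K₀' * η (u m) ∧
          ∀ x : X m,
            F m x (f' (u m) (xs' m x)) = xs' m x ∧
              G m x (f' (u m) (xs' m x)) = f' m x) →
        ∀ m, f' m = f m := by
  obtain ⟨c, hc1, hc⟩ := hangle
  obtain ⟨C, hC⟩ := hbdd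
  obtain ⟨c₁, hc₁1, hc₁⟩ := hspec₁
  obtain ⟨c₂, hc₂1, hc₂⟩ := hspec₂
  have hsection (m : M) : lamu m * η (u m) ≤ max (max c₁ c₂) 0 * η m :=
    calc lamu m * η (u m) ≤ lamu m * ε₁ m * η m := by
          rw [mul_assoc]
          exact mul_le_mul_of_nonneg_left ((hiη m).trans
            (mul_le_mul_of_nonneg_right (hεε₁ m) (hη0 m))) (hlamu m)
      _ ≤ max (max c₁ c₂) 0 * η m := mul_le_mul_of_nonneg_right
          ((hc₂ m).trans ((le_max_right c₁ c₂).trans (le_max_left _ _))) (hη0 m)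
  let S : InvariantGraph.Setting u X Y :=
    { F, G, α, α', lamu, β, β', lams, η, iX, iY
      c := max c 0, C := max C 0, θ := max (max c₁ c₂) 0
      coneA := hA, coneB := hB
      α_nonneg := hα, α'_nonneg := hα'0, lamu_nonneg := hlamu, β_nonneg := hβ,
      β'_nonneg := hβ'0, lams_nonneg := hlams, η_nonneg := hη0
      α'_le_α := hαα', β'_le_β := hββ'
      angle := fun m => (hc m).trans (le_max_left _ _)
      c_nonneg := le_max_right _ _, c_lt_one := max_lt hc1 one_pos
      α_le := fun m => ((le_max_left _ _).trans (hC m)).trans (le_max_left _ _)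
      β_le := fun m => ((le_max_right _ _).trans (hC m)).trans (le_max_left _ _)
      C_nonneg := le_max_right _ _
      spectral := fun m => (hc₁ m).trans ((le_max_left _ _).trans (le_max_left _ _))
      spectral_section := hsection
      θ_nonneg := le_max_right _ _, θ_lt_one := max_lt (max_lt hc₁1 hc₂1) one_pos
      section_F := hiF, section_G := hiG }
  obtain ⟨K, K₀, hK, hK₀, hinv⟩ := S.exists_isInvariantGraph
  exact ⟨S.graph, S.graphMap S.graph, K, K₀, hK, hK₀, hinv, fun f' xs' K' K₀' hK' hK₀' h' m =>
    congrFun (hinv.unique h' hK hK' hK₀ hK₀').symm m⟩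

/-- First existence theorem for invariant graphs (graph-condition branch). -/
theorem first_existence_theorem_graph_condition
    {M : Type*} (u : M → M) (X Y : M → Type*)
    [∀ m, MetricSpace (X m)] [∀ m, CompleteSpace (X m)]
    [∀ m, MetricSpace (Y m)] [∀ m, CompleteSpace (Y m)]
    (F : ∀ m, X m → Y (u m) → X (u m)) (G : ∀ m, X m → Y (u m) → Y m)
    (α α' lamu β β' lams ε ε₁ η : M → ℝ)
    (hα : ∀ m, 0 ≤ α m) (hα'0 : ∀ m, 0 ≤ α' m) (hlamu : ∀ m, 0 ≤ lamu m)
    (hβ : ∀ m, 0 ≤ β m) (hβ'0 : ∀ m, 0 ≤ β' m) (hlams : ∀ m, 0 ≤ lams m)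
    (hε0 : ∀ m, 0 ≤ ε m) (hε₁0 : ∀ m, 0 ≤ ε₁ m) (hεε₁ : ∀ m, ε m ≤ ε₁ m)
    (hη0 : ∀ m, 0 ≤ η m)
    (iX : ∀ m, X m) (iY : ∀ m, Y m)
    -- `i = (iX, iY)` is an ε-pseudo-stable section of `H` with data `η`
    (hiF : ∀ m, dist (iX (u m)) (F m (iX m) (iY (u m))) ≤ η (u m))
    (hiG : ∀ m, dist (iY m) (G m (iX m) (iY (u m))) ≤ η m)
    (hiη : ∀ m, η (u m) ≤ ε m * η m)
    -- (A)(α; α′, λ_u) condition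
    (hA : ∀ m (x₁ x₁' : X m) (y₂ y₂' : Y (u m)),
      dist x₁ x₁' ≤ α m * dist (G m x₁ y₂) (G m x₁' y₂') →
        dist (F m x₁ y₂) (F m x₁' y₂') ≤ α' m * dist y₂ y₂' ∧
          dist (G m x₁ y₂) (G m x₁' y₂') ≤ lamu m * dist y₂ y₂')
    -- (B)(β; β′, λ_s) condition
    (hB : ∀ m (x₁ x₁' : X m) (y₂ y₂' : Y (u m)),
      dist y₂ y₂' ≤ β m * dist (F m x₁ y₂) (F m x₁' y₂') →
        dist (G m x₁ y₂) (G m x₁' y₂') ≤ β' m * dist x₁ x₁' ∧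
          dist (F m x₁ y₂) (F m x₁' y₂') ≤ lams m * dist x₁ x₁')
    -- angle condition
    (hangle : ∃ c : ℝ, c < 1 ∧ ∀ m, α' m * β' (u m) ≤ c)
    (hαα' : ∀ m, α' m ≤ α (u m))
    (hββ' : ∀ m, β' (u m) ≤ β m)
    (hbdd : ∃ C : ℝ, ∀ m, max (α m) (β m) ≤ C)
    -- spectral condition
    (hspec₁ : ∃ c : ℝ, c < 1 ∧ ∀ m, lams m * lamu m ≤ c)
    (hspec₂ : ∃ c : ℝ, c < 1 ∧ ∀ m, lamu m * ε₁ m ≤ c) :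
    ∃ (f : ∀ m, X m → Y m) (xs : ∀ m, X m → X (u m)) (K K₀ : ℝ),
      0 ≤ K ∧ 0 ≤ K₀ ∧
      (∀ m,
        (∀ a b : X m, dist (f m a) (f m b) ≤ β' m * dist a b) ∧
        dist (f m (iX m)) (iY m) ≤ K * η m ∧
        (∀ a b : X m, dist (xs m a) (xs m b) ≤ lams m * dist a b) ∧
        dist (xs m (iX m)) (iX (u m)) ≤ K₀ * η (u m) ∧
        ∀ x : X m,
          F m x (f (u m) (xs m x)) = xs m x ∧ G m x (f (u m) (xs m x)) = f m x) ∧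
      ∀ (f' : ∀ m, X m → Y m) (xs' : ∀ m, X m → X (u m)) (K' K₀' : ℝ),
        0 ≤ K' → 0 ≤ K₀' →
        (∀ m,
          (∀ a b : X m, dist (f' m a) (f' m b) ≤ β' m * dist a b) ∧
          dist (f' m (iX m)) (iY m) ≤ K' * η m ∧
          (∀ a b : X m, dist (xs' m a) (xs' m b) ≤ lams m * dist a b) ∧
          dist (xs' m (iX m)) (iX (u m)) ≤ K₀' * η (u m) ∧
          ∀ x : X m,
            F m x (f' (u m) (xs' m x)) = xs' m x ∧
              G m x (f' (u m) (xs' m x)) = f' m x) →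
        ∀ m, f' m = f m :=
  first_existence_theorem_graph_condition_general u X Y F G α α' lamu β β' lams ε ε₁ η hα hα'0 hlamu
    hβ hβ'0 hlams hεε₁ hη0 iX iY hiF hiG hiη hA hB hangle hαα' hββ' hbdd hspec₁ hspec₂
end

section
/- Second existence theorem for invariant graphs. Let H ∼ (F,G) be a bundle correspondence over u : M → M whose fibers X_m, Y_m are complete metric spaces, let ε, ε₁, η : M → [0,∞) with ε(m) ≤ ε₁(m) for all m, and let i = (i_X,i_Y) be a section of X × Y which is an ε-Y-bounded section of H, i.e. sup_{x∈X_m} d(G_m(x, i_Y(u(m))), i_Y(m)) ≤ η(m) and η(u(m)) ≤ ε(m)·η(m) for all m. Assume H satisfies the (A′)(α,λ_u)(B)(β;β′,λ_s) condition with functions α, λ_u, β, β′, λ_s : M → [0,∞) such that: (angle condition) sup_{m∈M} α(m)·β′(u(m)) < 1, β′(u(m)) ≤ β(m) for all m, and sup_{m∈M} max{α(m), β(m)} < ∞; (spectral condition) sup_{m∈M} λ_u(m)·ε₁(m)/(1 − α(m)·β′(u(m))) < 1. Then there exist a family of maps f_m : X_m → Y_m, a family of maps x_m : X_m → X_{u(m)},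 and a constant K ≥ 0 such that for all m ∈ M: (1) Lip f_m ≤ β′(m) and sup_{x∈X_m} d(f_m(x), i_Y(m)) ≤ K·η(m); (2) Lip x_m ≤ λ_s(m) and, for every x ∈ X_m, F_m(x, f_{u(m)}(x_m(x))) = x_m(x) and G_m(x, f_{u(m)}(x_m(x))) = f_m(x). In addition, if sup_{x∈X_m} d(F_m(x, i_Y(u(m))), i_X(u(m))) ≤ η(u(m)) for all m, then there is a constant K₀ ≥ 0 with sup_{x∈X_m} d(x_m(x), i_X(u(m))) ≤ K₀·η(u(m)) for all m. Moreover the family (f_m) is unique among families satisfying (1) and (2) for some constant and some maps (x_m). -/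
/-!
The invariant graph is the fixed point of the graph transform `Γ`. For a family `g` of
`β'`-Lipschitz graphs, `ξ = x_m(x)` is the fixed point of the contraction
`ξ ↦ F_m(x, g_{u(m)}(ξ))` (constant `α(m) β'(u(m)) < 1`) and `(Γ g)_m(x) = G_m(x, g_{u(m)}(ξ))`.
Condition (B) makes `Γ` preserve `β'`-Lipschitz families, and (A′) with the spectral condition
shows that `Γ` contracts fibrewise distances measured in units of `η`: if `d(g, g') ≤ D η` over
`u(m)`, then over `m` we get `d(Γ g, Γ g') ≤ λ_u(m) D η(u(m)) / (1 - α(m) β'(u(m))) ≤ c D η(m)`,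
because `η(u(m)) ≤ ε₁(m) η(m)`.
Iterating `Γ` from the section `i_Y` therefore converges fibrewise to the unique `η`-bounded
invariant family.
-/

open Filter Topology

theorem tendsto_pow_mul_mul_nhds_zero {c : ℝ} (hc0 : 0 ≤ c) (hc1 : c < 1) (D r : ℝ) :
    Tendsto (fun n : ℕ => c ^ n * D * r) atTop (𝓝 0) := by
  simpa using ((tendsto_pow_atTop_nhds_zero_of_lt_one hc0 hc1).mul_const D).mul_const r

section WeightedContraction

variable {ι : Type*} {κ Z : ι → Type*}

def IsLipschitzFamily [∀ i, PseudoMetricSpace (κ i)] [∀ i, PseudoMetricSpace (Z i)]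
    (L : ι → ℝ) (g : ∀ i, κ i → Z i) : Prop :=
  ∀ i a b, dist (g i a) (g i b) ≤ L i * dist a b

theorem isClosed_setOf_isLipschitzFamily [∀ i, PseudoMetricSpace (κ i)]
    [∀ i, PseudoMetricSpace (Z i)] (L : ι → ℝ) :
    IsClosed {g : ∀ i, κ i → Z i | IsLipschitzFamily L g} := by
  simp only [IsLipschitzFamily, Set.ofPred_forall]
  exact isClosed_iInter fun i => isClosed_iInter fun a => isClosed_iInter fun b =>
    isClosed_le (by fun_prop) continuous_const

variable [∀ i, MetricSpace (Z i)]

def IsWeightedContraction (T : (∀ i, κ i → Z i) → ∀ i, κ i → Z i) (S : Set (∀ i, κ i → Z i))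
    (w : ι → ℝ) (c : ℝ) : Prop :=
  ∀ g ∈ S, ∀ g' ∈ S, ∀ D : ℝ, 0 ≤ D → (∀ i a, dist (g i a) (g' i a) ≤ D * w i) →
    ∀ i a, dist (T g i a) (T g' i a) ≤ c * D * w i

namespace IsWeightedContraction

variable {T : (∀ i, κ i → Z i) → ∀ i, κ i → Z i} {S : Set (∀ i, κ i → Z i)} {w : ι → ℝ}
  {c : ℝ}

theorem dist_iterate_le (hT : IsWeightedContraction T S w c) (hS : Set.MapsTo T S S)
    (hc : 0 ≤ c) {g g' : ∀ i, κ i → Z i} (hg : g ∈ S) (hg' : g' ∈ S) {D : ℝ} (hD : 0 ≤ D)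
    (h : ∀ i a, dist (g i a) (g' i a) ≤ D * w i) (n : ℕ) (i : ι) (a : κ i) :
    dist (T^[n] g i a) (T^[n] g' i a) ≤ c ^ n * D * w i := by
  induction n generalizing i a with
  | zero => simpa using h i a
  | succ n ih =>
    rw [Function.iterate_succ_apply', Function.iterate_succ_apply']
    calc _ ≤ c * (c ^ n * D) * w i :=
          hT _ (hS.iterate n hg) _ (hS.iterate n hg') _ (by positivity) ih i a
      _ = c ^ (n + 1) * D * w i := by ring

theorem eq_of_isFixedPt (hT : IsWeightedContraction T S w c) (hS : Set.MapsTo T S S)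
    (hc0 : 0 ≤ c) (hc1 : c < 1) {g g' : ∀ i, κ i → Z i} (hg : g ∈ S) (hg' : g' ∈ S)
    (hTg : T g = g) (hTg' : T g' = g') {D : ℝ} (hD : 0 ≤ D)
    (h : ∀ i a, dist (g i a) (g' i a) ≤ D * w i) : g = g' := by
  funext i a
  refine dist_le_zero.1 (ge_of_tendsto' (tendsto_pow_mul_mul_nhds_zero hc0 hc1 D (w i))
    fun n => ?_)
  simpa only [Function.iterate_fixed hTg, Function.iterate_fixed hTg'] using
    hT.dist_iterate_le hS hc0 hg hg' hD h n i a

theorem exists_isFixedPt [∀ i, CompleteSpace (Z i)] (hT : IsWeightedContraction T S w c)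
    (hS : Set.MapsTo T S S) (hSc : IsClosed S) (hc0 : 0 ≤ c) (hc1 : c < 1)
    {s₀ : ∀ i, κ i → Z i} (hs₀ : s₀ ∈ S) (h₀ : ∀ i a, dist (T s₀ i a) (s₀ i a) ≤ w i) :
    ∃ f ∈ S, T f = f ∧ ∀ i a, dist (f i a) (s₀ i a) ≤ (1 - c)⁻¹ * w i := by
  set s : ℕ → ∀ i, κ i → Z i := fun n => T^[n] s₀
  have hsS : ∀ n, s n ∈ S := fun n => hS.iterate n hs₀
  have hstep : ∀ i a n, dist (s n i a) (s (n + 1) i a) ≤ w i * c ^ n := fun i a n => by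
    have := hT.dist_iterate_le hS hc0 (hS hs₀) hs₀ zero_le_one (by simpa using h₀) n i a
    rw [dist_comm, mul_comm]
    simpa [s, Function.iterate_succ_apply] using this
  choose f hf using fun i a =>
    cauchySeq_tendsto_of_complete (cauchySeq_of_le_geometric c (w i) hc1 (hstep i a))
  have hdist : ∀ n i a, dist (s n i a) (f i a) ≤ c ^ n / (1 - c) * w i := fun n i a => by
    convert dist_le_of_le_geometric_of_tendsto c (w i) hc1 (hstep i a) (hf i a) n using 1
    ring
  have hfS : f ∈ S := hSc.mem_of_tendsto
    (tendsto_pi_nhds.2 fun i => tendsto_pi_nhds.2 fun a => hf i a) (Eventually.of_forall hsS)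
  refine ⟨f, hfS, funext fun i => funext fun a => ?_, fun i a => ?_⟩
  · have hTs : Tendsto (fun n => T (s n) i a) atTop (𝓝 (T f i a)) := by
      refine tendsto_iff_dist_tendsto_zero.2 (squeeze_zero (fun _ => dist_nonneg) (fun n => ?_)
        (by simpa only [mul_zero] using (tendsto_pow_mul_mul_nhds_zero hc0 hc1
          ((1 - c)⁻¹) (w i)).const_mul c))
      calc dist (T (s n) i a) (T f i a) ≤ c * (c ^ n / (1 - c)) * w i :=
            hT _ (hsS n) _ hfS _ (div_nonneg (pow_nonneg hc0 n) (by linarith)) (hdist n) i a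
        _ = c * (c ^ n * (1 - c)⁻¹ * w i) := by ring
    refine tendsto_nhds_unique hTs ?_
    simpa only [Function.comp_def, s, Function.iterate_succ_apply'] using
      (hf i a).comp (tendsto_add_atTop_nat 1)
  · simpa [s, dist_comm, div_eq_inv_mul] using hdist 0 i a

end IsWeightedContraction

end WeightedContraction

section Fiber

variable {A B V W : Type*} [MetricSpace A] [MetricSpace B] [MetricSpace V] [MetricSpace W]

theorem contractingWith_comp_of_dist_le {φ : V → B} {g : B → V} {α L : ℝ} (hα : 0 ≤ α)
    (hαL : α * L < 1) (hφ : ∀ y y', dist (φ y) (φ y') ≤ α * dist y y')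
    (hg : ∀ a b, dist (g a) (g b) ≤ L * dist a b) :
    ContractingWith (α * L).toNNReal (φ ∘ g) := by
  refine ⟨Real.toNNReal_lt_one.2 hαL, LipschitzWith.of_dist_le_mul fun a b => ?_⟩
  calc dist (φ (g a)) (φ (g b)) ≤ α * (L * dist a b) :=
        (hφ _ _).trans (mul_le_mul_of_nonneg_left (hg a b) hα)
    _ ≤ (α * L).toNNReal * dist a b := by
        rw [← mul_assoc]; exact mul_le_mul_of_nonneg_right (Real.le_coe_toNNReal _) dist_nonneg

/-- The fixed points `ξ`, `ξ'` of `φ ∘ g` and `φ ∘ g'` satisfy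
`(1 - α L) d(g ξ, g' ξ') ≤ d(g ξ', g' ξ')`, which `ψ` then stretches by at most `lam`. -/
theorem dist_comp_of_isFixedPt_le {φ : V → B} {ψ : V → W} {g g' : B → V} {ξ ξ' : B}
    {α L lam D : ℝ} (hL : 0 ≤ L) (hlam : 0 ≤ lam) (hαL : α * L < 1)
    (hφ : ∀ y y', dist (φ y) (φ y') ≤ α * dist y y')
    (hψ : ∀ y y', dist (ψ y) (ψ y') ≤ lam * dist y y')
    (hg : ∀ a b, dist (g a) (g b) ≤ L * dist a b) (hξ : φ (g ξ) = ξ) (hξ' : φ (g' ξ') = ξ')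
    (hD : dist (g ξ') (g' ξ') ≤ D) :
    dist (ψ (g ξ)) (ψ (g' ξ')) ≤ lam * D / (1 - α * L) := by
  have hpos : 0 < 1 - α * L := by linarith
  have hgξ : dist (g ξ) (g' ξ') ≤ L * dist ξ ξ' + D :=
    (dist_triangle _ (g ξ') _).trans (add_le_add (hg ξ ξ') hD)
  have hξξ' : dist ξ ξ' ≤ α * dist (g ξ) (g' ξ') := by
    calc dist ξ ξ' = dist (φ (g ξ)) (φ (g' ξ')) := by rw [hξ, hξ']
      _ ≤ α * dist (g ξ) (g' ξ') := hφ _ _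
  have hgξ' : (1 - α * L) * dist (g ξ) (g' ξ') ≤ D := by
    nlinarith [mul_le_mul_of_nonneg_left hξξ' hL]
  rw [le_div_iff₀ hpos]
  calc dist (ψ (g ξ)) (ψ (g' ξ')) * (1 - α * L) ≤ lam * dist (g ξ) (g' ξ') * (1 - α * L) :=
        mul_le_mul_of_nonneg_right (hψ _ _) hpos.le
    _ = lam * ((1 - α * L) * dist (g ξ) (g' ξ')) := by ring
    _ ≤ lam * D := mul_le_mul_of_nonneg_left hgξ' hlam

/-- Condition (B) applies to the two points `(x, g ξ)`, `(x', g ξ')` because the graph of `g`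
lies in the `L`-cone, hence in the `β`-cone. -/
theorem dist_of_isFixedPt_le_of_cone {F : A → V → B} {G : A → V → W} {g : B → V}
    {β L L' lams : ℝ}
    (hB : ∀ x x' y y', dist y y' ≤ β * dist (F x y) (F x' y') →
      dist (G x y) (G x' y') ≤ L' * dist x x' ∧ dist (F x y) (F x' y') ≤ lams * dist x x')
    (hLβ : L ≤ β) (hg : ∀ a b, dist (g a) (g b) ≤ L * dist a b) {x x' : A} {ξ ξ' : B}
    (hξ : F x (g ξ) = ξ) (hξ' : F x' (g ξ') = ξ') :
    dist (G x (g ξ)) (G x' (g ξ')) ≤ L' * dist x x' ∧ dist ξ ξ' ≤ lams * dist x x' := by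
  have hcone : dist (g ξ) (g ξ') ≤ β * dist (F x (g ξ)) (F x' (g ξ')) := by
    rw [hξ, hξ']
    exact (hg ξ ξ').trans (mul_le_mul_of_nonneg_right hLβ dist_nonneg)
  obtain ⟨hG, hF⟩ := hB x x' _ _ hcone
  exact ⟨hG, by rwa [hξ, hξ'] at hF⟩

end Fiber

section GraphTransform

variable {M : Type*} {u : M → M} {X Y : M → Type*} [∀ m, MetricSpace (X m)]
  [∀ m, MetricSpace (Y m)] [∀ m, Nonempty (X m)]

/-- The point `x_m(x)`: a fixed point of `ξ ↦ F_m(x, g_{u(m)}(ξ))`, chosen arbitrarily when there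
is none. -/
noncomputable def graphTransformPoint (F : ∀ m, X m → Y (u m) → X (u m))
    (g : ∀ m, X m → Y m) (m : M) (x : X m) : X (u m) :=
  Classical.epsilon fun ξ => F m x (g (u m) ξ) = ξ

noncomputable def graphTransform (F : ∀ m, X m → Y (u m) → X (u m))
    (G : ∀ m, X m → Y (u m) → Y m) (g : ∀ m, X m → Y m) : ∀ m, X m → Y m :=
  fun m x => G m x (g (u m) (graphTransformPoint F g m x))

variable [∀ m, CompleteSpace (X m)] {F : ∀ m, X m → Y (u m) → X (u m)}
  {G : ∀ m, X m → Y (u m) → Y m} {α lamu β β' lams : M → ℝ} {g : ∀ m, X m → Y m}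

theorem graphTransformPoint_spec (hα : ∀ m, 0 ≤ α m) (hαβ' : ∀ m, α m * β' (u m) < 1)
    (hF : ∀ m x y y', dist (F m x y) (F m x y') ≤ α m * dist y y')
    (hg : IsLipschitzFamily β' g) (m : M) (x : X m) :
    F m x (g (u m) (graphTransformPoint F g m x)) = graphTransformPoint F g m x ∧
      ∀ ξ, F m x (g (u m) ξ) = ξ → ξ = graphTransformPoint F g m x := by
  have hc := contractingWith_comp_of_dist_le (hα m) (hαβ' m) (hF m x) (hg (u m))
  have hfix : F m x (g (u m) (graphTransformPoint F g m x)) = graphTransformPoint F g m x :=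
    Classical.epsilon_spec ⟨_, hc.fixedPoint_isFixedPt⟩
  exact ⟨hfix, fun ξ hξ => hc.fixedPoint_unique' hξ hfix⟩

theorem graphTransform_eq_self (hα : ∀ m, 0 ≤ α m) (hαβ' : ∀ m, α m * β' (u m) < 1)
    (hF : ∀ m x y y', dist (F m x y) (F m x y') ≤ α m * dist y y')
    (hg : IsLipschitzFamily β' g) {xs : ∀ m, X m → X (u m)}
    (hxs : ∀ m x, F m x (g (u m) (xs m x)) = xs m x ∧ G m x (g (u m) (xs m x)) = g m x) :
    graphTransform F G g = g := by
  funext m x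
  obtain ⟨hxF, hxG⟩ := hxs m x
  rw [graphTransform, ← (graphTransformPoint_spec hα hαβ' hF hg m x).2 _ hxF, hxG]

theorem IsLipschitzFamily.graphTransform_and_graphTransformPoint (hα : ∀ m, 0 ≤ α m)
    (hαβ' : ∀ m, α m * β' (u m) < 1)
    (hF : ∀ m x y y', dist (F m x y) (F m x y') ≤ α m * dist y y')
    (hB : ∀ m (x₁ x₁' : X m) (y₂ y₂' : Y (u m)),
      dist y₂ y₂' ≤ β m * dist (F m x₁ y₂) (F m x₁' y₂') →
        dist (G m x₁ y₂) (G m x₁' y₂') ≤ β' m * dist x₁ x₁' ∧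
          dist (F m x₁ y₂) (F m x₁' y₂') ≤ lams m * dist x₁ x₁')
    (hββ' : ∀ m, β' (u m) ≤ β m) (hg : IsLipschitzFamily β' g) :
    IsLipschitzFamily β' (graphTransform F G g) ∧
      IsLipschitzFamily lams (graphTransformPoint F g) := by
  have h m (a b : X m) := dist_of_isFixedPt_le_of_cone (hB m) (hββ' m) (hg (u m))
    (graphTransformPoint_spec hα hαβ' hF hg m a).1 (graphTransformPoint_spec hα hαβ' hF hg m b).1
  exact ⟨fun m a b => (h m a b).1, fun m a b => (h m a b).2⟩

theorem isWeightedContraction_graphTransform {ε₁ η : M → ℝ} {c : ℝ} (hα : ∀ m, 0 ≤ α m)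
    (hlamu : ∀ m, 0 ≤ lamu m) (hβ' : ∀ m, 0 ≤ β' m) (hαβ' : ∀ m, α m * β' (u m) < 1)
    (hF : ∀ m x y y', dist (F m x y) (F m x y') ≤ α m * dist y y')
    (hG : ∀ m x y y', dist (G m x y) (G m x y') ≤ lamu m * dist y y')
    (hη : ∀ m, 0 ≤ η m) (hηu : ∀ m, η (u m) ≤ ε₁ m * η m)
    (hspec : ∀ m, lamu m * ε₁ m / (1 - α m * β' (u m)) ≤ c) :
    IsWeightedContraction (graphTransform F G) {g | IsLipschitzFamily β' g} η c := by
  intro g hg g' hg' D hD h m x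
  have hpos : 0 < 1 - α m * β' (u m) := by linarith [hαβ' m]
  have hDη : lamu m * (D * η (u m)) ≤ lamu m * ε₁ m * (D * η m) := by
    nlinarith [mul_le_mul_of_nonneg_left (hηu m) (mul_nonneg hD (hlamu m))]
  calc dist (graphTransform F G g m x) (graphTransform F G g' m x)
      ≤ lamu m * (D * η (u m)) / (1 - α m * β' (u m)) :=
        dist_comp_of_isFixedPt_le (hβ' (u m)) (hlamu m) (hαβ' m) (hF m x) (hG m x) (hg (u m))
          (graphTransformPoint_spec hα hαβ' hF hg m x).1
          (graphTransformPoint_spec hα hαβ' hF hg' m x).1 (h _ _)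
    _ ≤ lamu m * ε₁ m / (1 - α m * β' (u m)) * (D * η m) := by
        rw [div_mul_eq_mul_div]; exact div_le_div_of_nonneg_right hDη hpos.le
    _ ≤ c * (D * η m) := mul_le_mul_of_nonneg_right (hspec m) (mul_nonneg hD (hη m))
    _ = c * D * η m := by ring

theorem dist_graphTransformPoint_le {iX : ∀ m, X m} {iY : ∀ m, Y m} {η : M → ℝ} {C K : ℝ}
    (hα : ∀ m, 0 ≤ α m) (hαβ' : ∀ m, α m * β' (u m) < 1)
    (hF : ∀ m x y y', dist (F m x y) (F m x y') ≤ α m * dist y y')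
    (hg : IsLipschitzFamily β' g) (hαC : ∀ m, α m ≤ C) (hK : 0 ≤ K) (hη : ∀ m, 0 ≤ η m)
    (hgi : ∀ m x, dist (g m x) (iY m) ≤ K * η m)
    (hFi : ∀ m x, dist (F m x (iY (u m))) (iX (u m)) ≤ η (u m)) (m : M) (x : X m) :
    dist (graphTransformPoint F g m x) (iX (u m)) ≤ (C * K + 1) * η (u m) := by
  set ξ := graphTransformPoint F g m x
  have hKη : 0 ≤ K * η (u m) := mul_nonneg hK (hη _)
  calc dist ξ (iX (u m)) = dist (F m x (g (u m) ξ)) (iX (u m)) := by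
        rw [(graphTransformPoint_spec hα hαβ' hF hg m x).1]
    _ ≤ dist (F m x (g (u m) ξ)) (F m x (iY (u m))) + dist (F m x (iY (u m))) (iX (u m)) :=
        dist_triangle _ _ _
    _ ≤ α m * (K * η (u m)) + η (u m) :=
        add_le_add ((hF m x _ _).trans (mul_le_mul_of_nonneg_left (hgi _ _) (hα m))) (hFi m x)
    _ ≤ C * (K * η (u m)) + η (u m) := by gcongr; exact hαC m
    _ = (C * K + 1) * η (u m) := by ring

end GraphTransform

theorem second_existence_theorem_general
    {M : Type*} (u : M → M) (X Y : M → Type*)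
    [∀ m, MetricSpace (X m)] [∀ m, CompleteSpace (X m)]
    [∀ m, MetricSpace (Y m)] [∀ m, CompleteSpace (Y m)]
    (F : ∀ m, X m → Y (u m) → X (u m)) (G : ∀ m, X m → Y (u m) → Y m)
    (α lamu β β' lams ε ε₁ η : M → ℝ)
    (hα : ∀ m, 0 ≤ α m) (hlamu : ∀ m, 0 ≤ lamu m)
    (hβ'0 : ∀ m, 0 ≤ β' m)
    (hεε₁ : ∀ m, ε m ≤ ε₁ m)
    (hη0 : ∀ m, 0 ≤ η m)
    (iX : ∀ m, X m) (iY : ∀ m, Y m)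
    -- `i = (iX, iY)` is an ε-Y-bounded section of `H` with data `η`
    (hiG : ∀ m (x : X m), dist (G m x (iY (u m))) (iY m) ≤ η m)
    (hiη : ∀ m, η (u m) ≤ ε m * η m)
    -- (A′)(α, λ_u) condition
    (hA'F : ∀ m (x : X m) (y y' : Y (u m)),
      dist (F m x y) (F m x y') ≤ α m * dist y y')
    (hA'G : ∀ m (x : X m) (y y' : Y (u m)),
      dist (G m x y) (G m x y') ≤ lamu m * dist y y')
    -- (B)(β; β′, λ_s) condition
    (hB : ∀ m (x₁ x₁' : X m) (y₂ y₂' : Y (u m)),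
      dist y₂ y₂' ≤ β m * dist (F m x₁ y₂) (F m x₁' y₂') →
        dist (G m x₁ y₂) (G m x₁' y₂') ≤ β' m * dist x₁ x₁' ∧
          dist (F m x₁ y₂) (F m x₁' y₂') ≤ lams m * dist x₁ x₁')
    -- angle condition
    (hangle : ∃ c : ℝ, c < 1 ∧ ∀ m, α m * β' (u m) ≤ c)
    (hββ' : ∀ m, β' (u m) ≤ β m)
    (hbdd : ∃ C : ℝ, ∀ m, max (α m) (β m) ≤ C)
    -- spectral condition
    (hspec : ∃ c : ℝ, c < 1 ∧ ∀ m, lamu m * ε₁ m / (1 - α m * β' (u m)) ≤ c) :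
    ∃ (f : ∀ m, X m → Y m) (xs : ∀ m, X m → X (u m)) (K : ℝ),
      0 ≤ K ∧
      (∀ m,
        (∀ a b : X m, dist (f m a) (f m b) ≤ β' m * dist a b) ∧
        (∀ x : X m, dist (f m x) (iY m) ≤ K * η m) ∧
        (∀ a b : X m, dist (xs m a) (xs m b) ≤ lams m * dist a b) ∧
        ∀ x : X m,
          F m x (f (u m) (xs m x)) = xs m x ∧ G m x (f (u m) (xs m x)) = f m x) ∧
      ((∀ m (x : X m), dist (F m x (iY (u m))) (iX (u m)) ≤ η (u m)) →
        ∃ K₀ : ℝ, 0 ≤ K₀ ∧ ∀ m (x : X m), dist (xs m x) (iX (u m)) ≤ K₀ * η (u m)) ∧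
      ∀ (f' : ∀ m, X m → Y m) (xs' : ∀ m, X m → X (u m)) (K' : ℝ),
        0 ≤ K' →
        (∀ m,
          (∀ a b : X m, dist (f' m a) (f' m b) ≤ β' m * dist a b) ∧
          (∀ x : X m, dist (f' m x) (iY m) ≤ K' * η m) ∧
          (∀ a b : X m, dist (xs' m a) (xs' m b) ≤ lams m * dist a b) ∧
          ∀ x : X m,
            F m x (f' (u m) (xs' m x)) = xs' m x ∧
              G m x (f' (u m) (xs' m x)) = f' m x) →
        ∀ m, f' m = f m := by
  obtain ⟨c₁, hc₁, hαβ⟩ := hangle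
  obtain ⟨c, hc, hspec⟩ := hspec
  obtain ⟨C, hC⟩ := hbdd
  have : ∀ m, Nonempty (X m) := fun m => ⟨iX m⟩
  have hαβ' : ∀ m, α m * β' (u m) < 1 := fun m => (hαβ m).trans_lt hc₁
  have hηu : ∀ m, η (u m) ≤ ε₁ m * η m := fun m =>
    (hiη m).trans (mul_le_mul_of_nonneg_right (hεε₁ m) (hη0 m))
  have hc0 : 0 ≤ max c 0 := le_max_right c 0
  have hc1 : max c 0 < 1 := max_lt hc one_pos
  have hT := isWeightedContraction_graphTransform hα hlamu hβ'0 hαβ' hA'F hA'G hη0 hηu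
    fun m => (hspec m).trans (le_max_left c 0)
  have hLip {g} (hg : IsLipschitzFamily β' g) :=
    hg.graphTransform_and_graphTransformPoint hα hαβ' hA'F hB hββ'
  obtain ⟨f, hf, hTf, hfi⟩ := hT.exists_isFixedPt (fun g hg => (hLip hg).1)
    (isClosed_setOf_isLipschitzFamily β') hc0 hc1 (s₀ := fun m _ => iY m)
    (fun m a b => by rw [dist_self]; exact mul_nonneg (hβ'0 m) dist_nonneg) hiG
  have hK : 0 ≤ (1 - max c 0)⁻¹ := inv_nonneg.2 (sub_nonneg.2 hc1.le)
  refine ⟨f, graphTransformPoint F f, _, hK, fun m => ⟨hf m, hfi m, (hLip hf).2 m, fun x => ?_⟩,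
    fun hFi => ⟨max C 0 * (1 - max c 0)⁻¹ + 1, by positivity, ?_⟩, fun f' xs' K' hK' hf' => ?_⟩
  · exact ⟨(graphTransformPoint_spec hα hαβ' hA'F hf m x).1, congrFun (congrFun hTf m) x⟩
  · exact dist_graphTransformPoint_le hα hαβ' hA'F hf
      (fun m => ((le_max_left _ _).trans (hC m)).trans (le_max_left C 0)) hK hη0 hfi hFi
  · have hf'Lip : IsLipschitzFamily β' f' := fun m => (hf' m).1
    have hTf' := graphTransform_eq_self hα hαβ' hA'F hf'Lip fun m x => (hf' m).2.2.2 x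
    refine congrFun (hT.eq_of_isFixedPt (fun g hg => (hLip hg).1) hc0 hc1 hf'Lip hf hTf' hTf
      (add_nonneg hK' hK) fun m x => ?_)
    calc dist (f' m x) (f m x) ≤ dist (f' m x) (iY m) + dist (f m x) (iY m) :=
          dist_triangle_right _ _ _
      _ ≤ (K' + (1 - max c 0)⁻¹) * η m := by linarith [(hf' m).2.1 x, hfi m x]

/-- Second existence theorem for invariant graphs. -/
theorem second_existence_theorem
    {M : Type*} (u : M → M) (X Y : M → Type*)
    [∀ m, MetricSpace (X m)] [∀ m, CompleteSpace (X m)]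
    [∀ m, MetricSpace (Y m)] [∀ m, CompleteSpace (Y m)]
    (F : ∀ m, X m → Y (u m) → X (u m)) (G : ∀ m, X m → Y (u m) → Y m)
    (α lamu β β' lams ε ε₁ η : M → ℝ)
    (hα : ∀ m, 0 ≤ α m) (hlamu : ∀ m, 0 ≤ lamu m) (hβ : ∀ m, 0 ≤ β m)
    (hβ'0 : ∀ m, 0 ≤ β' m) (hlams : ∀ m, 0 ≤ lams m)
    (hε0 : ∀ m, 0 ≤ ε m) (hε₁0 : ∀ m, 0 ≤ ε₁ m) (hεε₁ : ∀ m, ε m ≤ ε₁ m)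
    (hη0 : ∀ m, 0 ≤ η m)
    (iX : ∀ m, X m) (iY : ∀ m, Y m)
    -- `i = (iX, iY)` is an ε-Y-bounded section of `H` with data `η`
    (hiG : ∀ m (x : X m), dist (G m x (iY (u m))) (iY m) ≤ η m)
    (hiη : ∀ m, η (u m) ≤ ε m * η m)
    -- (A′)(α, λ_u) condition
    (hA'F : ∀ m (x : X m) (y y' : Y (u m)),
      dist (F m x y) (F m x y') ≤ α m * dist y y')
    (hA'G : ∀ m (x : X m) (y y' : Y (u m)),
      dist (G m x y) (G m x y') ≤ lamu m * dist y y')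
    -- (B)(β; β′, λ_s) condition
    (hB : ∀ m (x₁ x₁' : X m) (y₂ y₂' : Y (u m)),
      dist y₂ y₂' ≤ β m * dist (F m x₁ y₂) (F m x₁' y₂') →
        dist (G m x₁ y₂) (G m x₁' y₂') ≤ β' m * dist x₁ x₁' ∧
          dist (F m x₁ y₂) (F m x₁' y₂') ≤ lams m * dist x₁ x₁')
    -- angle condition
    (hangle : ∃ c : ℝ, c < 1 ∧ ∀ m, α m * β' (u m) ≤ c)
    (hββ' : ∀ m, β' (u m) ≤ β m)
    (hbdd : ∃ C : ℝ, ∀ m, max (α m) (β m) ≤ C)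
    -- spectral condition
    (hspec : ∃ c : ℝ, c < 1 ∧ ∀ m, lamu m * ε₁ m / (1 - α m * β' (u m)) ≤ c) :
    ∃ (f : ∀ m, X m → Y m) (xs : ∀ m, X m → X (u m)) (K : ℝ),
      0 ≤ K ∧
      (∀ m,
        (∀ a b : X m, dist (f m a) (f m b) ≤ β' m * dist a b) ∧
        (∀ x : X m, dist (f m x) (iY m) ≤ K * η m) ∧
        (∀ a b : X m, dist (xs m a) (xs m b) ≤ lams m * dist a b) ∧
        ∀ x : X m,
          F m x (f (u m) (xs m x)) = xs m x ∧ G m x (f (u m) (xs m x)) = f m x) ∧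
      ((∀ m (x : X m), dist (F m x (iY (u m))) (iX (u m)) ≤ η (u m)) →
        ∃ K₀ : ℝ, 0 ≤ K₀ ∧ ∀ m (x : X m), dist (xs m x) (iX (u m)) ≤ K₀ * η (u m)) ∧
      ∀ (f' : ∀ m, X m → Y m) (xs' : ∀ m, X m → X (u m)) (K' : ℝ),
        0 ≤ K' →
        (∀ m,
          (∀ a b : X m, dist (f' m a) (f' m b) ≤ β' m * dist a b) ∧
          (∀ x : X m, dist (f' m x) (iY m) ≤ K' * η m) ∧
          (∀ a b : X m, dist (xs' m a) (xs' m b) ≤ lams m * dist a b) ∧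
          ∀ x : X m,
            F m x (f' (u m) (xs' m x)) = xs' m x ∧
              G m x (f' (u m) (xs' m x)) = f' m x) →
        ∀ m, f' m = f m :=
  second_existence_theorem_general u X Y F G α lamu β β' lams ε ε₁ η hα hlamu hβ'0 hεε₁ hη0 iX iY
    hiG hiη hA'F hA'G hB hangle hββ' hbdd hspec
end

section
/- Graph transform lemma. Let X₁, Y₁, X₂, Y₂ be complete metric spaces, let F : X₁ × Y₂ → X₂ and G : X₁ × Y₂ → Y₁, and suppose the correspondence H ∼ (F,G) satisfies the mixed (A′)(α,λ_u)(B)(β;β′,λ_s) condition for constants α, λ_u, β, β′, λ_s ≥ 0. Let f₂ : X₂ → Y₂ satisfy Lip f₂ ≤ β̂, where α·β̂ < 1 and β̂ ≤ β. Then for every x ∈ X₁ there is a unique point x₁(x) ∈ X₂ such that F(x, f₂(x₁(x))) = x₁(x); moreover, defining f₁(x) = G(x, f₂(x₁(x))), the resulting maps satisfy Lip x₁ ≤ λ_s and Lip f₁ ≤ β′. -/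
/-!
For fixed `x`, the map `z ↦ F x (f₂ z)` is an `α * bh`-contraction of the complete space `X₂`, so
Banach's theorem gives the unique point `x₁(x)`. For two such fixed points, `Lip f₂ ≤ bh ≤ β`
places the pair `(f₂ (x₁ a), f₂ (x₁ b))` in the `β`-cone over `(x₁ a, x₁ b)`, which is exactly the
hypothesis of (B); its two conclusions are the Lipschitz bounds for `x₁` and `f₁`.
-/

theorem contractingWith_comp_of_dist_le_mul {X Y : Type*} [MetricSpace X] [MetricSpace Y]
    {g : Y → X} {f : X → Y} {α β : ℝ} (hα : 0 ≤ α)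
    (hg : ∀ y y', dist (g y) (g y') ≤ α * dist y y')
    (hf : ∀ x x', dist (f x) (f x') ≤ β * dist x x') (hαβ : α * β < 1) :
    ContractingWith (α * β).toNNReal (g ∘ f) := by
  refine ⟨Real.toNNReal_lt_one.2 hαβ, ?_⟩
  rw [Real.toNNReal_mul hα]
  exact (LipschitzWith.of_dist_le' hg).comp (LipschitzWith.of_dist_le' hf)

theorem dist_le_of_fixed_points_of_cone {X₁ Y₁ X₂ Y₂ : Type*}
    [MetricSpace X₁] [MetricSpace Y₁] [MetricSpace X₂] [MetricSpace Y₂]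
    {F : X₁ → Y₂ → X₂} {G : X₁ → Y₂ → Y₁} {β β' lams bh : ℝ}
    (hB : ∀ (x₁ x₁' : X₁) (y₂ y₂' : Y₂),
      dist y₂ y₂' ≤ β * dist (F x₁ y₂) (F x₁' y₂') →
        dist (G x₁ y₂) (G x₁' y₂') ≤ β' * dist x₁ x₁' ∧
          dist (F x₁ y₂) (F x₁' y₂') ≤ lams * dist x₁ x₁')
    {f₂ : X₂ → Y₂} (hf₂ : ∀ a b : X₂, dist (f₂ a) (f₂ b) ≤ bh * dist a b) (hbhβ : bh ≤ β)
    {a b : X₁} {za zb : X₂} (hza : F a (f₂ za) = za) (hzb : F b (f₂ zb) = zb) :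
    dist (G a (f₂ za)) (G b (f₂ zb)) ≤ β' * dist a b ∧ dist za zb ≤ lams * dist a b := by
  have hcone : dist (f₂ za) (f₂ zb) ≤ β * dist (F a (f₂ za)) (F b (f₂ zb)) := by
    rw [hza, hzb]
    exact (hf₂ za zb).trans (mul_le_mul_of_nonneg_right hbhβ dist_nonneg)
  simpa only [hza, hzb] using hB a b _ _ hcone

theorem graph_transform_lemma_general
    {X₁ Y₁ X₂ Y₂ : Type*}
    [MetricSpace X₁]
    [MetricSpace Y₁]
    [MetricSpace X₂] [CompleteSpace X₂] [Nonempty X₂]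
    [MetricSpace Y₂]
    (F : X₁ → Y₂ → X₂) (G : X₁ → Y₂ → Y₁)
    (α β β' lams bh : ℝ)
    (hα : 0 ≤ α)
    -- (A′)(α, λ_u) condition
    (hA'F : ∀ (x : X₁) (y y' : Y₂), dist (F x y) (F x y') ≤ α * dist y y')
    -- (B)(β; β′, λ_s) condition
    (hB : ∀ (x₁ x₁' : X₁) (y₂ y₂' : Y₂),
      dist y₂ y₂' ≤ β * dist (F x₁ y₂) (F x₁' y₂') →
        dist (G x₁ y₂) (G x₁' y₂') ≤ β' * dist x₁ x₁' ∧
          dist (F x₁ y₂) (F x₁' y₂') ≤ lams * dist x₁ x₁')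
    (f₂ : X₂ → Y₂) (hf₂ : ∀ a b : X₂, dist (f₂ a) (f₂ b) ≤ bh * dist a b)
    (hαbh : α * bh < 1) (hbhβ : bh ≤ β) :
    ∃ xfun : X₁ → X₂,
      (∀ x : X₁, F x (f₂ (xfun x)) = xfun x) ∧
      (∀ (x : X₁) (z : X₂), F x (f₂ z) = z → z = xfun x) ∧
      (∀ a b : X₁, dist (xfun a) (xfun b) ≤ lams * dist a b) ∧
      (∀ a b : X₁, dist (G a (f₂ (xfun a))) (G b (f₂ (xfun b))) ≤ β' * dist a b) := by
  have hcontr (x : X₁) : ContractingWith (α * bh).toNNReal (F x ∘ f₂) :=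
    contractingWith_comp_of_dist_le_mul hα (hA'F x) hf₂ hαbh
  have hfixed (x : X₁) : F x (f₂ ((hcontr x).fixedPoint _)) = (hcontr x).fixedPoint _ :=
    (hcontr x).fixedPoint_isFixedPt
  have hbounds (a b : X₁) :=
    dist_le_of_fixed_points_of_cone hB hf₂ hbhβ (hfixed a) (hfixed b)
  exact ⟨fun x => (hcontr x).fixedPoint _, hfixed, fun x _ hz => (hcontr x).fixedPoint_unique hz,
    fun a b => (hbounds a b).2, fun a b => (hbounds a b).1⟩

/-- Graph transform lemma. -/
theorem graph_transform_lemma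
    {X₁ Y₁ X₂ Y₂ : Type*}
    [MetricSpace X₁] [CompleteSpace X₁]
    [MetricSpace Y₁] [CompleteSpace Y₁]
    [MetricSpace X₂] [CompleteSpace X₂] [Nonempty X₂]
    [MetricSpace Y₂] [CompleteSpace Y₂]
    (F : X₁ → Y₂ → X₂) (G : X₁ → Y₂ → Y₁)
    (α lamu β β' lams bh : ℝ)
    (hα : 0 ≤ α) (hlamu : 0 ≤ lamu) (hβ : 0 ≤ β) (hβ'0 : 0 ≤ β') (hlams : 0 ≤ lams)
    (hbh : 0 ≤ bh)
    -- (A′)(α, λ_u) condition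
    (hA'F : ∀ (x : X₁) (y y' : Y₂), dist (F x y) (F x y') ≤ α * dist y y')
    (hA'G : ∀ (x : X₁) (y y' : Y₂), dist (G x y) (G x y') ≤ lamu * dist y y')
    -- (B)(β; β′, λ_s) condition
    (hB : ∀ (x₁ x₁' : X₁) (y₂ y₂' : Y₂),
      dist y₂ y₂' ≤ β * dist (F x₁ y₂) (F x₁' y₂') →
        dist (G x₁ y₂) (G x₁' y₂') ≤ β' * dist x₁ x₁' ∧
          dist (F x₁ y₂) (F x₁' y₂') ≤ lams * dist x₁ x₁')
    (f₂ : X₂ → Y₂) (hf₂ : ∀ a b : X₂, dist (f₂ a) (f₂ b) ≤ bh * dist a b)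
    (hαbh : α * bh < 1) (hbhβ : bh ≤ β) :
    ∃ xfun : X₁ → X₂,
      (∀ x : X₁, F x (f₂ (xfun x)) = xfun x) ∧
      (∀ (x : X₁) (z : X₂), F x (f₂ z) = z → z = xfun x) ∧
      (∀ a b : X₁, dist (xfun a) (xfun b) ≤ lams * dist a b) ∧
      (∀ a b : X₁, dist (G a (f₂ (xfun a))) (G b (f₂ (xfun b))) ≤ β' * dist a b) :=
  graph_transform_lemma_general F G α β β' lams bh hα hA'F hB f₂ hf₂ hαbh hbhβ
end

section
/- Basic estimates for the graph transform. Let X₁, Y₁, X₂, Y₂ be complete metric spaces and let H ∼ (F,G) satisfy the mixed (A′)(α,λ_u)(B)(β;β′,λ_s) condition. Let f₂ : X₂ → Y₂ with Lip f₂ ≤ β̂, α·β̂ < 1, β̂ ≤ β, and let x₁ : X₁ → X₂ and f₁ : X₁ → Y₁ be the maps given by the graph transform. Suppose points (a₁,b₁) ∈ X₁ × Y₁ and (a₂,b₂) ∈ X₂ × Y₂ and constants η₁, η₂, C₂ ≥ 0 satisfy d(F(a₁,b₂), a₂) ≤ η₁, d(G(a₁,b₂), b₁) ≤ η₂, and d(f₂(a₂),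 b₂) ≤ C₂. Then d(f₁(a₁), b₁) ≤ λ_u·(β̂·η₁ + C₂)/(1 − α·β̂) + η₂ and d(x₁(a₁), a₂) ≤ (α·C₂ + η₁)/(1 − α·β̂). In particular, if b₁ = G(a₁,b₂), a₂ = F(a₁,b₂) and b₂ = f₂(a₂), then b₁ = f₁(a₁) and a₂ = x₁(a₁). -/
/-!
Fix `a₁` and write `x := x₁ a₁`. Since `x = F a₁ (f₂ x)`, the triangle inequality through `F a₁ b₂`
and `f₂ a₂` gives `d(x, a₂) ≤ α (β̂ d(x, a₂) + C₂) + η₁`, which solves to the bound on `d(x, a₂)`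
because `α β̂ < 1`. Running the same triangle inequality through `G a₁ b₂` bounds `d(f₁ a₁, b₁)`.
With `η₁ = η₂ = C₂ = 0` both bounds vanish, which is the final assertion.
-/

section GraphTransform

variable {X Y Z : Type*} [PseudoMetricSpace X] [PseudoMetricSpace Y] [PseudoMetricSpace Z]

theorem dist_apply_le_mul_dist_add {g : X → Y} {K : ℝ}
    (hg : ∀ a b, dist (g a) (g b) ≤ K * dist a b) (x a : X) (b : Y) :
    dist (g x) b ≤ K * dist x a + dist (g a) b :=
  (dist_triangle _ (g a) _).trans (add_le_add_left (hg x a) _)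

theorem dist_fixedPoint_le {φ : Y → X} {f : X → Y} {α bh η₁ C : ℝ} (hαbh : α * bh < 1)
    (hα : 0 ≤ α) (hφ : ∀ y y', dist (φ y) (φ y') ≤ α * dist y y')
    (hf : ∀ a b, dist (f a) (f b) ≤ bh * dist a b) {x a : X} {b : Y} (hx : φ (f x) = x)
    (h1 : dist (φ b) a ≤ η₁) (h3 : dist (f a) b ≤ C) :
    dist x a ≤ (α * C + η₁) / (1 - α * bh) := by
  have hfx : dist (f x) b ≤ bh * dist x a + C := by
    linarith [dist_apply_le_mul_dist_add hf x a b]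
  have hself : dist x a ≤ α * (bh * dist x a + C) + η₁ :=
    calc dist x a = dist (φ (f x)) a := by rw [hx]
      _ ≤ α * dist (f x) b + dist (φ b) a := dist_apply_le_mul_dist_add hφ _ _ _
      _ ≤ α * (bh * dist x a + C) + η₁ := by gcongr
  rw [le_div_iff₀ (by linarith)]
  linarith

theorem dist_apply_fixedPoint_le {φ : Y → X} {ψ : Y → Z} {f : X → Y} {α lamu bh η₁ η₂ C : ℝ}
    (hαbh : α * bh < 1) (hα : 0 ≤ α) (hlamu : 0 ≤ lamu) (hbh : 0 ≤ bh)
    (hφ : ∀ y y', dist (φ y) (φ y') ≤ α * dist y y')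
    (hψ : ∀ y y', dist (ψ y) (ψ y') ≤ lamu * dist y y')
    (hf : ∀ a b, dist (f a) (f b) ≤ bh * dist a b) {x a : X} {b : Y} {c : Z} (hx : φ (f x) = x)
    (h1 : dist (φ b) a ≤ η₁) (h2 : dist (ψ b) c ≤ η₂) (h3 : dist (f a) b ≤ C) :
    dist (ψ (f x)) c ≤ lamu * (bh * η₁ + C) / (1 - α * bh) + η₂ := by
  have hpos : 0 < 1 - α * bh := by linarith
  have hxa := dist_fixedPoint_le hαbh hα hφ hf hx h1 h3
  have hfx : dist (f x) b ≤ (bh * η₁ + C) / (1 - α * bh) :=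
    calc dist (f x) b ≤ bh * dist x a + dist (f a) b := dist_apply_le_mul_dist_add hf x a b
      _ ≤ bh * ((α * C + η₁) / (1 - α * bh)) + C := by gcongr
      _ = (bh * η₁ + C) / (1 - α * bh) := by
          rw [mul_div_assoc', div_add' _ _ _ hpos.ne']; congr 1; ring
  calc dist (ψ (f x)) c ≤ lamu * dist (f x) b + dist (ψ b) c := dist_apply_le_mul_dist_add hψ _ _ _
    _ ≤ lamu * ((bh * η₁ + C) / (1 - α * bh)) + η₂ := by gcongr
    _ = lamu * (bh * η₁ + C) / (1 - α * bh) + η₂ := by rw [mul_div_assoc]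

end GraphTransform

theorem graph_transform_estimates_general
    {X₁ Y₁ X₂ Y₂ : Type*}
    [MetricSpace X₁]
    [MetricSpace Y₁]
    [MetricSpace X₂]
    [MetricSpace Y₂]
    (F : X₁ → Y₂ → X₂) (G : X₁ → Y₂ → Y₁)
    (α lamu bh : ℝ)
    (hα : 0 ≤ α) (hlamu : 0 ≤ lamu)
    (hbh : 0 ≤ bh)
    -- (A′)(α, λ_u) condition
    (hA'F : ∀ (x : X₁) (y y' : Y₂), dist (F x y) (F x y') ≤ α * dist y y')
    (hA'G : ∀ (x : X₁) (y y' : Y₂), dist (G x y) (G x y') ≤ lamu * dist y y')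
    (f₂ : X₂ → Y₂) (hf₂ : ∀ a b : X₂, dist (f₂ a) (f₂ b) ≤ bh * dist a b)
    (hαbh : α * bh < 1)
    -- the maps produced by the graph transform from f₂
    (x₁ : X₁ → X₂) (f₁ : X₁ → Y₁)
    (hx₁ : ∀ x : X₁, F x (f₂ (x₁ x)) = x₁ x)
    (hf₁ : ∀ x : X₁, f₁ x = G x (f₂ (x₁ x)))
    (a₁ : X₁) (b₁ : Y₁) (a₂ : X₂) (b₂ : Y₂) (η₁ η₂ C₂ : ℝ)
    (h1 : dist (F a₁ b₂) a₂ ≤ η₁)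
    (h2 : dist (G a₁ b₂) b₁ ≤ η₂)
    (h3 : dist (f₂ a₂) b₂ ≤ C₂) :
    dist (f₁ a₁) b₁ ≤ lamu * (bh * η₁ + C₂) / (1 - α * bh) + η₂ ∧
    dist (x₁ a₁) a₂ ≤ (α * C₂ + η₁) / (1 - α * bh) ∧
    (b₁ = G a₁ b₂ → a₂ = F a₁ b₂ → b₂ = f₂ a₂ → b₁ = f₁ a₁ ∧ a₂ = x₁ a₁) := by
  have hF := hA'F a₁
  have hG := hA'G a₁
  refine ⟨hf₁ a₁ ▸ dist_apply_fixedPoint_le hαbh hα hlamu hbh hF hG hf₂ (hx₁ a₁) h1 h2 h3,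
    dist_fixedPoint_le hαbh hα hF hf₂ (hx₁ a₁) h1 h3, ?_⟩
  intro hb₁ ha₂ hb₂
  have h1₀ : dist (F a₁ b₂) a₂ ≤ 0 := (dist_eq_zero.2 ha₂.symm).le
  have h2₀ : dist (G a₁ b₂) b₁ ≤ 0 := (dist_eq_zero.2 hb₁.symm).le
  have h3₀ : dist (f₂ a₂) b₂ ≤ 0 := (dist_eq_zero.2 hb₂.symm).le
  have hx := dist_fixedPoint_le hαbh hα hF hf₂ (hx₁ a₁) h1₀ h3₀
  have hf := dist_apply_fixedPoint_le hαbh hα hlamu hbh hF hG hf₂ (hx₁ a₁) h1₀ h2₀ h3₀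
  simp only [mul_zero, add_zero, zero_div, dist_le_zero] at hx hf
  exact ⟨(hf₁ a₁ ▸ hf).symm, hx.symm⟩

/-- Basic estimates for the graph transform. -/
theorem graph_transform_estimates
    {X₁ Y₁ X₂ Y₂ : Type*}
    [MetricSpace X₁] [CompleteSpace X₁]
    [MetricSpace Y₁] [CompleteSpace Y₁]
    [MetricSpace X₂] [CompleteSpace X₂]
    [MetricSpace Y₂] [CompleteSpace Y₂]
    (F : X₁ → Y₂ → X₂) (G : X₁ → Y₂ → Y₁)
    (α lamu β β' lams bh : ℝ)
    (hα : 0 ≤ α) (hlamu : 0 ≤ lamu) (hβ : 0 ≤ β) (hβ'0 : 0 ≤ β') (hlams : 0 ≤ lams)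
    (hbh : 0 ≤ bh)
    -- (A′)(α, λ_u) condition
    (hA'F : ∀ (x : X₁) (y y' : Y₂), dist (F x y) (F x y') ≤ α * dist y y')
    (hA'G : ∀ (x : X₁) (y y' : Y₂), dist (G x y) (G x y') ≤ lamu * dist y y')
    -- (B)(β; β′, λ_s) condition
    (hB : ∀ (x₁ x₁' : X₁) (y₂ y₂' : Y₂),
      dist y₂ y₂' ≤ β * dist (F x₁ y₂) (F x₁' y₂') →
        dist (G x₁ y₂) (G x₁' y₂') ≤ β' * dist x₁ x₁' ∧
          dist (F x₁ y₂) (F x₁' y₂') ≤ lams * dist x₁ x₁')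
    (f₂ : X₂ → Y₂) (hf₂ : ∀ a b : X₂, dist (f₂ a) (f₂ b) ≤ bh * dist a b)
    (hαbh : α * bh < 1) (hbhβ : bh ≤ β)
    -- the maps produced by the graph transform from f₂
    (x₁ : X₁ → X₂) (f₁ : X₁ → Y₁)
    (hx₁ : ∀ x : X₁, F x (f₂ (x₁ x)) = x₁ x)
    (hf₁ : ∀ x : X₁, f₁ x = G x (f₂ (x₁ x)))
    (a₁ : X₁) (b₁ : Y₁) (a₂ : X₂) (b₂ : Y₂) (η₁ η₂ C₂ : ℝ)
    (hη₁0 : 0 ≤ η₁) (hη₂0 : 0 ≤ η₂) (hC₂0 : 0 ≤ C₂)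
    (h1 : dist (F a₁ b₂) a₂ ≤ η₁)
    (h2 : dist (G a₁ b₂) b₁ ≤ η₂)
    (h3 : dist (f₂ a₂) b₂ ≤ C₂) :
    dist (f₁ a₁) b₁ ≤ lamu * (bh * η₁ + C₂) / (1 - α * bh) + η₂ ∧
    dist (x₁ a₁) a₂ ≤ (α * C₂ + η₁) / (1 - α * bh) ∧
    (b₁ = G a₁ b₂ → a₂ = F a₁ b₂ → b₂ = f₂ a₂ → b₁ = f₁ a₁ ∧ a₂ = x₁ a₁) :=
  graph_transform_estimates_general F G α lamu bh hα hlamu hbh hA'F hA'G f₂ hf₂ hαbh x₁ f₁ hx₁ hf₁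
    a₁ b₁ a₂ b₂ η₁ η₂ C₂ h1 h2 h3
end

section
/- Comparison estimates for two graph transforms. Let X₁, Y₁, X₂, Y₂ be complete metric spaces and let H ∼ (F,G) satisfy the mixed (A′)(α,λ_u)(B)(β;β′,λ_s) condition. Suppose α·β̂ < 1 and β̂ ≤ β, and let f₂, f₂′ : X₂ → Y₂ both have Lipschitz constant ≤ β̂; let (x₁, f₁) and (x₁′, f₁′) be the maps produced by the graph transform from f₂ and f₂′ respectively. Then for every x ∈ X₁: d(x₁(x), x₁′(x)) ≤ α·d(f₂(x₁(x)), f₂′(x₁′(x))); d(f₂(x₁(x)), f₂′(x₁′(x))) ≤ d(f₂(x₁(x)), f₂′(x₁(x))) + β̂·d(x₁(x), x₁′(x)); d(f₂(x₁(x)), f₂′(x₁′(x))) ≤ (1/(1 − α·β̂))·d(f₂(x₁(x)), f₂′(x₁(x))); and d(f₁(x), f₁′(x)) ≤ λ_u·d(f₂(x₁(x)), f₂′(x₁′(x))) ≤ (λ_u/(1 − α·β̂))·d(f₂(x₁(x)), f₂′(x₁(x))). -/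
/-!
Since `x₁ x` and `x₁' x` are fixed points of `F x ∘ f₂` and `F x ∘ f₂'`, the contraction
`Lip F(x,·) ≤ α` bounds their distance by `α` times the distance `D` of the `Y₂`-values, while
`Lip f₂' ≤ β̂` bounds `D` by the distance of `f₂, f₂'` at the single point `x₁ x` plus `β̂` times
that same distance. Together `D ≤ d(f₂(x₁ x), f₂'(x₁ x)) + αβ̂ D`, and `αβ̂ < 1` absorbs the last
term. The estimate for `f₁` follows from `Lip G(x,·) ≤ λ_u`.
-/

lemma dist_le_dist_add_mul_dist {X Y : Type*} [PseudoMetricSpace X] [PseudoMetricSpace Y]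
    (f g : X → Y) {K : ℝ} (hg : ∀ a b, dist (g a) (g b) ≤ K * dist a b) (a b : X) :
    dist (f a) (g b) ≤ dist (f a) (g a) + K * dist a b :=
  (dist_triangle _ _ _).trans (add_le_add_right (hg a b) _)

lemma le_one_div_one_sub_mul_mul {D e d a b : ℝ} (hb : 0 ≤ b) (hab : a * b < 1)
    (hD : D ≤ e + b * d) (hd : d ≤ a * D) : D ≤ 1 / (1 - a * b) * e := by
  have hpos : 0 < 1 - a * b := by linarith
  have hbd : b * d ≤ a * b * D := by nlinarith
  rw [one_div_mul_eq_div, le_div_iff₀ hpos]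
  nlinarith

theorem graph_transform_comparison_general
    {X₁ Y₁ X₂ Y₂ : Type*}
    [MetricSpace X₁]
    [MetricSpace Y₁]
    [MetricSpace X₂]
    [MetricSpace Y₂]
    (F : X₁ → Y₂ → X₂) (G : X₁ → Y₂ → Y₁)
    (α lamu bh : ℝ)
    (hlamu : 0 ≤ lamu)
    (hbh : 0 ≤ bh)
    -- (A′)(α, λ_u) condition
    (hA'F : ∀ (x : X₁) (y y' : Y₂), dist (F x y) (F x y') ≤ α * dist y y')
    (hA'G : ∀ (x : X₁) (y y' : Y₂), dist (G x y) (G x y') ≤ lamu * dist y y')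
    (hαbh : α * bh < 1)
    (f₂ f₂' : X₂ → Y₂)
    (hf₂' : ∀ a b : X₂, dist (f₂' a) (f₂' b) ≤ bh * dist a b)
    -- the maps produced by the graph transform from f₂ and f₂'
    (x₁ : X₁ → X₂) (f₁ : X₁ → Y₁)
    (hx₁ : ∀ x : X₁, F x (f₂ (x₁ x)) = x₁ x)
    (hf₁ : ∀ x : X₁, f₁ x = G x (f₂ (x₁ x)))
    (x₁' : X₁ → X₂) (f₁' : X₁ → Y₁)
    (hx₁' : ∀ x : X₁, F x (f₂' (x₁' x)) = x₁' x)
    (hf₁' : ∀ x : X₁, f₁' x = G x (f₂' (x₁' x))) :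
    ∀ x : X₁,
      dist (x₁ x) (x₁' x) ≤ α * dist (f₂ (x₁ x)) (f₂' (x₁' x)) ∧
      dist (f₂ (x₁ x)) (f₂' (x₁' x)) ≤
        dist (f₂ (x₁ x)) (f₂' (x₁ x)) + bh * dist (x₁ x) (x₁' x) ∧
      dist (f₂ (x₁ x)) (f₂' (x₁' x)) ≤
        (1 / (1 - α * bh)) * dist (f₂ (x₁ x)) (f₂' (x₁ x)) ∧
      dist (f₁ x) (f₁' x) ≤ lamu * dist (f₂ (x₁ x)) (f₂' (x₁' x)) ∧
      lamu * dist (f₂ (x₁ x)) (f₂' (x₁' x)) ≤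
        (lamu / (1 - α * bh)) * dist (f₂ (x₁ x)) (f₂' (x₁ x)) := by
  intro x
  have hx : dist (x₁ x) (x₁' x) ≤ α * dist (f₂ (x₁ x)) (f₂' (x₁' x)) := by
    simpa only [hx₁ x, hx₁' x] using hA'F x (f₂ (x₁ x)) (f₂' (x₁' x))
  have hy := dist_le_dist_add_mul_dist f₂ f₂' hf₂' (x₁ x) (x₁' x)
  have hy' := le_one_div_one_sub_mul_mul hbh hαbh hy hx
  refine ⟨hx, hy, hy', by simpa only [hf₁ x, hf₁' x] using hA'G x _ _, ?_⟩
  rw [div_eq_mul_one_div, mul_assoc]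
  exact mul_le_mul_of_nonneg_left hy' hlamu

/-- Comparison estimates for two graph transforms. -/
theorem graph_transform_comparison
    {X₁ Y₁ X₂ Y₂ : Type*}
    [MetricSpace X₁] [CompleteSpace X₁]
    [MetricSpace Y₁] [CompleteSpace Y₁]
    [MetricSpace X₂] [CompleteSpace X₂]
    [MetricSpace Y₂] [CompleteSpace Y₂]
    (F : X₁ → Y₂ → X₂) (G : X₁ → Y₂ → Y₁)
    (α lamu β β' lams bh : ℝ)
    (hα : 0 ≤ α) (hlamu : 0 ≤ lamu) (hβ : 0 ≤ β) (hβ'0 : 0 ≤ β') (hlams : 0 ≤ lams)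
    (hbh : 0 ≤ bh)
    -- (A′)(α, λ_u) condition
    (hA'F : ∀ (x : X₁) (y y' : Y₂), dist (F x y) (F x y') ≤ α * dist y y')
    (hA'G : ∀ (x : X₁) (y y' : Y₂), dist (G x y) (G x y') ≤ lamu * dist y y')
    -- (B)(β; β′, λ_s) condition
    (hB : ∀ (x₁ x₁' : X₁) (y₂ y₂' : Y₂),
      dist y₂ y₂' ≤ β * dist (F x₁ y₂) (F x₁' y₂') →
        dist (G x₁ y₂) (G x₁' y₂') ≤ β' * dist x₁ x₁' ∧
          dist (F x₁ y₂) (F x₁' y₂') ≤ lams * dist x₁ x₁')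
    (hαbh : α * bh < 1) (hbhβ : bh ≤ β)
    (f₂ f₂' : X₂ → Y₂)
    (hf₂ : ∀ a b : X₂, dist (f₂ a) (f₂ b) ≤ bh * dist a b)
    (hf₂' : ∀ a b : X₂, dist (f₂' a) (f₂' b) ≤ bh * dist a b)
    -- the maps produced by the graph transform from f₂ and f₂'
    (x₁ : X₁ → X₂) (f₁ : X₁ → Y₁)
    (hx₁ : ∀ x : X₁, F x (f₂ (x₁ x)) = x₁ x)
    (hf₁ : ∀ x : X₁, f₁ x = G x (f₂ (x₁ x)))
    (x₁' : X₁ → X₂) (f₁' : X₁ → Y₁)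
    (hx₁' : ∀ x : X₁, F x (f₂' (x₁' x)) = x₁' x)
    (hf₁' : ∀ x : X₁, f₁' x = G x (f₂' (x₁' x))) :
    ∀ x : X₁,
      dist (x₁ x) (x₁' x) ≤ α * dist (f₂ (x₁ x)) (f₂' (x₁' x)) ∧
      dist (f₂ (x₁ x)) (f₂' (x₁' x)) ≤
        dist (f₂ (x₁ x)) (f₂' (x₁ x)) + bh * dist (x₁ x) (x₁' x) ∧
      dist (f₂ (x₁ x)) (f₂' (x₁' x)) ≤
        (1 / (1 - α * bh)) * dist (f₂ (x₁ x)) (f₂' (x₁ x)) ∧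
      dist (f₁ x) (f₁' x) ≤ lamu * dist (f₂ (x₁ x)) (f₂' (x₁' x)) ∧
      lamu * dist (f₂ (x₁ x)) (f₂' (x₁' x)) ≤
        (lamu / (1 - α * bh)) * dist (f₂ (x₁ x)) (f₂' (x₁ x)) :=
  graph_transform_comparison_general F G α lamu bh hlamu hbh hA'F hA'G hαbh f₂ f₂' hf₂' x₁ f₁ hx₁
    hf₁ x₁' f₁' hx₁' hf₁'
end

section
/- Composition of correspondences with generating maps. Let X₁, Y₁, X₂, Y₂, X₃, Y₃ be metric spaces with Y₂ complete, and let F₁ : X₁ × Y₂ → X₂, G₁ : X₁ × Y₂ → Y₁, F₂ : X₂ × Y₃ → X₃, G₂ : X₂ × Y₃ → Y₂ be maps. Suppose there are constants a, b ≥ 0 with a·b < 1 such that Lip(x₂ ↦ G₂(x₂,y₃)) ≤ a for every y₃ ∈ Y₃ and Lip(y₂ ↦ F₁(x₁,y₂)) ≤ b for every x₁ ∈ X₁. Then: (i) for every (x₁,y₃) ∈ X₁ × Y₃ there is a unique point y₂(x₁,y₃) ∈ Y₂ satisfying y₂(x₁,y₃) = G₂(F₁(x₁, y₂(x₁,y₃)),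 y₃); (ii) defining F(x₁,y₃) = F₂(F₁(x₁, y₂(x₁,y₃)), y₃) and G(x₁,y₃) = G₁(x₁, y₂(x₁,y₃)), the pair (F,G) is a generating map of the composition H₂ ∘ H₁, i.e. for all (x₁,y₁) ∈ X₁ × Y₁ and (x₃,y₃) ∈ X₃ × Y₃, there exists (x₂,y₂) ∈ X₂ × Y₂ with y₁ = G₁(x₁,y₂), x₂ = F₁(x₁,y₂), y₂ = G₂(x₂,y₃) and x₃ = F₂(x₂,y₃) if and only if y₁ = G(x₁,y₃) and x₃ = F(x₁,y₃). -/
/-!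
For fixed `x₁` and `y₃`, the intermediate coordinate `y₂` must be a fixed point of
`y₂ ↦ G₂ (F₁ x₁ y₂) y₃`, a contraction with constant `a * b < 1`. Banach's fixed point theorem on the
complete space `Y₂` gives exactly one such point, and once `y₂` is pinned down so is `x₂ = F₁ x₁ y₂`,
which yields the generating map of `H₂ ∘ H₁`.
-/

theorem ContractingWith.comp_of_dist_le {α β : Type*} [MetricSpace α] [PseudoMetricSpace β]
    {f : α → β} {g : β → α} {a b : ℝ} (ha : 0 ≤ a) (hab : a * b < 1)
    (hg : ∀ y y', dist (g y) (g y') ≤ a * dist y y')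
    (hf : ∀ x x', dist (f x) (f x') ≤ b * dist x x') :
    ContractingWith (a * b).toNNReal (g ∘ f) := by
  refine ⟨Real.toNNReal_lt_one.mpr hab, ?_⟩
  rw [Real.toNNReal_mul ha]
  exact (LipschitzWith.of_dist_le' hg).comp (LipschitzWith.of_dist_le' hf)

theorem exists_middle_iff_of_unique_fixedPoint {X₂ Y₂ X₃ Y₁ : Type*}
    {F₁ : Y₂ → X₂} {G₂ : X₂ → Y₂} {c : Y₂} (hc : c = G₂ (F₁ c))
    (hc_unique : ∀ z, z = G₂ (F₁ z) → z = c) (G₁ : Y₂ → Y₁) (F₂ : X₂ → X₃) (y₁ : Y₁) (x₃ : X₃) :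
    (∃ x₂ y₂, y₁ = G₁ y₂ ∧ x₂ = F₁ y₂ ∧ y₂ = G₂ x₂ ∧ x₃ = F₂ x₂) ↔
      y₁ = G₁ c ∧ x₃ = F₂ (F₁ c) := by
  constructor
  · rintro ⟨_, y₂, hy₁, rfl, hy₂, hx₃⟩
    obtain rfl := hc_unique y₂ hy₂
    exact ⟨hy₁, hx₃⟩
  · rintro ⟨hy₁, hx₃⟩
    exact ⟨F₁ c, c, hy₁, rfl, hc, hx₃⟩

theorem composition_of_generating_maps_general
    {X₁ Y₁ X₂ Y₂ X₃ Y₃ : Type*}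
    [MetricSpace X₁] [MetricSpace Y₁] [MetricSpace X₂]
    [MetricSpace Y₂] [CompleteSpace Y₂] [Nonempty Y₂]
    [MetricSpace X₃] [MetricSpace Y₃]
    (F₁ : X₁ → Y₂ → X₂) (G₁ : X₁ → Y₂ → Y₁)
    (F₂ : X₂ → Y₃ → X₃) (G₂ : X₂ → Y₃ → Y₂)
    (a b : ℝ) (ha : 0 ≤ a) (hab : a * b < 1)
    (hG₂ : ∀ (y₃ : Y₃) (x₂ x₂' : X₂), dist (G₂ x₂ y₃) (G₂ x₂' y₃) ≤ a * dist x₂ x₂')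
    (hF₁ : ∀ (x₁ : X₁) (y₂ y₂' : Y₂), dist (F₁ x₁ y₂) (F₁ x₁ y₂') ≤ b * dist y₂ y₂') :
    ∃ c : X₁ → Y₃ → Y₂,
      (∀ (x₁ : X₁) (y₃ : Y₃),
        c x₁ y₃ = G₂ (F₁ x₁ (c x₁ y₃)) y₃ ∧
        ∀ z : Y₂, z = G₂ (F₁ x₁ z) y₃ → z = c x₁ y₃) ∧
      (∀ (x₁ : X₁) (y₁ : Y₁) (x₃ : X₃) (y₃ : Y₃),
        (∃ (x₂ : X₂) (y₂ : Y₂),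
          y₁ = G₁ x₁ y₂ ∧ x₂ = F₁ x₁ y₂ ∧ y₂ = G₂ x₂ y₃ ∧ x₃ = F₂ x₂ y₃) ↔
        (y₁ = G₁ x₁ (c x₁ y₃) ∧ x₃ = F₂ (F₁ x₁ (c x₁ y₃)) y₃)) := by
  have hK (x₁ : X₁) (y₃ : Y₃) :
      ContractingWith (a * b).toNNReal ((G₂ · y₃) ∘ F₁ x₁) :=
    .comp_of_dist_le ha hab (hG₂ y₃) (hF₁ x₁)
  have hc (x₁ : X₁) (y₃ : Y₃) :
      (hK x₁ y₃).fixedPoint = G₂ (F₁ x₁ (hK x₁ y₃).fixedPoint) y₃ ∧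
        ∀ z, z = G₂ (F₁ x₁ z) y₃ → z = (hK x₁ y₃).fixedPoint :=
    ⟨(hK x₁ y₃).fixedPoint_isFixedPt.symm, fun _ hz ↦ (hK x₁ y₃).fixedPoint_unique hz.symm⟩
  exact ⟨fun x₁ y₃ ↦ (hK x₁ y₃).fixedPoint, hc, fun x₁ y₁ x₃ y₃ ↦
    exists_middle_iff_of_unique_fixedPoint (hc x₁ y₃).1 (hc x₁ y₃).2 (G₁ x₁) (F₂ · y₃) y₁ x₃⟩

/-- Composition of correspondences with generating maps. -/
theorem composition_of_generating_maps
    {X₁ Y₁ X₂ Y₂ X₃ Y₃ : Type*}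
    [MetricSpace X₁] [MetricSpace Y₁] [MetricSpace X₂]
    [MetricSpace Y₂] [CompleteSpace Y₂] [Nonempty Y₂]
    [MetricSpace X₃] [MetricSpace Y₃]
    (F₁ : X₁ → Y₂ → X₂) (G₁ : X₁ → Y₂ → Y₁)
    (F₂ : X₂ → Y₃ → X₃) (G₂ : X₂ → Y₃ → Y₂)
    (a b : ℝ) (ha : 0 ≤ a) (hb : 0 ≤ b) (hab : a * b < 1)
    (hG₂ : ∀ (y₃ : Y₃) (x₂ x₂' : X₂), dist (G₂ x₂ y₃) (G₂ x₂' y₃) ≤ a * dist x₂ x₂')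
    (hF₁ : ∀ (x₁ : X₁) (y₂ y₂' : Y₂), dist (F₁ x₁ y₂) (F₁ x₁ y₂') ≤ b * dist y₂ y₂') :
    ∃ c : X₁ → Y₃ → Y₂,
      (∀ (x₁ : X₁) (y₃ : Y₃),
        c x₁ y₃ = G₂ (F₁ x₁ (c x₁ y₃)) y₃ ∧
        ∀ z : Y₂, z = G₂ (F₁ x₁ z) y₃ → z = c x₁ y₃) ∧
      (∀ (x₁ : X₁) (y₁ : Y₁) (x₃ : X₃) (y₃ : Y₃),
        (∃ (x₂ : X₂) (y₂ : Y₂),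
          y₁ = G₁ x₁ y₂ ∧ x₂ = F₁ x₁ y₂ ∧ y₂ = G₂ x₂ y₃ ∧ x₃ = F₂ x₂ y₃) ↔
        (y₁ = G₁ x₁ (c x₁ y₃) ∧ x₃ = F₂ (F₁ x₁ (c x₁ y₃)) y₃)) :=
  composition_of_generating_maps_general F₁ G₁ F₂ G₂ a b ha hab hG₂ hF₁
end

section
/- Lipschitz in the maximum metric implies the (A)(B) condition. Let X₁, Y₁, X₂, Y₂ be metric spaces, F : X₁ × Y₂ → X₂, G : X₁ × Y₂ → Y₁, and α, β, λ_s, λ_u ≥ 0. Suppose that for all x₁, x₁′ ∈ X₁ and y₂, y₂′ ∈ Y₂: d(F(x₁,y₂), F(x₁′,y₂′)) ≤ max{λ_s·d(x₁,x₁′), α·d(y₂,y₂′)} and d(G(x₁,y₂), G(x₁′,y₂′)) ≤ max{β·d(x₁,x₁′), λ_u·d(y₂,y₂′)}, and that α·β < 1 and λ_s·λ_u < 1. Then the correspondence H ∼ (F,G) satisfies the (A)(α,λ_u)(B)(β,λ_s) condition. If in addition α·β < λ_s·λ_u, then, with c = λ_s·λ_u (< 1), H satisfies the (A)(c⁻¹α;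 α, λ_u)(B)(c⁻¹β; β, λ_s) condition. -/
/-!
Write `dx, dy, dF, dG` for the distances between two points of the graph in `X₁, Y₂, X₂, Y₁`.
Inside the cone `dx ≤ t·dG` with `t·β < 1`, the branch `dG ≤ β·dx ≤ t·β·dG` of the max-Lipschitz
bound on `G` forces `dG = 0`, so `dG ≤ λ_u·dy` in any case; feeding this back,
`λ_s·dx ≤ λ_s·t·λ_u·dy`, so `dF ≤ α·dy` as soon as `λ_s·λ_u·t ≤ α`. Condition (B) is the same
statement with the roles of `(X₁, F)` and `(Y₂, G)` exchanged. The slopes `t = α, β` work when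
`λ_s·λ_u ≤ 1 ≤ (α·β)⁻¹`, and the slopes `t = c⁻¹α, c⁻¹β` when `α·β < c = λ_s·λ_u`.
-/

open Function

lemma le_mul_of_le_max_of_le_mul {g x y b l t : ℝ} (hb : 0 ≤ b) (hl : 0 ≤ l) (hy : 0 ≤ y)
    (htb : t * b < 1) (hg : g ≤ max (b * x) (l * y)) (hx : x ≤ t * g) : g ≤ l * y := by
  rcases le_max_iff.mp hg with hgx | hgy
  · have hg_nonpos : g ≤ 0 := by nlinarith [mul_le_mul_of_nonneg_left hx hb]
    nlinarith [mul_nonneg hl hy]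
  · exact hgy

lemma cone_estimate {dx dy dF dG a b ls lu t : ℝ} (hb : 0 ≤ b) (hls : 0 ≤ ls) (hlu : 0 ≤ lu)
    (ht : 0 ≤ t) (hdy : 0 ≤ dy) (htb : t * b < 1) (hta : ls * lu * t ≤ a)
    (hF : dF ≤ max (ls * dx) (a * dy)) (hG : dG ≤ max (b * dx) (lu * dy))
    (hx : dx ≤ t * dG) : dF ≤ a * dy ∧ dG ≤ lu * dy := by
  have hdG : dG ≤ lu * dy := le_mul_of_le_max_of_le_mul hb hlu hdy htb hG hx
  refine ⟨?_, hdG⟩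
  rcases le_max_iff.mp hF with hFx | hFy
  · calc dF ≤ ls * dx := hFx
      _ ≤ ls * (t * (lu * dy)) := by gcongr; exact hx.trans (by gcongr)
      _ = ls * lu * t * dy := by ring
      _ ≤ a * dy := by gcongr
  · exact hFy

section Cones

variable {X₁ Y₁ X₂ Y₂ : Type*} [MetricSpace X₁] [MetricSpace Y₁] [MetricSpace X₂]
  [MetricSpace Y₂]

/-- The graph of `H ∼ (F, G)` is parametrised by `(x₁, y₂)`, with `y₁ = G x₁ y₂` and
`x₂ = F x₁ y₂`; (A1) and (A2) share their hypothesis and are stated together. -/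
def ConditionA (F : X₁ → Y₂ → X₂) (G : X₁ → Y₂ → Y₁) (α α' lu : ℝ) : Prop :=
  ∀ (x₁ x₁' : X₁) (y₂ y₂' : Y₂),
    dist x₁ x₁' ≤ α * dist (G x₁ y₂) (G x₁' y₂') →
      dist (F x₁ y₂) (F x₁' y₂') ≤ α' * dist y₂ y₂' ∧
        dist (G x₁ y₂) (G x₁' y₂') ≤ lu * dist y₂ y₂'

def ConditionB (F : X₁ → Y₂ → X₂) (G : X₁ → Y₂ → Y₁) (β β' ls : ℝ) : Prop :=
  ∀ (x₁ x₁' : X₁) (y₂ y₂' : Y₂),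
    dist y₂ y₂' ≤ β * dist (F x₁ y₂) (F x₁' y₂') →
      dist (G x₁ y₂) (G x₁' y₂') ≤ β' * dist x₁ x₁' ∧
        dist (F x₁ y₂) (F x₁' y₂') ≤ ls * dist x₁ x₁'

variable {F : X₁ → Y₂ → X₂} {G : X₁ → Y₂ → Y₁} {α β ls lu t : ℝ}

lemma conditionA_of_dist_le_max (hβ : 0 ≤ β) (hls : 0 ≤ ls) (hlu : 0 ≤ lu) (ht : 0 ≤ t)
    (hF : ∀ x₁ x₁' y₂ y₂', dist (F x₁ y₂) (F x₁' y₂') ≤ max (ls * dist x₁ x₁') (α * dist y₂ y₂'))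
    (hG : ∀ x₁ x₁' y₂ y₂', dist (G x₁ y₂) (G x₁' y₂') ≤ max (β * dist x₁ x₁') (lu * dist y₂ y₂'))
    (htβ : t * β < 1) (htα : ls * lu * t ≤ α) : ConditionA F G t α lu :=
  fun x₁ x₁' y₂ y₂' hx =>
    cone_estimate hβ hls hlu ht dist_nonneg htβ htα (hF x₁ x₁' y₂ y₂') (hG x₁ x₁' y₂ y₂') hx

lemma conditionB_of_dist_le_max (hα : 0 ≤ α) (hls : 0 ≤ ls) (hlu : 0 ≤ lu) (ht : 0 ≤ t)
    (hF : ∀ x₁ x₁' y₂ y₂', dist (F x₁ y₂) (F x₁' y₂') ≤ max (ls * dist x₁ x₁') (α * dist y₂ y₂'))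
    (hG : ∀ x₁ x₁' y₂ y₂', dist (G x₁ y₂) (G x₁' y₂') ≤ max (β * dist x₁ x₁') (lu * dist y₂ y₂'))
    (htα : t * α < 1) (htβ : lu * ls * t ≤ β) : ConditionB F G t β ls := by
  have hA : ConditionA (swap G) (swap F) t β ls :=
    conditionA_of_dist_le_max hα hlu hls ht
      (fun y₂ y₂' x₁ x₁' => (hG x₁ x₁' y₂ y₂').trans_eq (max_comm _ _))
      (fun y₂ y₂' x₁ x₁' => (hF x₁ x₁' y₂ y₂').trans_eq (max_comm _ _)) htα htβ
  exact fun x₁ x₁' y₂ y₂' hy => hA y₂ y₂' x₁ x₁' hy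

end Cones

/-- Lipschitz in the maximum metric implies the (A)(B) condition. -/
theorem lipschitz_max_metric_implies_AB
    {X₁ Y₁ X₂ Y₂ : Type*}
    [MetricSpace X₁] [MetricSpace Y₁] [MetricSpace X₂] [MetricSpace Y₂]
    (F : X₁ → Y₂ → X₂) (G : X₁ → Y₂ → Y₁)
    (α β lams lamu : ℝ)
    (hα : 0 ≤ α) (hβ : 0 ≤ β) (hlams : 0 ≤ lams) (hlamu : 0 ≤ lamu)
    (hF : ∀ (x₁ x₁' : X₁) (y₂ y₂' : Y₂),
      dist (F x₁ y₂) (F x₁' y₂') ≤ max (lams * dist x₁ x₁') (α * dist y₂ y₂'))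
    (hG : ∀ (x₁ x₁' : X₁) (y₂ y₂' : Y₂),
      dist (G x₁ y₂) (G x₁' y₂') ≤ max (β * dist x₁ x₁') (lamu * dist y₂ y₂'))
    (hαβ : α * β < 1) (hll : lams * lamu < 1) :
    -- H satisfies the (A)(α, λ_u)(B)(β, λ_s) condition
    ((∀ (x₁ x₁' : X₁) (y₂ y₂' : Y₂),
        dist x₁ x₁' ≤ α * dist (G x₁ y₂) (G x₁' y₂') →
          dist (F x₁ y₂) (F x₁' y₂') ≤ α * dist y₂ y₂' ∧
            dist (G x₁ y₂) (G x₁' y₂') ≤ lamu * dist y₂ y₂') ∧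
      (∀ (x₁ x₁' : X₁) (y₂ y₂' : Y₂),
        dist y₂ y₂' ≤ β * dist (F x₁ y₂) (F x₁' y₂') →
          dist (G x₁ y₂) (G x₁' y₂') ≤ β * dist x₁ x₁' ∧
            dist (F x₁ y₂) (F x₁' y₂') ≤ lams * dist x₁ x₁')) ∧
    -- if moreover α·β < λ_s·λ_u then, with c = λ_s·λ_u,
    -- H satisfies the (A)(c⁻¹α; α, λ_u)(B)(c⁻¹β; β, λ_s) condition
    (α * β < lams * lamu →
      ((∀ (x₁ x₁' : X₁) (y₂ y₂' : Y₂),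
          dist x₁ x₁' ≤ (lams * lamu)⁻¹ * α * dist (G x₁ y₂) (G x₁' y₂') →
            dist (F x₁ y₂) (F x₁' y₂') ≤ α * dist y₂ y₂' ∧
              dist (G x₁ y₂) (G x₁' y₂') ≤ lamu * dist y₂ y₂') ∧
        (∀ (x₁ x₁' : X₁) (y₂ y₂' : Y₂),
          dist y₂ y₂' ≤ (lams * lamu)⁻¹ * β * dist (F x₁ y₂) (F x₁' y₂') →
            dist (G x₁ y₂) (G x₁' y₂') ≤ β * dist x₁ x₁' ∧
              dist (F x₁ y₂) (F x₁' y₂') ≤ lams * dist x₁ x₁'))) := by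
  have hA : ConditionA F G α α lamu :=
    conditionA_of_dist_le_max hβ hlams hlamu hα hF hG hαβ (by nlinarith)
  have hB : ConditionB F G β β lams :=
    conditionB_of_dist_le_max hα hlams hlamu hβ hF hG (by linarith) (by nlinarith)
  refine ⟨⟨hA, hB⟩, fun hc => ?_⟩
  have hc_pos : 0 < lams * lamu := (mul_nonneg hα hβ).trans_lt hc
  have hA' : ConditionA F G ((lams * lamu)⁻¹ * α) α lamu :=
    conditionA_of_dist_le_max hβ hlams hlamu (by positivity) hF hG
      (by rw [mul_assoc, inv_mul_lt_iff₀ hc_pos, mul_one]; exact hc)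
      (by rw [mul_inv_cancel_left₀ hc_pos.ne'])
  have hB' : ConditionB F G ((lams * lamu)⁻¹ * β) β lams :=
    conditionB_of_dist_le_max hα hlams hlamu (by positivity) hF hG
      (by rw [mul_assoc, inv_mul_lt_iff₀ hc_pos, mul_one, mul_comm]; exact hc)
      (by rw [mul_comm lamu, mul_inv_cancel_left₀ hc_pos.ne'])
  exact ⟨hA', hB'⟩
end

section
/- The additive Lipschitz condition (A′)(B′) implies the (A)(B) condition. Let X₁, Y₁, X₂, Y₂ be metric spaces and suppose the correspondence H ∼ (F,G) satisfies the (A′)(α̃,λ̃_u) and (B′)(β̃,λ̃_s) conditions, where α̃, β̃ > 0 and λ̃_s, λ̃_u ≥ 0. Let 0 < c ≤ 1 satisfy λ̃_s·λ̃_u < c² and α̃·β̃ < (c − √(λ̃_s·λ̃_u))². Set b = c − λ̃_s·λ̃_u + α̃·β̃. Then b² ≥ 4c·α̃·β̃, and setting t = (b − √(b² − 4c·α̃·β̃))/(2c) one has 0 ≤ t < 1; moreover, with α = t/β̃, β = t/α̃, λ_s = λ̃_s/(1 − t), λ_u = λ̃_u/(1 − t), the correspondence H satisfies the (A)(α; cα,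 λ_u)(B)(β; cβ, λ_s) condition, and furthermore α·β < 1 and λ_s·λ_u < 1. -/
/-!
Writing `a = α̃β̃` and `L = λ̃_sλ̃_u`, the number `t` is the smaller root of
`p(r) = c r² - b r + a`, and `p(t) = 0` is the identity `c t (1 - t) = a (1 - t) + L t`.
If `d(x₁, x₁') ≤ (t/β̃) d(y₁, y₁')`, the triangle inequality through `(x₁, y₂')` gives
`(1 - t) β̃ d(x₁, x₁') ≤ t λ̃_u d(y₂, y₂')`, and feeding this into the analogous bound for `F`
turns the identity into `d(x₂, x₂') ≤ c (t/β̃) d(y₂, y₂')`. Condition (B) is condition (A) for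
the inverse correspondence. Finally `p(√a) < 0`, so `t < √a < c - √L ≤ 1 - √L`, which gives
`α β < 1` and `λ_s λ_u < 1`.
-/

open Real

/-- The smaller root of `c r² - b r + a`. -/
noncomputable def smallRoot (a b c : ℝ) : ℝ := (b - √(b ^ 2 - 4 * c * a)) / (2 * c)

section SmallRoot

variable {a b c r : ℝ}

lemma discrim_pos_of_neg (hc : 0 < c) (hr : c * r ^ 2 - b * r + a < 0) :
    0 < b ^ 2 - 4 * c * a := by
  nlinarith [sq_nonneg (2 * c * r - b)]

lemma smallRoot_lt_of_neg (hc : 0 < c) (hr : c * r ^ 2 - b * r + a < 0) :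
    smallRoot a b c < r := by
  have hD := discrim_pos_of_neg hc hr
  rw [smallRoot, div_lt_iff₀ (by positivity), sub_lt_comm]
  rcases le_or_gt (b - r * (2 * c)) 0 with h | h
  · exact h.trans_lt (sqrt_pos.2 hD)
  · exact (lt_sqrt h.le).2 (by nlinarith)

lemma smallRoot_nonneg (hc : 0 < c) (hb : 0 ≤ b) (ha : 0 ≤ a) : 0 ≤ smallRoot a b c := by
  refine div_nonneg (sub_nonneg.2 ((sqrt_le_left hb).2 ?_)) (by positivity)
  nlinarith [mul_nonneg hc.le ha]

lemma smallRoot_isRoot (hc : 0 < c) (hD : 0 ≤ b ^ 2 - 4 * c * a) :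
    c * smallRoot a b c ^ 2 - b * smallRoot a b c + a = 0 := by
  have hs := sq_sqrt hD
  rw [smallRoot]
  set d := √(b ^ 2 - 4 * c * a)
  field_simp
  linear_combination hs

end SmallRoot

lemma quadratic_neg_of_add_lt {a L c s u : ℝ} (hs : 0 ≤ s) (hu : 0 < u) (hc1 : c ≤ 1)
    (hsu : u + s < c) (hs2 : s ^ 2 = L) (hu2 : u ^ 2 = a) :
    c * u ^ 2 - (c - L + a) * u + a < 0 := by
  -- the left-hand side is `-u ((1 - u) (c - u) - s²)`
  have : s * s < (1 - u) * (c - u) := mul_lt_mul'' (by linarith) (by linarith) hs hs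
  subst hs2 hu2
  nlinarith [mul_pos hu (sub_pos.2 this)]

lemma smallRoot_bounds {a L c : ℝ} (ha : 0 < a) (hL : 0 ≤ L) (hc0 : 0 < c) (hc1 : c ≤ 1)
    (h1 : L < c ^ 2) (h2 : a < (c - √L) ^ 2) :
    0 < (c - L + a) ^ 2 - 4 * c * a ∧ 0 ≤ smallRoot a (c - L + a) c ∧
      smallRoot a (c - L + a) c < √a ∧ √a + √L < c := by
  have hsc : √L < c := (sqrt_lt' hc0).2 h1
  have hus : √a + √L < c := by linarith [(sqrt_lt' (sub_pos.2 hsc)).2 h2]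
  have hneg := quadratic_neg_of_add_lt (sqrt_nonneg L) (sqrt_pos.2 ha) hc1 hus (sq_sqrt hL)
    (sq_sqrt ha.le)
  exact ⟨discrim_pos_of_neg hc0 hneg, smallRoot_nonneg hc0 (by nlinarith) ha.le,
    smallRoot_lt_of_neg hc0 hneg, hus⟩

section Metric

variable {X₁ Y₁ X₂ Y₂ : Type*}
  [PseudoMetricSpace X₁] [PseudoMetricSpace Y₁] [PseudoMetricSpace X₂] [PseudoMetricSpace Y₂]

lemma dist_le_of_lipschitz_sections (f : X₁ → Y₂ → X₂) {Kx Ky : ℝ}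
    (hx : ∀ (y : Y₂) (x x' : X₁), dist (f x y) (f x' y) ≤ Kx * dist x x')
    (hy : ∀ (x : X₁) (y y' : Y₂), dist (f x y) (f x y') ≤ Ky * dist y y')
    (x x' : X₁) (y y' : Y₂) : dist (f x y) (f x' y') ≤ Ky * dist y y' + Kx * dist x x' :=
  (dist_triangle _ (f x y') _).trans (add_le_add (hy x y y') (hx y' x x'))

theorem cone_condition_A_of_additive_lipschitz (F : X₁ → Y₂ → X₂) (G : X₁ → Y₂ → Y₁)
    {αt βt lst lut c t : ℝ} (hβt : 0 < βt) (hlst : 0 ≤ lst) (ht0 : 0 ≤ t) (ht1 : t < 1)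
    (hroot : c * t * (1 - t) = αt * βt * (1 - t) + lst * lut * t)
    (hA'F : ∀ (x : X₁) (y y' : Y₂), dist (F x y) (F x y') ≤ αt * dist y y')
    (hA'G : ∀ (x : X₁) (y y' : Y₂), dist (G x y) (G x y') ≤ lut * dist y y')
    (hB'G : ∀ (y : Y₂) (x x' : X₁), dist (G x y) (G x' y) ≤ βt * dist x x')
    (hB'F : ∀ (y : Y₂) (x x' : X₁), dist (F x y) (F x' y) ≤ lst * dist x x')
    (x₁ x₁' : X₁) (y₂ y₂' : Y₂) (hcone : dist x₁ x₁' ≤ t / βt * dist (G x₁ y₂) (G x₁' y₂')) :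
    dist (F x₁ y₂) (F x₁' y₂') ≤ c * (t / βt) * dist y₂ y₂' ∧
      dist (G x₁ y₂) (G x₁' y₂') ≤ lut / (1 - t) * dist y₂ y₂' := by
  have h1t : 0 < 1 - t := sub_pos.2 ht1
  have hF := dist_le_of_lipschitz_sections F hB'F hA'F x₁ x₁' y₂ y₂'
  have hG := dist_le_of_lipschitz_sections G hB'G hA'G x₁ x₁' y₂ y₂'
  set dx := dist x₁ x₁'
  set dy := dist y₂ y₂'
  have hx : βt * dx ≤ t * dist (G x₁ y₂) (G x₁' y₂') := by
    rw [div_mul_eq_mul_div, le_div_iff₀ hβt] at hcone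
    linarith
  have hxy : (1 - t) * (βt * dx) ≤ t * (lut * dy) := by
    nlinarith [mul_le_mul_of_nonneg_left hG ht0]
  constructor
  · rw [show c * (t / βt) * dy = c * t * dy / βt by ring, le_div_iff₀ hβt]
    refine le_of_mul_le_mul_left ?_ h1t
    nlinarith [mul_le_mul_of_nonneg_left hF (mul_nonneg h1t.le hβt.le),
      mul_le_mul_of_nonneg_left hxy hlst, congrArg (· * dy) hroot]
  · rw [div_mul_eq_mul_div, le_div_iff₀ h1t]
    nlinarith [mul_le_mul_of_nonneg_left hG h1t.le]

end Metric

/-- The additive Lipschitz condition (A′)(B′) implies the (A)(B) condition. -/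
theorem additive_lipschitz_implies_AB
    {X₁ Y₁ X₂ Y₂ : Type*}
    [MetricSpace X₁] [MetricSpace Y₁] [MetricSpace X₂] [MetricSpace Y₂]
    (F : X₁ → Y₂ → X₂) (G : X₁ → Y₂ → Y₁)
    (αt βt lst lut c : ℝ)
    (hαt : 0 < αt) (hβt : 0 < βt) (hlst : 0 ≤ lst) (hlut : 0 ≤ lut)
    (hc0 : 0 < c) (hc1 : c ≤ 1)
    -- (A′)(α̃, λ̃_u) condition
    (hA'F : ∀ (x : X₁) (y y' : Y₂), dist (F x y) (F x y') ≤ αt * dist y y')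
    (hA'G : ∀ (x : X₁) (y y' : Y₂), dist (G x y) (G x y') ≤ lut * dist y y')
    -- (B′)(β̃, λ̃_s) condition
    (hB'G : ∀ (y : Y₂) (x x' : X₁), dist (G x y) (G x' y) ≤ βt * dist x x')
    (hB'F : ∀ (y : Y₂) (x x' : X₁), dist (F x y) (F x' y) ≤ lst * dist x x')
    (h1 : lst * lut < c ^ 2)
    (h2 : αt * βt < (c - Real.sqrt (lst * lut)) ^ 2) :
    ∀ b t α β lams lamu : ℝ,
      b = c - lst * lut + αt * βt →
      t = (b - Real.sqrt (b ^ 2 - 4 * c * (αt * βt))) / (2 * c) →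
      α = t / βt → β = t / αt →
      lams = lst / (1 - t) → lamu = lut / (1 - t) →
      b ^ 2 ≥ 4 * c * (αt * βt) ∧ 0 ≤ t ∧ t < 1 ∧
      -- H satisfies the (A)(α; cα, λ_u)(B)(β; cβ, λ_s) condition
      (∀ (x₁ x₁' : X₁) (y₂ y₂' : Y₂),
        dist x₁ x₁' ≤ α * dist (G x₁ y₂) (G x₁' y₂') →
          dist (F x₁ y₂) (F x₁' y₂') ≤ c * α * dist y₂ y₂' ∧
            dist (G x₁ y₂) (G x₁' y₂') ≤ lamu * dist y₂ y₂') ∧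
      (∀ (x₁ x₁' : X₁) (y₂ y₂' : Y₂),
        dist y₂ y₂' ≤ β * dist (F x₁ y₂) (F x₁' y₂') →
          dist (G x₁ y₂) (G x₁' y₂') ≤ c * β * dist x₁ x₁' ∧
            dist (F x₁ y₂) (F x₁' y₂') ≤ lams * dist x₁ x₁') ∧
      α * β < 1 ∧ lams * lamu < 1 := by
  intro b t α β lams lamu hb ht hα hβ hlams hlamu
  subst hα hβ hlams hlamu hb
  replace ht : t = smallRoot (αt * βt) (c - lst * lut + αt * βt) c := ht
  obtain ⟨hD, ht0, htu, hus⟩ :=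
    ht ▸ smallRoot_bounds (mul_pos hαt hβt) (mul_nonneg hlst hlut) hc0 hc1 h1 h2
  have hpt := ht ▸ smallRoot_isRoot hc0 hD.le
  have hroot : c * t * (1 - t) = αt * βt * (1 - t) + lst * lut * t := by
    linear_combination -hpt
  have ht1 : t < 1 := by linarith [sqrt_nonneg (lst * lut)]
  refine ⟨by linarith, ht0, ht1,
    cone_condition_A_of_additive_lipschitz F G hβt hlst ht0 ht1 hroot hA'F hA'G hB'G hB'F,
    fun x₁ x₁' y₂ y₂' ↦ cone_condition_A_of_additive_lipschitz (fun y x ↦ G x y) (fun y x ↦ F x y)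
      hαt hlut ht0 ht1 (by linear_combination hroot) hB'G hB'F hA'F hA'G y₂ y₂' x₁ x₁', ?_, ?_⟩
  · rw [div_mul_div_comm, div_lt_one (mul_pos hβt hαt), mul_comm βt,
      ← mul_self_sqrt (mul_pos hαt hβt).le]
    exact mul_self_lt_mul_self ht0 htu
  · rw [div_mul_div_comm, div_lt_one (mul_pos (sub_pos.2 ht1) (sub_pos.2 ht1)),
      ← mul_self_sqrt (mul_nonneg hlst hlut)]
    exact mul_self_lt_mul_self (sqrt_nonneg _) (by linarith)
end

section
/- Chaperon-type maps satisfy the (A)(B) condition. Let X₁, Y₁, X₂, Y₂ be metric spaces and H = (f,g) : X₁ × Y₁ → X₂ × Y₂ a map such that for each x ∈ X₁ the map g_x = g(x,·) : Y₁ → Y₂ is a bijection, with inverse g_x⁻¹. Suppose constants k₀, ν₀, μ₀ ≥ 0 satisfy: d(f(x₁,y₁), f(x₁′,y₁′)) ≤ k₀·max{d(x₁,x₁′), d(y₁,y₁′)} for all (x₁,y₁), (x₁′,y₁′) ∈ X₁ × Y₁; Lip g_x⁻¹ ≤ ν₀ for every x ∈ X₁; d(g_x⁻¹(y), g_{x′}⁻¹(y))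 ≤ μ₀·d(x,x′) for all x, x′ ∈ X₁ and y ∈ Y₂; and μ₀ + ν₀·k₀ < 1. Set α = 2ν₀k₀/(1 + √(1 − 4k₀ν₀μ₀)), β = μ₀/(1 − k₀ν₀), λ_s = k₀, λ_u = ν₀/(1 − αμ₀). Then α < 1, β < 1, the graph of H, namely {((x₁,y₁), H(x₁,y₁)) : (x₁,y₁) ∈ X₁ × Y₁}, satisfies the (A)(α,λ_u)(B)(β,λ_s) condition, and λ_s·λ_u < 1. Moreover, if ν₀ + μ₀ < 1 then λ_u < 1, and if k₀ < 1 then λ_s < 1. -/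
/-!
Since `g x` has a Lipschitz inverse depending Lipschitz-continuously on `x`, the
`y`-distance of two points is controlled by their images:
`d(y, y') ≤ ν₀ d(g, g') + μ₀ d(x, x')`. In the cone `d(x, x') ≤ α d(y, y')` this gives
`(1 - α μ₀) d(y, y') ≤ ν₀ d(g, g')`, and `d(f, f') ≤ k₀ d(y, y')`; the constant `α` is chosen
as a root of `α (1 - α μ₀) = ν₀ k₀`, which makes both cone conditions close up. In the cone
`d(g, g') ≤ β d(f, f')` the same estimate gives `d(y, y') ≤ β max (d(x, x'), d(y, y'))`
because `β (1 - k₀ ν₀) = μ₀`, and `β < 1` forces the maximum to be `d(x, x')`.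
-/

open Real

/-- The smaller root of `μ t² - t + ν k = 0`, written in rationalized form so that it makes
sense at `μ = 0`. -/
noncomputable def chaperonAlpha (k ν μ : ℝ) : ℝ :=
  2 * ν * k / (1 + √(1 - 4 * k * ν * μ))

section Constants

variable {k ν μ : ℝ}

theorem chaperon_discriminant_pos (hk : 0 ≤ k) (hν : 0 ≤ ν) (hμ : 0 ≤ μ)
    (hsum : μ + ν * k < 1) : 0 < 1 - 4 * k * ν * μ := by
  have hsq : (ν * k + μ) ^ 2 < 1 := by
    rw [sq_lt_one_iff₀ (by positivity)]
    linarith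
  nlinarith [four_mul_le_sq_add (ν * k) μ]

theorem chaperonAlpha_nonneg (hk : 0 ≤ k) (hν : 0 ≤ ν) : 0 ≤ chaperonAlpha k ν μ := by
  unfold chaperonAlpha
  positivity

theorem chaperonAlpha_lt_one (hk : 0 ≤ k) (hν : 0 ≤ ν) (hμ : 0 ≤ μ)
    (hsum : μ + ν * k < 1) : chaperonAlpha k ν μ < 1 := by
  have hD := chaperon_discriminant_pos hk hν hμ hsum
  have hs : 0 < √(1 - 4 * k * ν * μ) := sqrt_pos.mpr hD
  rw [chaperonAlpha, div_lt_one (by positivity)]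
  rcases le_or_gt (2 * ν * k) 1 with h | h
  · linarith
  · have hlt : 2 * ν * k - 1 < √(1 - 4 * k * ν * μ) := by
      rw [lt_sqrt (by linarith)]
      nlinarith
    linarith

theorem chaperonAlpha_mul_one_add_sqrt (k ν μ : ℝ) :
    chaperonAlpha k ν μ * (1 + √(1 - 4 * k * ν * μ)) = 2 * ν * k := by
  rw [chaperonAlpha, div_mul_cancel₀ _ (by positivity)]

theorem two_mul_chaperonAlpha_mul (hD : 0 ≤ 1 - 4 * k * ν * μ) :
    2 * (chaperonAlpha k ν μ * μ) = 1 - √(1 - 4 * k * ν * μ) := by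
  have hpos : 0 < 1 + √(1 - 4 * k * ν * μ) := by positivity
  rw [← mul_left_inj' hpos.ne']
  linear_combination 2 * μ * chaperonAlpha_mul_one_add_sqrt k ν μ + sq_sqrt hD

theorem one_sub_chaperonAlpha_mul_pos (hD : 0 ≤ 1 - 4 * k * ν * μ) :
    0 < 1 - chaperonAlpha k ν μ * μ := by
  have h := two_mul_chaperonAlpha_mul hD
  have hs := sqrt_nonneg (1 - 4 * k * ν * μ)
  linarith

theorem chaperonAlpha_mul_one_sub (hD : 0 ≤ 1 - 4 * k * ν * μ) :
    chaperonAlpha k ν μ * (1 - chaperonAlpha k ν μ * μ) = ν * k := by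
  linear_combination chaperonAlpha_mul_one_add_sqrt k ν μ / 2 -
    chaperonAlpha k ν μ * two_mul_chaperonAlpha_mul hD / 2

theorem mul_div_one_sub_chaperonAlpha_mul (hD : 0 ≤ 1 - 4 * k * ν * μ) :
    k * (ν / (1 - chaperonAlpha k ν μ * μ)) = chaperonAlpha k ν μ := by
  rw [mul_div_assoc', div_eq_iff (one_sub_chaperonAlpha_mul_pos hD).ne']
  linear_combination -chaperonAlpha_mul_one_sub hD

end Constants

theorem le_mul_of_le_mul_max {a b c : ℝ} (ha : 0 ≤ a) (hb : 0 ≤ b) (hc : c < 1)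
    (h : b ≤ c * max a b) : b ≤ c * a := by
  rcases le_total a b with hab | hab
  · rw [max_eq_right hab] at h
    have hb0 : b = 0 := by nlinarith
    have ha0 : a = 0 := by linarith
    simp [hb0, ha0]
  · rwa [max_eq_left hab] at h

section Cones

variable {X₁ Y₁ X₂ Y₂ : Type*}
  [PseudoMetricSpace X₁] [PseudoMetricSpace Y₁] [PseudoMetricSpace X₂] [PseudoMetricSpace Y₂]
  {f : X₁ → Y₁ → X₂} {g : X₁ → Y₁ → Y₂} {k ν μ : ℝ}

theorem dist_le_of_leftInverse_lipschitz {ginv : X₁ → Y₂ → Y₁}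
    (hgleft : ∀ x y, ginv x (g x y) = y)
    (hginvLip : ∀ x z z', dist (ginv x z) (ginv x z') ≤ ν * dist z z')
    (hginvx : ∀ x x' z, dist (ginv x z) (ginv x' z) ≤ μ * dist x x')
    (x x' : X₁) (y y' : Y₁) :
    dist y y' ≤ ν * dist (g x y) (g x' y') + μ * dist x x' :=
  calc dist y y' = dist (ginv x (g x y)) (ginv x' (g x' y')) := by rw [hgleft, hgleft]
    _ ≤ dist (ginv x (g x y)) (ginv x (g x' y')) + dist (ginv x (g x' y')) (ginv x' (g x' y')) :=
      dist_triangle _ _ _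
    _ ≤ ν * dist (g x y) (g x' y') + μ * dist x x' := add_le_add (hginvLip _ _ _) (hginvx _ _ _)

variable (hy : ∀ x x' y y', dist y y' ≤ ν * dist (g x y) (g x' y') + μ * dist x x')
  (hf : ∀ x x' y y', dist (f x y) (f x' y') ≤ k * max (dist x x') (dist y y'))
include hy hf

theorem unstable_cone_condition {α : ℝ} (hk : 0 ≤ k) (hμ : 0 ≤ μ) (hα : α ≤ 1)
    (hden : 0 < 1 - α * μ) (hkα : k * (ν / (1 - α * μ)) = α)
    (x x' : X₁) (y y' : Y₁) (hxy : dist x x' ≤ α * dist y y') :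
    dist (f x y) (f x' y') ≤ α * dist (g x y) (g x' y') ∧
      dist y y' ≤ ν / (1 - α * μ) * dist (g x y) (g x' y') := by
  have hy_le : dist y y' ≤ ν / (1 - α * μ) * dist (g x y) (g x' y') := by
    rw [div_mul_eq_mul_div, le_div_iff₀ hden]
    nlinarith [hy x x' y y']
  have hmax : max (dist x x') (dist y y') = dist y y' :=
    max_eq_right (hxy.trans (mul_le_of_le_one_left dist_nonneg hα))
  refine ⟨?_, hy_le⟩
  calc dist (f x y) (f x' y') ≤ k * dist y y' := hmax ▸ hf x x' y y'
    _ ≤ k * (ν / (1 - α * μ) * dist (g x y) (g x' y')) := by gcongr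
    _ = α * dist (g x y) (g x' y') := by rw [← mul_assoc, hkα]

theorem stable_cone_condition {β : ℝ} (hν : 0 ≤ ν) (hμ : 0 ≤ μ) (hβ₀ : 0 ≤ β) (hβ : β < 1)
    (hμβ : μ = β * (1 - k * ν)) (x x' : X₁) (y y' : Y₁)
    (hgf : dist (g x y) (g x' y') ≤ β * dist (f x y) (f x' y')) :
    dist y y' ≤ β * dist x x' ∧ dist (f x y) (f x' y') ≤ k * dist x x' := by
  set m := max (dist x x') (dist y y')
  have hy_max : dist y y' ≤ β * m :=
    calc dist y y' ≤ ν * dist (g x y) (g x' y') + μ * dist x x' := hy x x' y y'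
      _ ≤ ν * (β * (k * m)) + μ * m := by
        gcongr
        · exact hgf.trans (by gcongr; exact hf x x' y y')
        · exact le_max_left _ _
      _ = β * m := by rw [hμβ]; ring
  have hy_le := le_mul_of_le_mul_max dist_nonneg dist_nonneg hβ hy_max
  have hmax : m = dist x x' :=
    max_eq_left (hy_le.trans (mul_le_of_le_one_left dist_nonneg hβ.le))
  exact ⟨hy_le, hmax ▸ hf x x' y y'⟩

end Cones

theorem chaperon_maps_satisfy_AB_general
    {X₁ Y₁ X₂ Y₂ : Type*}
    [MetricSpace X₁] [MetricSpace Y₁] [MetricSpace X₂] [MetricSpace Y₂]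
    (f : X₁ → Y₁ → X₂) (g : X₁ → Y₁ → Y₂) (ginv : X₁ → Y₂ → Y₁)
    -- each `g x` is a bijection with inverse `ginv x`
    (hgleft : ∀ (x : X₁) (y : Y₁), ginv x (g x y) = y)
    (k₀ ν₀ μ₀ : ℝ) (hk₀ : 0 ≤ k₀) (hν₀ : 0 ≤ ν₀) (hμ₀ : 0 ≤ μ₀)
    (hf : ∀ (x₁ x₁' : X₁) (y₁ y₁' : Y₁),
      dist (f x₁ y₁) (f x₁' y₁') ≤ k₀ * max (dist x₁ x₁') (dist y₁ y₁'))
    (hginvLip : ∀ (x : X₁) (z z' : Y₂), dist (ginv x z) (ginv x z') ≤ ν₀ * dist z z')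
    (hginvx : ∀ (x x' : X₁) (z : Y₂), dist (ginv x z) (ginv x' z) ≤ μ₀ * dist x x')
    (hsum : μ₀ + ν₀ * k₀ < 1) :
    ∀ α β lams lamu : ℝ,
      α = 2 * ν₀ * k₀ / (1 + Real.sqrt (1 - 4 * k₀ * ν₀ * μ₀)) →
      β = μ₀ / (1 - k₀ * ν₀) →
      lams = k₀ → lamu = ν₀ / (1 - α * μ₀) →
      α < 1 ∧ β < 1 ∧
      -- the graph of H = (f, g) satisfies the (A)(α, λ_u)(B)(β, λ_s) condition
      (∀ (x₁ x₁' : X₁) (y₁ y₁' : Y₁),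
        dist x₁ x₁' ≤ α * dist y₁ y₁' →
          dist (f x₁ y₁) (f x₁' y₁') ≤ α * dist (g x₁ y₁) (g x₁' y₁') ∧
            dist y₁ y₁' ≤ lamu * dist (g x₁ y₁) (g x₁' y₁')) ∧
      (∀ (x₁ x₁' : X₁) (y₁ y₁' : Y₁),
        dist (g x₁ y₁) (g x₁' y₁') ≤ β * dist (f x₁ y₁) (f x₁' y₁') →
          dist y₁ y₁' ≤ β * dist x₁ x₁' ∧
            dist (f x₁ y₁) (f x₁' y₁') ≤ lams * dist x₁ x₁') ∧
      lams * lamu < 1 ∧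
      (ν₀ + μ₀ < 1 → lamu < 1) ∧ (k₀ < 1 → lams < 1) := by
  intro α β lams lamu hα hβ hlams hlamu
  obtain rfl : α = chaperonAlpha k₀ ν₀ μ₀ := hα
  subst β lams lamu
  have hD := (chaperon_discriminant_pos hk₀ hν₀ hμ₀ hsum).le
  have hα₁ := chaperonAlpha_lt_one hk₀ hν₀ hμ₀ hsum
  have hden := one_sub_chaperonAlpha_mul_pos hD
  have hkα := mul_div_one_sub_chaperonAlpha_mul hD
  have hkν : 0 < 1 - k₀ * ν₀ := by linarith [mul_comm k₀ ν₀]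
  have hβ₁ : μ₀ / (1 - k₀ * ν₀) < 1 := (div_lt_one hkν).2 (by linarith [mul_comm k₀ ν₀])
  have hy := dist_le_of_leftInverse_lipschitz hgleft hginvLip hginvx
  refine ⟨hα₁, hβ₁, unstable_cone_condition hy hf hk₀ hμ₀ hα₁.le hden hkα,
    stable_cone_condition hy hf hν₀ hμ₀ (by positivity) hβ₁ (div_mul_cancel₀ _ hkν.ne').symm,
    by rwa [hkα], fun h => (div_lt_one hden).2 ?_, id⟩
  nlinarith [chaperonAlpha_nonneg (μ := μ₀) hk₀ hν₀]

/-- Chaperon-type maps satisfy the (A)(B) condition. -/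
theorem chaperon_maps_satisfy_AB
    {X₁ Y₁ X₂ Y₂ : Type*}
    [MetricSpace X₁] [MetricSpace Y₁] [MetricSpace X₂] [MetricSpace Y₂]
    (f : X₁ → Y₁ → X₂) (g : X₁ → Y₁ → Y₂) (ginv : X₁ → Y₂ → Y₁)
    -- each `g x` is a bijection with inverse `ginv x`
    (hgleft : ∀ (x : X₁) (y : Y₁), ginv x (g x y) = y)
    (hgright : ∀ (x : X₁) (z : Y₂), g x (ginv x z) = z)
    (k₀ ν₀ μ₀ : ℝ) (hk₀ : 0 ≤ k₀) (hν₀ : 0 ≤ ν₀) (hμ₀ : 0 ≤ μ₀)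
    (hf : ∀ (x₁ x₁' : X₁) (y₁ y₁' : Y₁),
      dist (f x₁ y₁) (f x₁' y₁') ≤ k₀ * max (dist x₁ x₁') (dist y₁ y₁'))
    (hginvLip : ∀ (x : X₁) (z z' : Y₂), dist (ginv x z) (ginv x z') ≤ ν₀ * dist z z')
    (hginvx : ∀ (x x' : X₁) (z : Y₂), dist (ginv x z) (ginv x' z) ≤ μ₀ * dist x x')
    (hsum : μ₀ + ν₀ * k₀ < 1) :
    ∀ α β lams lamu : ℝ,
      α = 2 * ν₀ * k₀ / (1 + Real.sqrt (1 - 4 * k₀ * ν₀ * μ₀)) →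
      β = μ₀ / (1 - k₀ * ν₀) →
      lams = k₀ → lamu = ν₀ / (1 - α * μ₀) →
      α < 1 ∧ β < 1 ∧
      -- the graph of H = (f, g) satisfies the (A)(α, λ_u)(B)(β, λ_s) condition
      (∀ (x₁ x₁' : X₁) (y₁ y₁' : Y₁),
        dist x₁ x₁' ≤ α * dist y₁ y₁' →
          dist (f x₁ y₁) (f x₁' y₁') ≤ α * dist (g x₁ y₁) (g x₁' y₁') ∧
            dist y₁ y₁' ≤ lamu * dist (g x₁ y₁) (g x₁' y₁')) ∧
      (∀ (x₁ x₁' : X₁) (y₁ y₁' : Y₁),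
        dist (g x₁ y₁) (g x₁' y₁') ≤ β * dist (f x₁ y₁) (f x₁' y₁') →
          dist y₁ y₁' ≤ β * dist x₁ x₁' ∧
            dist (f x₁ y₁) (f x₁' y₁') ≤ lams * dist x₁ x₁') ∧
      lams * lamu < 1 ∧
      (ν₀ + μ₀ < 1 → lamu < 1) ∧ (k₀ < 1 → lams < 1) :=
  chaperon_maps_satisfy_AB_general f g ginv hgleft k₀ ν₀ μ₀ hk₀ hν₀ hμ₀ hf hginvLip hginvx hsum
end

section
/- Equivalence of the nonlinear and linearized (A)-conditions for C¹ generating maps. Let X₁, Y₁, X₂, Y₂ be Banach spaces, let F : X₁ × Y₂ → X₂ and G : X₁ × Y₂ → Y₁ be continuously Fréchet differentiable, and let α, α′, λ_u, β ≥ 0 with α·β < 1. Then the following are equivalent. (a) The correspondence H ∼ (F,G) satisfies the (A)(α;α′,λ_u) condition, and Lip G(·,y) ≤ β for every y ∈ Y₂. (b) For every (x₁,y₂) ∈ X₁ × Y₂: for all (ξ,η′) ∈ X₁ × Y₂, writing η = DG(x₁,y₂)(ξ,η′) and ξ′ = DF(x₁,y₂)(ξ,η′), the inequality ‖ξ‖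 ≤ α·‖η‖ implies both ‖ξ′‖ ≤ α′·‖η′‖ and ‖η‖ ≤ λ_u·‖η′‖; and ‖D₁G(x₁,y₂)‖ ≤ β. -/
/-!
(a) ⇒ (b). Applying the secant condition to `p` and `p + t • (ξ, η)` and letting `t → 0⁺` gives
the linearized condition whenever `ξ = 0` or `(ξ, η)` lies strictly inside the linearized cone
`‖ξ‖ ≤ α ‖DG (ξ, η)‖`. Since `‖D₁G‖ ≤ β` and `αβ < 1`, replacing `ξ` by `s • ξ` with `s < 1`
pushes a vector of the closed cone strictly inside it, and `s → 1` concludes.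

(b) ⇒ (a). Write `ξ = p₁ - q₁`, `η = p₂ - q₂` and leave `q` by a chain of `n` steps
`(d • ξ, η / n)`, where the horizontal advance `d ≥ 0` is the largest one keeping the step in the
linearized cone at the current point, capped so that the chain ends at some
`w = (q₁ + a • ξ, p₂)` with `a ≤ 1`. Uniform differentiability on the box spanned by `p` and `q`
turns the linearized bounds along the steps into `‖F w - F q‖ ≤ α' ‖η‖ + ε` and
`‖G w - G q‖ ≤ λ_u ‖η‖ + ε`. If `a < 1`, every step lies on the boundary of the cone, so
`α ‖G w - G q‖ ≤ a ‖ξ‖ + αε`; together with `‖ξ‖ ≤ α ‖G p - G q‖` and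
`‖G p - G w‖ ≤ β (1 - a) ‖ξ‖` this gives `(1 - αβ) (1 - a) ‖ξ‖ ≤ αε`, so `w` is `O(ε)`-close
to `p`.
-/

open Filter Set Topology ContinuousLinearMap

section LinearCone

variable {E Y V W : Type*}
  [NormedAddCommGroup E] [NormedSpace ℝ E] [NormedAddCommGroup Y] [NormedSpace ℝ Y]
  [NormedAddCommGroup V] [NormedSpace ℝ V] [NormedAddCommGroup W] [NormedSpace ℝ W]

/-- The (A)(α; α′, λ_u) condition for the linear correspondence `∼ (A, B)`. -/
def LinearACondition (α α' lamu : ℝ) (A : E × Y →L[ℝ] V) (B : E × Y →L[ℝ] W) : Prop :=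
  ∀ (ξ : E) (η : Y), ‖ξ‖ ≤ α * ‖B (ξ, η)‖ → ‖A (ξ, η)‖ ≤ α' * ‖η‖ ∧ ‖B (ξ, η)‖ ≤ lamu * ‖η‖

/-- For `s ≥ 0`, `(s • ξ, η)` lies in the cone `‖ξ‖ ≤ α * ‖B (ξ, η)‖` iff this is nonnegative. -/
def coneMargin (α : ℝ) (B : E × Y →L[ℝ] W) (ξ : E) (η : Y) (s : ℝ) : ℝ :=
  α * ‖B (s • ξ, η)‖ - s * ‖ξ‖

variable {α β : ℝ} {B : E × Y →L[ℝ] W} {ξ : E} {η : Y}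

theorem continuous_coneMargin : Continuous (coneMargin α B ξ η) := by
  unfold coneMargin
  fun_prop

theorem norm_apply_inl_le (hB : ‖B.comp (inl ℝ E Y)‖ ≤ β) (ξ : E) :
    ‖B (ξ, 0)‖ ≤ β * ‖ξ‖ :=
  (B.comp (inl ℝ E Y)).le_of_opNorm_le hB ξ

theorem coneMargin_add_le (hB : ‖B.comp (inl ℝ E Y)‖ ≤ β) (hα : 0 ≤ α) {s s' : ℝ}
    (hss' : s ≤ s') :
    coneMargin α B ξ η s' + (1 - α * β) * ((s' - s) * ‖ξ‖) ≤ coneMargin α B ξ η s := by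
  have hsplit : B (s' • ξ, η) = B (s • ξ, η) + (s' - s) • B (ξ, 0) := by
    rw [← map_smul, ← map_add, Prod.smul_mk, smul_zero, Prod.mk_add_mk, add_zero, ← add_smul,
      add_sub_cancel]
  have hnorm : ‖B (s' • ξ, η)‖ ≤ ‖B (s • ξ, η)‖ + (s' - s) * (β * ‖ξ‖) := by
    rw [hsplit]
    refine (norm_add_le _ _).trans ?_
    rw [norm_smul, Real.norm_of_nonneg (sub_nonneg.2 hss')]
    gcongr
    exact norm_apply_inl_le hB ξ
  unfold coneMargin
  nlinarith [mul_le_mul_of_nonneg_left hnorm hα]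

theorem exists_coneMargin_eq_zero (hB : ‖B.comp (inl ℝ E Y)‖ ≤ β) (hα : 0 ≤ α)
    (hαβ : α * β < 1) (hξ : ξ ≠ 0) :
    ∃ r, 0 ≤ r ∧ r * ‖ξ‖ * (1 - α * β) ≤ α * ‖B (0, η)‖ ∧ coneMargin α B ξ η r = 0 := by
  have hξ' : 0 < ‖ξ‖ := norm_pos_iff.2 hξ
  have h1αβ : 0 < 1 - α * β := sub_pos.2 hαβ
  set S := α * ‖B (0, η)‖ / ((1 - α * β) * ‖ξ‖)
  have hS : S * ‖ξ‖ * (1 - α * β) = α * ‖B (0, η)‖ := by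
    simp only [S]
    field_simp
  have hS0 : 0 ≤ S := by positivity
  have h0 : coneMargin α B ξ η 0 = α * ‖B (0, η)‖ := by simp [coneMargin]
  have hle := coneMargin_add_le (ξ := ξ) (η := η) hB hα hS0
  have hmem : (0 : ℝ) ∈ Icc (coneMargin α B ξ η S) (coneMargin α B ξ η 0) := by
    rw [h0] at hle ⊢
    constructor
    · nlinarith
    · positivity
  obtain ⟨r, ⟨hr0, hrS⟩, hr⟩ :=
    intermediate_value_Icc' hS0 continuous_coneMargin.continuousOn hmem
  refine ⟨r, hr0, ?_, hr⟩
  calc r * ‖ξ‖ * (1 - α * β) ≤ S * ‖ξ‖ * (1 - α * β) := by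
        gcongr
    _ = α * ‖B (0, η)‖ := hS

theorem LinearACondition.exists_step {α' lamu : ℝ} {A : E × Y →L[ℝ] V}
    (h : LinearACondition α α' lamu A B) (hB : ‖B.comp (inl ℝ E Y)‖ ≤ β) (hα : 0 ≤ α)
    (hαβ : α * β < 1) (ξ : E) (η : Y) :
    ∃ r, 0 ≤ r ∧ (∀ d ∈ Icc 0 r, ‖A (d • ξ, η)‖ ≤ α' * ‖η‖ ∧ ‖B (d • ξ, η)‖ ≤ lamu * ‖η‖ ∧
      d * ‖ξ‖ * (1 - α * β) ≤ α * (lamu * ‖η‖)) ∧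
      (ξ ≠ 0 → α * ‖B (r • ξ, η)‖ = r * ‖ξ‖) := by
  obtain ⟨r, hr0, hrB, hr, htight⟩ : ∃ r, 0 ≤ r ∧ r * ‖ξ‖ * (1 - α * β) ≤ α * ‖B (0, η)‖ ∧
      0 ≤ coneMargin α B ξ η r ∧ (ξ ≠ 0 → coneMargin α B ξ η r = 0) := by
    rcases eq_or_ne ξ 0 with rfl | hξ
    · refine ⟨0, le_rfl, ?_, ?_, fun h ↦ absurd rfl h⟩ <;> simp [coneMargin] <;> positivity
    · obtain ⟨r, hr0, hrB, hr⟩ := exists_coneMargin_eq_zero (η := η) hB hα hαβ hξ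
      exact ⟨r, hr0, hrB, hr.ge, fun _ ↦ hr⟩
  refine ⟨r, hr0, fun d ⟨hd0, hdr⟩ ↦ ?_, fun hξ ↦ ?_⟩
  · have hcone : ‖d • ξ‖ ≤ α * ‖B (d • ξ, η)‖ := by
      have hmargin := coneMargin_add_le (ξ := ξ) (η := η) hB hα hdr
      have : 0 ≤ (1 - α * β) * ((r - d) * ‖ξ‖) :=
        mul_nonneg (sub_nonneg.2 hαβ.le) (mul_nonneg (sub_nonneg.2 hdr) (norm_nonneg ξ))
      rw [norm_smul, Real.norm_of_nonneg hd0]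
      unfold coneMargin at hmargin hr
      linarith
    have hvertical := (h 0 η (by simp only [norm_zero]; positivity)).2
    refine ⟨(h _ _ hcone).1, (h _ _ hcone).2, ?_⟩
    calc d * ‖ξ‖ * (1 - α * β) ≤ r * ‖ξ‖ * (1 - α * β) := by
          have := sub_pos.2 hαβ
          gcongr
      _ ≤ α * (lamu * ‖η‖) := hrB.trans (by gcongr)
  · have := htight hξ
    unfold coneMargin at this
    linarith

end LinearCone

theorem le_of_forall_pos_le_add_mul {x y C : ℝ} (h : ∀ ε > 0, x ≤ y + ε * C) : x ≤ y := by
  have hlim : Tendsto (fun ε : ℝ ↦ y + ε * C) (𝓝[>] 0) (𝓝 y) := by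
    have : Tendsto (fun ε : ℝ ↦ y + ε * C) (𝓝 0) (𝓝 (y + 0 * C)) :=
      (continuous_const.add (continuous_id.mul continuous_const)).tendsto 0
    simpa using this.mono_left nhdsWithin_le_nhds
  exact ge_of_tendsto hlim (eventually_nhdsWithin_of_forall h)

section Slope

variable {E V : Type*} [NormedAddCommGroup E] [NormedSpace ℝ E] [NormedAddCommGroup V]
  [NormedSpace ℝ V] {f : E → V} {f' : E →L[ℝ] V} {x v : E}

theorem HasFDerivAt.norm_apply_le_of_eventually {c : ℝ} (hf : HasFDerivAt f f' x)
    (h : ∀ᶠ t in 𝓝[>] (0 : ℝ), ‖f (x + t • v) - f x‖ ≤ t * c) : ‖f' v‖ ≤ c := by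
  refine le_of_tendsto (hf.hasLineDerivAt v).tendsto_slope_zero_right.norm ?_
  filter_upwards [h, self_mem_nhdsWithin] with t ht (ht0 : 0 < t)
  rw [norm_smul, norm_inv, Real.norm_of_nonneg ht0.le, inv_mul_le_iff₀ ht0]
  exact ht

theorem HasFDerivAt.eventually_le_mul_norm_sub {a c : ℝ} (hf : HasFDerivAt f f' x)
    (h : c < a * ‖f' v‖) : ∀ᶠ t in 𝓝[>] (0 : ℝ), t * c ≤ a * ‖f (x + t • v) - f x‖ := by
  have hlim := ((hf.hasLineDerivAt v).tendsto_slope_zero_right.norm.const_mul a).eventually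
    (lt_mem_nhds h)
  filter_upwards [hlim, self_mem_nhdsWithin] with t ht (ht0 : 0 < t)
  rw [norm_smul, norm_inv, Real.norm_of_nonneg ht0.le] at ht
  calc t * c ≤ t * (a * (t⁻¹ * ‖f (x + t • v) - f x‖)) := by gcongr
    _ = a * ‖f (x + t • v) - f x‖ := by field_simp

end Slope

section Chain

variable {E V : Type*} [NormedAddCommGroup E] [NormedSpace ℝ E] [NormedAddCommGroup V]
  [NormedSpace ℝ V] {f : E → V} {K : Set E}

theorem isCompact_segment (x y : E) : IsCompact (segment ℝ x y) := by
  rw [segment_eq_image']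
  exact isCompact_Icc.image (by fun_prop)

theorem ContDiff.exists_forall_norm_sub_sub_fderiv_le (hf : ContDiff ℝ 1 f) (hK : IsCompact K)
    (hKc : Convex ℝ K) {ε : ℝ} (hε : 0 < ε) :
    ∃ δ > 0, ∀ w ∈ K, ∀ w' ∈ K, ‖w - w'‖ ≤ δ →
      ‖f w - f w' - fderiv ℝ f w' (w - w')‖ ≤ ε * ‖w - w'‖ := by
  obtain ⟨δ, hδ, hUC⟩ := Metric.uniformContinuousOn_iff.mp
    (hK.uniformContinuousOn_of_continuous (hf.continuous_fderiv one_ne_zero).continuousOn) ε hε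
  refine ⟨δ / 2, half_pos hδ, fun w hw w' hw' hww' ↦ ?_⟩
  refine (convex_segment w' w).norm_image_sub_le_of_norm_fderiv_le'
    (fun u _ ↦ hf.differentiable one_ne_zero u) (fun u hu ↦ ?_)
    (left_mem_segment ℝ w' w) (right_mem_segment ℝ w' w)
  rw [← dist_eq_norm]
  refine (hUC u (hKc.segment_subset hw' hw hu) w' hw' ?_).le
  rw [dist_eq_norm]
  linarith [norm_sub_le_of_mem_segment hu]

theorem norm_sub_le_sum_of_chain {ε δ : ℝ} (hε : 0 ≤ ε)
    (hf : ∀ w ∈ K, ∀ w' ∈ K, ‖w - w'‖ ≤ δ → ‖f w - f w' - fderiv ℝ f w' (w - w')‖ ≤ ε * ‖w - w'‖)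
    {z : ℕ → E} {n : ℕ} (hz : ∀ k ≤ n, z k ∈ K) (hstep : ∀ k < n, ‖z (k + 1) - z k‖ ≤ δ)
    {b : ℕ → ℝ} (hb : ∀ k < n, ‖fderiv ℝ f (z k) (z (k + 1) - z k)‖ ≤ b k) :
    ‖f (z n) - f (z 0)‖ ≤ ∑ k ∈ Finset.range n, b k + n * (ε * δ) := by
  rw [← dist_eq_norm, dist_comm]
  have hsum := dist_le_range_sum_of_dist_le (f := f ∘ z) (d := fun k ↦ b k + ε * δ) n
    fun {k} hk ↦ by
      rw [Function.comp_apply, Function.comp_apply, dist_comm, dist_eq_norm]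
      have hlin := hf _ (hz _ hk) _ (hz _ hk.le) (hstep k hk)
      calc ‖f (z (k + 1)) - f (z k)‖
          ≤ ‖f (z (k + 1)) - f (z k) - fderiv ℝ f (z k) (z (k + 1) - z k)‖ +
            ‖fderiv ℝ f (z k) (z (k + 1) - z k)‖ := norm_le_norm_sub_add _ _
        _ ≤ ε * δ + b k := add_le_add (hlin.trans (by gcongr; exact hstep k hk)) (hb k hk)
        _ = b k + ε * δ := add_comm _ _
  simpa [Finset.sum_add_distrib] using hsum

def cappedSum (ρ : ℕ → ℝ → ℝ) : ℕ → ℝ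
  | 0 => 0
  | k + 1 => min 1 (cappedSum ρ k + ρ k (cappedSum ρ k))

variable {ρ : ℕ → ℝ → ℝ}

theorem cappedSum_mem_Icc (hρ : ∀ k a, 0 ≤ ρ k a) : ∀ k, cappedSum ρ k ∈ Icc 0 1
  | 0 => ⟨le_rfl, zero_le_one⟩
  | k + 1 => ⟨le_min zero_le_one (add_nonneg (cappedSum_mem_Icc hρ k).1 (hρ _ _)),
      min_le_left _ _⟩

theorem cappedSum_monotone (hρ : ∀ k a, 0 ≤ ρ k a) : Monotone (cappedSum ρ) :=
  monotone_nat_of_le_succ fun k ↦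
    le_min (cappedSum_mem_Icc hρ k).2 (le_add_of_nonneg_right (hρ _ _))

theorem cappedSum_succ_sub_le (k : ℕ) :
    cappedSum ρ (k + 1) - cappedSum ρ k ≤ ρ k (cappedSum ρ k) :=
  sub_le_iff_le_add'.2 (min_le_right _ _)

theorem cappedSum_succ_sub_of_lt_one {k : ℕ} (h : cappedSum ρ (k + 1) < 1) :
    cappedSum ρ (k + 1) - cappedSum ρ k = ρ k (cappedSum ρ k) := by
  have hlt : cappedSum ρ k + ρ k (cappedSum ρ k) < 1 := by simpa [cappedSum] using h
  simp [cappedSum, min_eq_right hlt.le]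

end Chain

section Correspondence

variable {E Y V W : Type*}
  [NormedAddCommGroup E] [NormedSpace ℝ E] [NormedAddCommGroup Y] [NormedSpace ℝ Y]
  [NormedAddCommGroup V] [NormedSpace ℝ V] [NormedAddCommGroup W] [NormedSpace ℝ W]
  {F : E × Y → V} {G : E × Y → W} {α α' lamu β : ℝ}

theorem DifferentiableAt.hasFDerivAt_comp_inl {x : E} {y : Y}
    (hG : DifferentiableAt ℝ G (x, y)) :
    HasFDerivAt (fun x' ↦ G (x', y)) ((fderiv ℝ G (x, y)).comp (inl ℝ E Y)) x :=
  hG.hasFDerivAt.comp x (hasFDerivAt_prodMk_left x y)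

theorem norm_fderiv_comp_inl_le_of_lipschitz {p : E × Y} (hG : DifferentiableAt ℝ G p)
    (hβ : 0 ≤ β) (hLip : ∀ x, ‖G (x, p.2) - G (p.1, p.2)‖ ≤ β * ‖x - p.1‖) :
    ‖(fderiv ℝ G p).comp (inl ℝ E Y)‖ ≤ β :=
  DifferentiableAt.hasFDerivAt_comp_inl hG |>.le_of_lip' hβ (.of_forall hLip)

theorem norm_sub_le_of_norm_fderiv_comp_inl_le (hG : Differentiable ℝ G)
    (hβ : ∀ z, ‖(fderiv ℝ G z).comp (inl ℝ E Y)‖ ≤ β) (y : Y) (x x' : E) :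
    ‖G (x, y) - G (x', y)‖ ≤ β * ‖x - x'‖ :=
  convex_univ.norm_image_sub_le_of_norm_hasFDerivWithin_le
    (fun u _ ↦ (hG (u, y)).hasFDerivAt_comp_inl.hasFDerivWithinAt) (fun u _ ↦ hβ (u, y))
    (mem_univ x') (mem_univ x)

theorem norm_fderiv_apply_le_of_eventually_secant {p : E × Y} (hF : DifferentiableAt ℝ F p)
    (hG : DifferentiableAt ℝ G p)
    (hA : ∀ q, ‖q.1 - p.1‖ ≤ α * ‖G q - G p‖ →
      ‖F q - F p‖ ≤ α' * ‖q.2 - p.2‖ ∧ ‖G q - G p‖ ≤ lamu * ‖q.2 - p.2‖)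
    {ξ : E} {η : Y} (h : ∀ᶠ t in 𝓝[>] (0 : ℝ), t * ‖ξ‖ ≤ α * ‖G (p + t • (ξ, η)) - G p‖) :
    ‖fderiv ℝ F p (ξ, η)‖ ≤ α' * ‖η‖ ∧ ‖fderiv ℝ G p (ξ, η)‖ ≤ lamu * ‖η‖ := by
  have hsecant : ∀ᶠ t in 𝓝[>] (0 : ℝ), ‖F (p + t • (ξ, η)) - F p‖ ≤ t * (α' * ‖η‖) ∧
      ‖G (p + t • (ξ, η)) - G p‖ ≤ t * (lamu * ‖η‖) := by
    filter_upwards [h, self_mem_nhdsWithin] with t ht (ht0 : 0 < t)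
    have hq := hA (p + t • (ξ, η)) (by
      rwa [Prod.fst_add, add_sub_cancel_left, Prod.smul_fst, norm_smul,
        Real.norm_of_nonneg ht0.le])
    rw [Prod.snd_add, add_sub_cancel_left, Prod.smul_snd, norm_smul,
      Real.norm_of_nonneg ht0.le] at hq
    constructor <;> linarith [hq.1, hq.2]
  exact ⟨hF.hasFDerivAt.norm_apply_le_of_eventually (hsecant.mono fun _ h ↦ h.1),
    hG.hasFDerivAt.norm_apply_le_of_eventually (hsecant.mono fun _ h ↦ h.2)⟩

theorem linearACondition_fderiv_of_secant {p : E × Y} (hF : DifferentiableAt ℝ F p)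
    (hG : DifferentiableAt ℝ G p) (hα : 0 ≤ α) (hαβ : α * β < 1)
    (hβ : ‖(fderiv ℝ G p).comp (inl ℝ E Y)‖ ≤ β)
    (hA : ∀ q, ‖q.1 - p.1‖ ≤ α * ‖G q - G p‖ →
      ‖F q - F p‖ ≤ α' * ‖q.2 - p.2‖ ∧ ‖G q - G p‖ ≤ lamu * ‖q.2 - p.2‖) :
    LinearACondition α α' lamu (fderiv ℝ F p) (fderiv ℝ G p) := by
  intro ξ η hξη
  have below_one : ∀ s ∈ Ico (0 : ℝ) 1, ‖fderiv ℝ F p (s • ξ, η)‖ ≤ α' * ‖η‖ ∧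
      ‖fderiv ℝ G p (s • ξ, η)‖ ≤ lamu * ‖η‖ := by
    rintro s ⟨hs0, hs1⟩
    apply norm_fderiv_apply_le_of_eventually_secant hF hG hA
    rcases eq_or_ne ξ 0 with rfl | hξ
    · filter_upwards with t
      simp only [smul_zero, norm_zero, mul_zero]
      positivity
    have hmargin := coneMargin_add_le (ξ := ξ) (η := η) hβ hα hs1.le
    have hinside : s * ‖ξ‖ < α * ‖fderiv ℝ G p (s • ξ, η)‖ := by
      have : 0 < (1 - α * β) * ((1 - s) * ‖ξ‖) := by
        have := norm_pos_iff.2 hξ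
        have := sub_pos.2 hαβ
        have := sub_pos.2 hs1
        positivity
      simp only [coneMargin, one_smul, one_mul] at hmargin
      linarith
    filter_upwards [hG.hasFDerivAt.eventually_le_mul_norm_sub hinside] with t ht
    rw [norm_smul, Real.norm_of_nonneg hs0]
    exact ht
  have hone : (1 : ℝ) ∈ closure (Ico 0 1) := by
    rw [closure_Ico zero_ne_one]
    exact right_mem_Icc.2 zero_le_one
  have hFcont : ContinuousWithinAt (fun s : ℝ ↦ ‖fderiv ℝ F p (s • ξ, η)‖) (Ico 0 1) 1 := by
    fun_prop
  have hGcont : ContinuousWithinAt (fun s : ℝ ↦ ‖fderiv ℝ G p (s • ξ, η)‖) (Ico 0 1) 1 := by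
    fun_prop
  simpa using And.intro
    (hFcont.closure_le hone continuousWithinAt_const fun s hs ↦ (below_one s hs).1)
    (hGcont.closure_le hone continuousWithinAt_const fun s hs ↦ (below_one s hs).2)

def chainPoint (q : E × Y) (ξ : E) (v : Y) (a : ℕ → ℝ) (k : ℕ) : E × Y :=
  (q.1 + a k • ξ, q.2 + (k : ℝ) • v)

theorem chainPoint_succ_sub (q : E × Y) (ξ : E) (v : Y) (a : ℕ → ℝ) (k : ℕ) :
    chainPoint q ξ v a (k + 1) - chainPoint q ξ v a k = ((a (k + 1) - a k) • ξ, v) := by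
  simp only [chainPoint, Prod.mk_sub_mk, add_sub_add_left_eq_sub, ← sub_smul, Nat.cast_succ,
    add_sub_cancel_left, one_smul]

theorem chainPoint_mem_segment_prod {p q : E × Y} {a : ℕ → ℝ} {n k : ℕ} (ha : a k ∈ Icc 0 1)
    (hkn : k ≤ n) :
    chainPoint q (p.1 - q.1) ((n : ℝ)⁻¹ • (p.2 - q.2)) a k ∈
      segment ℝ q.1 p.1 ×ˢ segment ℝ q.2 p.2 := by
  rw [segment_eq_image', segment_eq_image']
  refine ⟨⟨a k, ha, rfl⟩, k / n, ⟨by positivity, div_le_one_of_le₀ (by exact_mod_cast hkn)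
    n.cast_nonneg⟩, ?_⟩
  simp only [chainPoint, smul_smul, div_eq_mul_inv]

theorem chainPoint_last {p q : E × Y} {a : ℕ → ℝ} {n : ℕ} (hn : n ≠ 0) :
    chainPoint q (p.1 - q.1) ((n : ℝ)⁻¹ • (p.2 - q.2)) a n = (q.1 + a n • (p.1 - q.1), p.2) := by
  simp [chainPoint, smul_smul, hn]

theorem exists_coneChain
    (hb : ∀ z, LinearACondition α α' lamu (fderiv ℝ F z) (fderiv ℝ G z) ∧
      ‖(fderiv ℝ G z).comp (inl ℝ E Y)‖ ≤ β)
    (hα : 0 ≤ α) (hαβ : α * β < 1) (q : E × Y) (ξ : E) (v : Y) :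
    ∃ a : ℕ → ℝ, a 0 = 0 ∧ (∀ k, a k ∈ Icc 0 1) ∧ Monotone a ∧ ∀ k,
      ‖fderiv ℝ F (chainPoint q ξ v a k) ((a (k + 1) - a k) • ξ, v)‖ ≤ α' * ‖v‖ ∧
      ‖fderiv ℝ G (chainPoint q ξ v a k) ((a (k + 1) - a k) • ξ, v)‖ ≤ lamu * ‖v‖ ∧
      (a (k + 1) - a k) * ‖ξ‖ * (1 - α * β) ≤ α * (lamu * ‖v‖) ∧
      (ξ ≠ 0 → a (k + 1) < 1 → α * ‖fderiv ℝ G (chainPoint q ξ v a k) ((a (k + 1) - a k) • ξ, v)‖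
        = (a (k + 1) - a k) * ‖ξ‖) := by
  choose r hr0 hstep htight using fun z ↦ (hb z).1.exists_step (hb z).2 hα hαβ ξ v
  have hmono := cappedSum_monotone fun k t ↦ hr0 (q.1 + t • ξ, q.2 + (k : ℝ) • v)
  refine ⟨_, rfl, cappedSum_mem_Icc fun _ _ ↦ hr0 _, hmono, fun k ↦ ?_⟩
  obtain ⟨hFk, hGk, hsize⟩ := hstep _ _ ⟨sub_nonneg.2 (hmono k.le_succ), cappedSum_succ_sub_le k⟩
  refine ⟨hFk, hGk, hsize, fun hξ hk ↦ ?_⟩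
  rw [cappedSum_succ_sub_of_lt_one hk]
  exact htight _ hξ

theorem exists_chain_endpoint_of_linearization
    (hb : ∀ z, LinearACondition α α' lamu (fderiv ℝ F z) (fderiv ℝ G z) ∧
      ‖(fderiv ℝ G z).comp (inl ℝ E Y)‖ ≤ β)
    (hα : 0 ≤ α) (hlamu : 0 ≤ lamu) (hαβ : α * β < 1) {p q : E × Y} {K : Set (E × Y)}
    (hK : segment ℝ q.1 p.1 ×ˢ segment ℝ q.2 p.2 ⊆ K) {L : ℝ}
    (hL : α * lamu * ‖p.2 - q.2‖ / (1 - α * β) + ‖p.2 - q.2‖ ≤ L) {n : ℕ} (hn : n ≠ 0)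
    {ε : ℝ} (hε : 0 ≤ ε)
    (hFlin : ∀ w ∈ K, ∀ w' ∈ K, ‖w - w'‖ ≤ L / n →
      ‖F w - F w' - fderiv ℝ F w' (w - w')‖ ≤ ε * ‖w - w'‖)
    (hGlin : ∀ w ∈ K, ∀ w' ∈ K, ‖w - w'‖ ≤ L / n →
      ‖G w - G w' - fderiv ℝ G w' (w - w')‖ ≤ ε * ‖w - w'‖) :
    ∃ a ∈ Icc (0 : ℝ) 1,
      ‖F (q.1 + a • (p.1 - q.1), p.2) - F q‖ ≤ α' * ‖p.2 - q.2‖ + ε * L ∧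
      ‖G (q.1 + a • (p.1 - q.1), p.2) - G q‖ ≤ lamu * ‖p.2 - q.2‖ + ε * L ∧
      (p.1 ≠ q.1 → a < 1 →
        α * ‖G (q.1 + a • (p.1 - q.1), p.2) - G q‖ ≤ a * ‖p.1 - q.1‖ + α * (ε * L)) := by
  set ξ := p.1 - q.1
  set η := p.2 - q.2
  have hn0 : (0 : ℝ) < n := by positivity
  set v := (n : ℝ)⁻¹ • η
  have hnv : (n : ℝ) * ‖v‖ = ‖η‖ := by
    rw [norm_smul, norm_inv, Real.norm_of_nonneg hn0.le, mul_inv_cancel_left₀ hn0.ne']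
  obtain ⟨a, ha0, ha, hmono, hstep⟩ := exists_coneChain hb hα hαβ q ξ v
  set c := chainPoint q ξ v a
  have hc0 : c 0 = q := by simp [c, chainPoint, ha0]
  have hcK : ∀ k ≤ n, c k ∈ K := fun k hk ↦ hK (chainPoint_mem_segment_prod (ha k) hk)
  have hΔ : ∀ k, c (k + 1) - c k = ((a (k + 1) - a k) • ξ, v) := chainPoint_succ_sub q ξ v a
  have hsize : ∀ k, ‖c (k + 1) - c k‖ ≤ L / n := by
    intro k
    have h1αβ := sub_pos.2 hαβ
    have hfirst : 0 ≤ α * lamu * ‖η‖ / (1 - α * β) := by positivity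
    rw [hΔ, Prod.norm_mk, norm_smul, Real.norm_of_nonneg (sub_nonneg.2
      (hmono k.le_succ)), le_div_iff₀ hn0, max_mul_of_nonneg _ _ hn0.le, mul_comm ‖v‖, hnv]
    refine max_le ?_ (by linarith)
    refine le_trans ?_ (show α * lamu * ‖η‖ / (1 - α * β) ≤ L by linarith [norm_nonneg η])
    rw [le_div_iff₀ h1αβ]
    have := mul_le_mul_of_nonneg_right (hstep k).2.2.1 hn0.le
    rw [← hnv]
    linarith
  have hnL : (n : ℝ) * (ε * (L / n)) = ε * L := by field_simp
  have hchainF := norm_sub_le_sum_of_chain hε hFlin hcK (fun k _ ↦ hsize k)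
    (b := fun _ ↦ α' * ‖v‖) fun k _ ↦ by rw [hΔ]; exact (hstep k).1
  have hchainG := norm_sub_le_sum_of_chain hε hGlin hcK (fun k _ ↦ hsize k) fun k _ ↦ le_rfl
  have hcn : c n = (q.1 + a n • ξ, p.2) := chainPoint_last hn
  rw [hc0, hcn, hnL] at hchainF hchainG
  simp only [hΔ] at hchainG
  refine ⟨a n, ha n, ?_, ?_, fun hξ han ↦ ?_⟩
  · rwa [Finset.sum_const, Finset.card_range, nsmul_eq_mul, mul_left_comm, hnv] at hchainF
  · have := Finset.sum_le_sum fun k (_ : k ∈ Finset.range n) ↦ (hstep k).2.1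
    rw [Finset.sum_const, Finset.card_range, nsmul_eq_mul, mul_left_comm, hnv] at this
    linarith
  · -- below the cap every step ends on the boundary of the cone
    have hsum : α * ∑ k ∈ Finset.range n, ‖fderiv ℝ G (c k) ((a (k + 1) - a k) • ξ, v)‖ =
        a n * ‖ξ‖ := by
      rw [Finset.mul_sum, Finset.sum_congr rfl fun k hk ↦ (hstep k).2.2.2 (sub_ne_zero.2 hξ)
        ((hmono (Finset.mem_range.1 hk)).trans_lt han), ← Finset.sum_mul,
        Finset.sum_range_sub a n, ha0, sub_zero]
    nlinarith [mul_le_mul_of_nonneg_left hchainG hα]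

theorem exists_chain_endpoint (hF : ContDiff ℝ 1 F) (hG : ContDiff ℝ 1 G)
    (hb : ∀ z, LinearACondition α α' lamu (fderiv ℝ F z) (fderiv ℝ G z) ∧
      ‖(fderiv ℝ G z).comp (inl ℝ E Y)‖ ≤ β)
    (hα : 0 ≤ α) (hlamu : 0 ≤ lamu) (hαβ : α * β < 1) (p q : E × Y) {ε : ℝ} (hε : 0 < ε) :
    ∃ a ∈ Icc (0 : ℝ) 1,
      ‖F (q.1 + a • (p.1 - q.1), p.2) - F q‖ ≤ α' * ‖p.2 - q.2‖ + ε ∧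
      ‖G (q.1 + a • (p.1 - q.1), p.2) - G q‖ ≤ lamu * ‖p.2 - q.2‖ + ε ∧
      (p.1 ≠ q.1 → a < 1 →
        α * ‖G (q.1 + a • (p.1 - q.1), p.2) - G q‖ ≤ a * ‖p.1 - q.1‖ + α * ε) := by
  set K := segment ℝ q.1 p.1 ×ˢ segment ℝ q.2 p.2
  have hK : IsCompact K := (isCompact_segment _ _).prod (isCompact_segment _ _)
  have hKc : Convex ℝ K := (convex_segment _ _).prod (convex_segment _ _)
  -- `L / n` bounds the length of every step of a chain with vertical steps `(p.2 - q.2) / n`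
  set L := α * lamu * ‖p.2 - q.2‖ / (1 - α * β) + ‖p.2 - q.2‖
  have hL : 0 ≤ L := by
    have := sub_pos.2 hαβ
    positivity
  set ε₁ := ε / (L + 1)
  have hε₁ : 0 < ε₁ := by positivity
  have hε₁L : ε₁ * L ≤ ε := by
    rw [div_mul_eq_mul_div, div_le_iff₀ (by positivity)]
    nlinarith
  obtain ⟨δF, hδF, hFlin⟩ := hF.exists_forall_norm_sub_sub_fderiv_le hK hKc hε₁
  obtain ⟨δG, hδG, hGlin⟩ := hG.exists_forall_norm_sub_sub_fderiv_le hK hKc hε₁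
  obtain ⟨n, hn⟩ := exists_nat_gt (L / min δF δG)
  have hn0 : (0 : ℝ) < n := lt_of_le_of_lt (by positivity) hn
  have hLn : L / n ≤ min δF δG := by
    rw [div_lt_iff₀ (lt_min hδF hδG)] at hn
    rw [div_le_iff₀ hn0]
    linarith
  obtain ⟨a, ha, hFw, hGw, hαGw⟩ := exists_chain_endpoint_of_linearization hb hα hlamu hαβ
    subset_rfl le_rfl (Nat.cast_ne_zero.1 hn0.ne') hε₁.le
    (fun w hw w' hw' h ↦ hFlin w hw w' hw' (h.trans (hLn.trans (min_le_left _ _))))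
    (fun w hw w' hw' h ↦ hGlin w hw w' hw' (h.trans (hLn.trans (min_le_right _ _))))
  refine ⟨a, ha, by linarith, by linarith, fun hξ han ↦ (hαGw hξ han).trans ?_⟩
  gcongr

theorem exists_norm_sub_le_add_mul (hF : ContDiff ℝ 1 F) (hG : ContDiff ℝ 1 G)
    (hb : ∀ z, LinearACondition α α' lamu (fderiv ℝ F z) (fderiv ℝ G z) ∧
      ‖(fderiv ℝ G z).comp (inl ℝ E Y)‖ ≤ β)
    (hα : 0 ≤ α) (hlamu : 0 ≤ lamu) (hαβ : α * β < 1) {p q : E × Y}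
    (hpq : ‖p.1 - q.1‖ ≤ α * ‖G p - G q‖) :
    ∃ C, ∀ ε > 0, ‖F p - F q‖ ≤ α' * ‖p.2 - q.2‖ + ε * C ∧
      ‖G p - G q‖ ≤ lamu * ‖p.2 - q.2‖ + ε * C := by
  set ξ := p.1 - q.1
  have h1αβ : 0 < 1 - α * β := sub_pos.2 hαβ
  have hβ : 0 ≤ β := (norm_nonneg _).trans (hb q).2
  have hLip := norm_sub_le_of_norm_fderiv_comp_inl_le (hG.differentiable one_ne_zero)
    fun z ↦ (hb z).2
  obtain ⟨M, hM⟩ := hF.contDiffOn.exists_lipschitzOnWith one_ne_zero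
    (convex_segment (q.1, p.2) p) (isCompact_segment _ _)
  refine ⟨1 + (M + β) * (α / (1 - α * β)), fun ε hε ↦ ?_⟩
  obtain ⟨a, ⟨ha0, ha1⟩, hFw, hGw, hαGw⟩ := exists_chain_endpoint hF hG hb hα hlamu hαβ p q hε
  set w : E × Y := (q.1 + a • ξ, p.2)
  have hw : w ∈ segment ℝ (q.1, p.2) p := by
    rw [segment_eq_image']
    exact ⟨a, ⟨ha0, ha1⟩, by ext <;> simp [w, ξ]⟩
  have hpw : p.1 - w.1 = (1 - a) • ξ := by
    simp only [w, ξ, sub_smul, one_smul]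
    abel
  have hpw_norm : ‖p - w‖ = (1 - a) * ‖ξ‖ := by
    rw [Prod.norm_def, Prod.snd_sub, sub_self, norm_zero, Prod.fst_sub, hpw, norm_smul,
      Real.norm_of_nonneg (sub_nonneg.2 ha1)]
    exact max_eq_left (by positivity)
  have hGpw : ‖G p - G w‖ ≤ β * ((1 - a) * ‖ξ‖) := by
    have h := hLip p.2 p.1 w.1
    rwa [hpw, norm_smul, Real.norm_of_nonneg (sub_nonneg.2 ha1)] at h
  have hFpw : ‖F p - F w‖ ≤ M * ((1 - a) * ‖ξ‖) :=
    hpw_norm ▸ hM.norm_sub_le (right_mem_segment _ _ _) hw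
  have hgap : (1 - a) * ‖ξ‖ ≤ ε * (α / (1 - α * β)) := by
    rw [mul_div_assoc', le_div_iff₀ h1αβ]
    rcases eq_or_ne p.1 q.1 with hξ | hξ
    · simp only [ξ, hξ, sub_self, norm_zero, mul_zero, zero_mul]
      positivity
    rcases ha1.eq_or_lt with rfl | han
    · simp only [sub_self, zero_mul]
      positivity
    have htri := norm_sub_le_norm_sub_add_norm_sub (G p) (G w) (G q)
    nlinarith [hαGw hξ han, mul_le_mul_of_nonneg_left htri hα,
      mul_le_mul_of_nonneg_left hGpw hα]
  have hx : 0 ≤ ε * (α / (1 - α * β)) := by positivity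
  constructor
  · linarith [norm_sub_le_norm_sub_add_norm_sub (F p) (F w) (F q),
      mul_le_mul_of_nonneg_left hgap M.coe_nonneg, mul_nonneg hβ hx]
  · linarith [norm_sub_le_norm_sub_add_norm_sub (G p) (G w) (G q),
      mul_le_mul_of_nonneg_left hgap hβ, mul_nonneg M.coe_nonneg hx]

theorem secant_of_linearACondition (hF : ContDiff ℝ 1 F) (hG : ContDiff ℝ 1 G)
    (hb : ∀ z, LinearACondition α α' lamu (fderiv ℝ F z) (fderiv ℝ G z) ∧
      ‖(fderiv ℝ G z).comp (inl ℝ E Y)‖ ≤ β)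
    (hα : 0 ≤ α) (hlamu : 0 ≤ lamu) (hαβ : α * β < 1) (p q : E × Y)
    (hpq : ‖p.1 - q.1‖ ≤ α * ‖G p - G q‖) :
    ‖F p - F q‖ ≤ α' * ‖p.2 - q.2‖ ∧ ‖G p - G q‖ ≤ lamu * ‖p.2 - q.2‖ := by
  obtain ⟨C, hC⟩ := exists_norm_sub_le_add_mul hF hG hb hα hlamu hαβ hpq
  exact ⟨le_of_forall_pos_le_add_mul fun ε hε ↦ (hC ε hε).1,
    le_of_forall_pos_le_add_mul fun ε hε ↦ (hC ε hε).2⟩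

end Correspondence

theorem AB_condition_C1_equivalence_general
    {X₁ Y₁ X₂ Y₂ : Type*}
    [NormedAddCommGroup X₁] [NormedSpace ℝ X₁]
    [NormedAddCommGroup Y₁] [NormedSpace ℝ Y₁]
    [NormedAddCommGroup X₂] [NormedSpace ℝ X₂]
    [NormedAddCommGroup Y₂] [NormedSpace ℝ Y₂]
    (F : X₁ × Y₂ → X₂) (G : X₁ × Y₂ → Y₁)
    (hF : ContDiff ℝ 1 F) (hG : ContDiff ℝ 1 G)
    (α α' lamu β : ℝ)
    (hα : 0 ≤ α) (hlamu : 0 ≤ lamu) (hβ : 0 ≤ β)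
    (hαβ : α * β < 1) :
    -- (a): H satisfies the (A)(α; α′, λ_u) condition and Lip G(·,y) ≤ β for all y
    ((∀ p q : X₁ × Y₂,
        ‖p.1 - q.1‖ ≤ α * ‖G p - G q‖ →
          ‖F p - F q‖ ≤ α' * ‖p.2 - q.2‖ ∧ ‖G p - G q‖ ≤ lamu * ‖p.2 - q.2‖) ∧
      ∀ (y : Y₂) (x x' : X₁), ‖G (x, y) - G (x', y)‖ ≤ β * ‖x - x'‖)
    ↔
    -- (b): the linearized conditions hold at every point
    (∀ p : X₁ × Y₂,
      (∀ (ξ : X₁) (η' : Y₂),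
        ‖ξ‖ ≤ α * ‖fderiv ℝ G p (ξ, η')‖ →
          ‖fderiv ℝ F p (ξ, η')‖ ≤ α' * ‖η'‖ ∧
            ‖fderiv ℝ G p (ξ, η')‖ ≤ lamu * ‖η'‖) ∧
      ‖(fderiv ℝ G p).comp (ContinuousLinearMap.inl ℝ X₁ Y₂)‖ ≤ β) := by
  have hFd := hF.differentiable one_ne_zero
  have hGd := hG.differentiable one_ne_zero
  constructor
  · rintro ⟨hA, hLip⟩ p
    have hβp := norm_fderiv_comp_inl_le_of_lipschitz (hGd p) hβ fun x ↦ hLip p.2 x p.1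
    exact ⟨linearACondition_fderiv_of_secant (hFd p) (hGd p) hα hαβ hβp fun q ↦ hA q p, hβp⟩
  · intro hb
    exact ⟨secant_of_linearACondition hF hG hb hα hlamu hαβ,
      norm_sub_le_of_norm_fderiv_comp_inl_le hGd fun z ↦ (hb z).2⟩

/-- Equivalence of the nonlinear and linearized (A)-conditions for C¹ generating maps. -/
theorem AB_condition_C1_equivalence
    {X₁ Y₁ X₂ Y₂ : Type*}
    [NormedAddCommGroup X₁] [NormedSpace ℝ X₁] [CompleteSpace X₁]
    [NormedAddCommGroup Y₁] [NormedSpace ℝ Y₁] [CompleteSpace Y₁]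
    [NormedAddCommGroup X₂] [NormedSpace ℝ X₂] [CompleteSpace X₂]
    [NormedAddCommGroup Y₂] [NormedSpace ℝ Y₂] [CompleteSpace Y₂]
    (F : X₁ × Y₂ → X₂) (G : X₁ × Y₂ → Y₁)
    (hF : ContDiff ℝ 1 F) (hG : ContDiff ℝ 1 G)
    (α α' lamu β : ℝ)
    (hα : 0 ≤ α) (hα'0 : 0 ≤ α') (hlamu : 0 ≤ lamu) (hβ : 0 ≤ β)
    (hαβ : α * β < 1) :
    -- (a): H satisfies the (A)(α; α′, λ_u) condition and Lip G(·,y) ≤ β for all y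
    ((∀ p q : X₁ × Y₂,
        ‖p.1 - q.1‖ ≤ α * ‖G p - G q‖ →
          ‖F p - F q‖ ≤ α' * ‖p.2 - q.2‖ ∧ ‖G p - G q‖ ≤ lamu * ‖p.2 - q.2‖) ∧
      ∀ (y : Y₂) (x x' : X₁), ‖G (x, y) - G (x', y)‖ ≤ β * ‖x - x'‖)
    ↔
    -- (b): the linearized conditions hold at every point
    (∀ p : X₁ × Y₂,
      (∀ (ξ : X₁) (η' : Y₂),
        ‖ξ‖ ≤ α * ‖fderiv ℝ G p (ξ, η')‖ →
          ‖fderiv ℝ F p (ξ, η')‖ ≤ α' * ‖η'‖ ∧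
            ‖fderiv ℝ G p (ξ, η')‖ ≤ lamu * ‖η'‖) ∧
      ‖(fderiv ℝ G p).comp (ContinuousLinearMap.inl ℝ X₁ Y₂)‖ ≤ β) :=
  AB_condition_C1_equivalence_general F G hF hG α α' lamu β hα hlamu hβ hαβ
end
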